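/- arXiv:math/0611800 — 8 statements merged into one kernel-verified Lean document; each statement's English description precedes it below -/
import Mathlib

section
/- For every angle θ with tan θ irrational and every ε > 0, there exists h > 0 such that the line segment {(x, -x/tan θ) : x ∈ [0,h]}, projected to the torus ℝ²/ℤ², is ε-dense in the torus (every point of the torus is within distance ε of a point of the projected segment). -/
open Complex Set

noncomputable section

/-- Auxiliary: if `M • α = s - n₀` with `0 < s ≤ ε`, then every real `c` is approximated
mod 1 by a nonneg multiple of `α`, with a uniform bound on the multiplier. -/
lemma segment_key_aux (α s ε : ℝ) (M : ℕ) (n₀ : ℤ) (hs : 0 < s) (hsε : s ≤ ε)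
    (hMα : (M : ℝ) * α = s - n₀) (c : ℝ) :
    ∃ k : ℕ, (k : ℝ) ≤ M / s ∧ ∃ n : ℤ, |(k : ℝ) * α - n - c| ≤ ε := by
  set c₁ := Int.fract c with hc₁
  have hc₁0 : 0 ≤ c₁ := Int.fract_nonneg c
  have hc₁1 : c₁ < 1 := Int.fract_lt_one c
  set j : ℕ := ⌊c₁ / s⌋.toNat with hj
  have h0 : (0:ℤ) ≤ ⌊c₁ / s⌋ := Int.floor_nonneg.2 (by positivity)
  have hjz : ((j : ℤ)) = ⌊c₁ / s⌋ := by rw [hj]; exact Int.toNat_of_nonneg h0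
  have hjr : (j : ℝ) = ((⌊c₁ / s⌋ : ℤ) : ℝ) := by exact_mod_cast congrArg (Int.cast : ℤ → ℝ) hjz
  have hjle : (j : ℝ) ≤ c₁ / s := hjr ▸ Int.floor_le _
  have hjgt : c₁ / s < (j : ℝ) + 1 := hjr ▸ Int.lt_floor_add_one _
  have h1 : (j : ℝ) * s ≤ c₁ := (le_div_iff₀ hs).1 hjle
  have h2 : c₁ - (j : ℝ) * s < s := by
    have := (div_lt_iff₀ hs).1 hjgt
    nlinarith
  have hfr : c₁ = c - ⌊c⌋ := (Int.self_sub_floor c).symm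
  refine ⟨j * M, ?_, -(j : ℤ) * n₀ - ⌊c⌋, ?_⟩
  · have hj1 : (j : ℝ) ≤ 1 / s := hjle.trans (by gcongr)
    push_cast
    calc (j : ℝ) * M ≤ (1 / s) * M := by
          apply mul_le_mul_of_nonneg_right hj1 (by positivity)
      _ = M / s := by ring
  · rw [abs_le]
    have hkα : ((j * M : ℕ) : ℝ) * α = (j : ℝ) * s - (j : ℝ) * n₀ := by
      push_cast
      calc (j : ℝ) * M * α = (j : ℝ) * ((M : ℝ) * α) := by ring
        _ = (j : ℝ) * (s - n₀) := by rw [hMα]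
        _ = (j : ℝ) * s - (j : ℝ) * n₀ := by ring
    constructor <;> (push_cast [hkα] at *; nlinarith [h1, h2, hsε])
/-- For irrational `α`, nonneg multiples of `α` are `ε`-dense mod 1, uniformly. -/
lemma segment_key (α : ℝ) (hα : Irrational α) (ε : ℝ) (hε : 0 < ε) :
    ∃ K : ℝ, 0 ≤ K ∧ ∀ c : ℝ, ∃ k : ℕ, (k : ℝ) ≤ K ∧ ∃ n : ℤ, |(k : ℝ) * α - n - c| ≤ ε := by
  set ε₁ := min ε 1 with hε₁
  have hε₁0 : 0 < ε₁ := lt_min hε one_pos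
  -- the subgroup generated by α and 1 is dense
  set S : AddSubgroup ℝ := AddSubgroup.zmultiples α ⊔ AddSubgroup.zmultiples 1 with hS
  have hαS : α ∈ S := AddSubgroup.mem_sup_left (AddSubgroup.mem_zmultiples α)
  have h1S : (1 : ℝ) ∈ S := AddSubgroup.mem_sup_right (AddSubgroup.mem_zmultiples 1)
  have hdense : Dense (S : Set ℝ) := by
    rcases S.dense_or_cyclic with h | ⟨a, ha⟩
    · exact h
    · exfalso
      rw [ha] at hαS h1S
      rw [AddSubgroup.mem_closure_singleton] at hαS h1S
      obtain ⟨q, hq⟩ := hαS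
      obtain ⟨p, hp⟩ := h1S
      rw [zsmul_eq_mul] at hp hq
      have hp0 : p ≠ 0 := by
        rintro rfl; simp at hp
      have ha0 : a = 1 / p := by
        have hpr : (p : ℝ) ≠ 0 := Int.cast_ne_zero.2 hp0
        field_simp
        linarith [hp]
      exact hα ⟨(q : ℚ) / p, by push_cast; rw [← hq, ha0]; field_simp⟩
  -- find a small positive element of S
  obtain ⟨s, hsS, hs0, hsε₁⟩ : ∃ s ∈ S, 0 < s ∧ s < ε₁ := by
    have := hdense.exists_mem_open isOpen_Ioo (⟨ε₁ / 2, by constructor <;> linarith⟩ :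
      (Ioo (0:ℝ) ε₁).Nonempty)
    obtain ⟨x, hxS, hx⟩ := this
    exact ⟨x, hxS, hx.1, hx.2⟩
  rw [hS, AddSubgroup.mem_sup] at hsS
  obtain ⟨y, hy, z, hz, hyz⟩ := hsS
  rw [AddSubgroup.mem_zmultiples_iff] at hy hz
  obtain ⟨m, hm⟩ := hy
  obtain ⟨n₀, hn₀⟩ := hz
  have hsmn : s = (m : ℝ) * α + n₀ := by
    rw [← hyz, ← hm, ← hn₀, zsmul_eq_mul, zsmul_eq_mul]; push_cast; ring
  have hm0 : m ≠ 0 := by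
    rintro rfl
    rw [hsmn] at hs0 hsε₁
    simp at hs0 hsε₁
    have h1 : (1 : ℝ) ≤ (n₀ : ℝ) := by exact_mod_cast Int.cast_pos.1 hs0
    have : ε₁ ≤ 1 := min_le_right _ _
    linarith
  have hsε : s ≤ ε := le_of_lt (hsε₁.trans_le (min_le_left _ _))
  rcases hm0.lt_or_gt with hmneg | hmpos
  · -- m < 0 : apply aux to -α with -c
    set M : ℕ := (-m).toNat with hM
    have hMr : (M : ℝ) = -(m : ℝ) := by
      have : ((M : ℤ)) = -m := by rw [hM]; exact Int.toNat_of_nonneg (by omega)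
      exact_mod_cast congrArg (Int.cast : ℤ → ℝ) this
    have hMα : (M : ℝ) * (-α) = s - n₀ := by
      rw [hsmn, hMr]; ring
    refine ⟨M / s, by positivity, fun c => ?_⟩
    obtain ⟨k, hk, n, hn⟩ := segment_key_aux (-α) s ε M n₀ hs0 hsε hMα (-c)
    refine ⟨k, hk, -n, ?_⟩
    have : (k : ℝ) * α - (-n : ℤ) - c = -((k : ℝ) * (-α) - n - (-c)) := by push_cast; ring
    rw [this, abs_neg]; exact hn
  · -- m > 0
    set M : ℕ := m.toNat with hM
    have hMr : (M : ℝ) = (m : ℝ) := by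
      have : ((M : ℤ)) = m := by rw [hM]; exact Int.toNat_of_nonneg (by omega)
      exact_mod_cast congrArg (Int.cast : ℤ → ℝ) this
    have hMα : (M : ℝ) * α = s - n₀ := by
      rw [hsmn, hMr]; ring
    refine ⟨M / s, by positivity, fun c => ?_⟩
    exact segment_key_aux α s ε M n₀ hs0 hsε hMα c

/-- For irrational `tan θ` and any `ε > 0` there is `h > 0` such that the segment
`{(x, -x / tan θ) : x ∈ [0,h]}` is `ε`-dense modulo `ℤ²`: every point of the plane
(identified with `ℂ`) is within distance `ε` of an integer translate of a segment point. -/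
theorem segment_dense_on_torus (θ : ℝ) (hθ : Irrational (Real.tan θ)) (ε : ℝ) (hε : 0 < ε) :
    ∃ h > 0, ∀ p : ℂ, ∃ t ∈ Icc (0 : ℝ) h, ∃ m n : ℤ,
      ‖p - ((((t : ℝ) + (m : ℝ) : ℝ) : ℂ) +
        ((-t / Real.tan θ + (n : ℝ) : ℝ) : ℂ) * Complex.I)‖ ≤ ε := by
  have htan0 : Real.tan θ ≠ 0 := hθ.ne_zero
  set α : ℝ := -(Real.tan θ)⁻¹ with hα_def
  have hα : Irrational α := (hθ.inv).neg
  obtain ⟨K, hK0, hK⟩ := segment_key α hα ε hε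
  refine ⟨K + 1, by linarith, fun p => ?_⟩
  set x := p.re
  set y := p.im
  set t₀ := Int.fract x with ht₀
  have ht₀0 : 0 ≤ t₀ := Int.fract_nonneg x
  have ht₀1 : t₀ < 1 := Int.fract_lt_one x
  obtain ⟨k, hkK, n, hn⟩ := hK (y - t₀ * α)
  refine ⟨t₀ + k, ⟨by positivity, by linarith⟩, ⌊x⌋ - k, -n, ?_⟩
  set t := t₀ + (k : ℝ) with ht
  set z := p - ((((t : ℝ) + ((⌊x⌋ - (k:ℤ) : ℤ) : ℝ) : ℝ) : ℂ) +
      ((-t / Real.tan θ + ((-n : ℤ) : ℝ) : ℝ) : ℂ) * Complex.I) with hz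
  have hre : z.re = 0 := by
    simp only [hz, Complex.sub_re, Complex.add_re, Complex.ofReal_re, Complex.mul_re,
      Complex.I_re, Complex.I_im, Complex.ofReal_im]
    push_cast
    have hfx : Int.fract x = x - ⌊x⌋ := (Int.self_sub_floor x).symm
    rw [ht, ht₀, hfx]
    ring
  have him : |z.im| ≤ ε := by
    have hzim : z.im = -((k : ℝ) * α - n - (y - t₀ * α)) := by
      simp only [hz, Complex.sub_im, Complex.add_im, Complex.ofReal_im, Complex.mul_im,
        Complex.I_re, Complex.I_im, Complex.ofReal_re]
      push_cast
      rw [ht, hα_def]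
      field_simp
      ring
    rw [hzim, abs_neg]
    exact hn
  calc ‖z‖ = ‖z‖ := rfl
    _ ≤ |z.re| + |z.im| := Complex.norm_le_abs_re_add_abs_im z
    _ ≤ ε := by rw [hre]; simp [him]
end
end

section
/- For any ε > 0 and any nondegenerate closed arc Θ = [γ₀ - θ₀, γ₀ + θ₀] ⊆ S¹ (θ₀ > 0), there exists t₀ > 0 such that the set R_Θ(ℤ² + B_ε(0)) contains {x ∈ ℝ² : |x| ≥ t₀}. Equivalently, for every t ≥ t₀ and every γ, the annulus-arc {(r,φ) in polar coordinates : t < r < t + ε, γ ≤ φ ≤ γ + 2θ₀} contains a point of ℤ². -/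
open Complex Set

noncomputable section

/-- Rotation of the plane (identified with `ℂ`) by angle `θ` about the origin. -/
def rot (θ : ℝ) (x : ℂ) : ℂ := Complex.exp (θ * Complex.I) * x

/-- The integer lattice `ℤ²` inside `ℂ ≅ ℝ²`. -/
def intLattice : Set ℂ := {z | ∃ m n : ℤ, z = (m : ℂ) + (n : ℂ) * Complex.I}

/-- The `ε`-fattening `Λ + B_ε(0)` of a set `Λ ⊆ ℂ`. -/
def fattened (Λ : Set ℂ) (ε : ℝ) : Set ℂ := {x | ∃ l ∈ Λ, ‖x - l‖ < ε}

lemma rot_norm (θ : ℝ) (z : ℂ) : ‖rot θ z‖ = ‖z‖ := by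
  simp [rot, Complex.norm_exp_ofReal_mul_I]

lemma lat_comb {e v : ℂ} (he : e ∈ intLattice) (hv : v ∈ intLattice) (k j : ℤ) :
    (k : ℂ) * e + (j : ℂ) * v ∈ intLattice := by
  obtain ⟨m1, n1, rfl⟩ := he
  obtain ⟨m2, n2, rfl⟩ := hv
  exact ⟨k * m1 + j * m2, k * n1 + j * n2, by push_cast; ring⟩

lemma exists_int_step (d A : ℝ) (h1 : 1/2 ≤ |d|) (h2 : |d| ≤ 1) :
    ∃ k : ℤ, A - 1 ≤ k * d ∧ k * d ≤ A := by
  have hd : d ≠ 0 := by intro h; rw [h] at h1; simp at h1; linarith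
  rcases lt_or_gt_of_ne hd with hneg | hpos
  · refine ⟨⌈A / d⌉, ?_, ?_⟩
    · have h3 := Int.ceil_lt_add_one (A / d)
      have h4 : (⌈A / d⌉ : ℝ) * d ≥ (A / d + 1) * d := by nlinarith
      have habs : |d| = -d := abs_of_neg hneg
      rw [habs] at h2
      have h5 : (A / d + 1) * d = A + d := by field_simp
      linarith
    · have h3 := Int.le_ceil (A / d)
      have h4 : (⌈A / d⌉ : ℝ) * d ≤ (A / d) * d := by nlinarith
      have h5 : (A / d) * d = A := by field_simp
      linarith
  · refine ⟨⌊A / d⌋, ?_, ?_⟩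
    · have h3 := Int.sub_one_lt_floor (A / d)
      have habs : |d| = d := abs_of_pos hpos
      rw [habs] at h2
      have h4 : (A / d - 1) * d ≤ (⌊A / d⌋ : ℝ) * d := by nlinarith
      have h5 : (A / d - 1) * d = A - d := by field_simp
      linarith
    · have h3 := Int.floor_le (A / d)
      have h4 : (⌊A / d⌋ : ℝ) * d ≤ (A / d) * d := by nlinarith
      have h5 : (A / d) * d = A := by field_simp
      linarith

lemma exists_int_near (L c₀ β : ℝ) (hL : 0 < L) : ∃ j : ℤ, |c₀ + j * L - β| ≤ L / 2 := by
  refine ⟨round ((β - c₀) / L), ?_⟩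
  have h := abs_sub_round ((β - c₀) / L)
  have key : c₀ + (round ((β - c₀) / L) : ℝ) * L - β
      = -(((β - c₀)/L - (round ((β - c₀) / L) : ℝ)) * L) := by
    field_simp
    ring
  rw [key, abs_neg, abs_mul, abs_of_pos hL]
  nlinarith [abs_nonneg ((β - c₀)/L - (round ((β - c₀) / L) : ℝ))]

lemma dir_core (a b : ℝ) (hab : a^2 + b^2 = 1) (h : |b| ≤ a) (M : ℕ) (hM : 1 ≤ M) :
    ∃ m n : ℤ, ((M:ℝ) - 1/2) ≤ a * m + b * n ∧ |a * n - b * m| ≤ 1/2 ∧ (m:ℝ)^2 + (n:ℝ)^2 ≤ (2*M)^2 := by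
  have hb := abs_nonneg b
  have hb2 : |b|^2 = b^2 := _root_.sq_abs b
  have ha0 : 0 < a := by nlinarith
  have ha1 : a ≤ 1 := by nlinarith
  have hba : b^2 ≤ a^2 := by nlinarith
  have hbb : |b| ≤ 1 := by nlinarith
  have hM1 : (1:ℝ) ≤ (M:ℝ) := by exact_mod_cast hM
  set t : ℝ := (M:ℝ) * b / a with ht
  have hr := abs_sub_round t
  have hrn := abs_nonneg (t - (round t : ℝ))
  refine ⟨(M:ℤ), round t, ?_, ?_, ?_⟩
  · push_cast
    have key : a * (M:ℝ) + b * (round t : ℝ) = (M:ℝ) / a - b * (t - (round t : ℝ)) := by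
      rw [ht]; field_simp; linear_combination (M:ℝ) * hab
    rw [key]
    have h1 : (M:ℝ) ≤ (M:ℝ)/a := by
      rw [le_div_iff₀ ha0]; nlinarith
    have h2 : |b * (t - (round t : ℝ))| ≤ 1/2 := by
      rw [abs_mul]
      nlinarith
    have h3 := le_abs_self (b * (t - (round t : ℝ)))
    linarith
  · push_cast
    have key : a * (round t : ℝ) - b * (M:ℝ) = -(a * (t - (round t : ℝ))) := by
      rw [ht]; field_simp; ring
    rw [key, abs_neg, abs_mul, _root_.abs_of_pos ha0]
    nlinarith
  · push_cast
    have h1 : |t| ≤ (M:ℝ) := by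
      rw [ht, abs_div, abs_mul, _root_.abs_of_pos ha0, div_le_iff₀ ha0,
        _root_.abs_of_nonneg (by positivity : (0:ℝ) ≤ (M:ℝ))]
      nlinarith
    have h2 : |(round t : ℝ)| ≤ (M:ℝ) + 1/2 := by
      have : |(round t : ℝ)| ≤ |(round t : ℝ) - t| + |t| := by
        calc |(round t : ℝ)| = |((round t : ℝ) - t) + t| := by ring_nf
          _ ≤ _ := abs_add_le _ _
      rw [abs_sub_comm] at this
      linarith
    have h3 : ((round t : ℝ))^2 ≤ ((M:ℝ) + 1/2)^2 := by
      nlinarith [_root_.sq_abs ((round t : ℝ)), abs_nonneg ((round t : ℝ))]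
    nlinarith

lemma comp_re (w : ℂ) (p q : ℤ) :
    ((starRingEnd ℂ) w * ((p:ℂ) + (q:ℂ)*Complex.I)).re = w.re * p + w.im * q := by
  simp [Complex.mul_re, Complex.mul_im]

lemma comp_im (w : ℂ) (p q : ℤ) :
    ((starRingEnd ℂ) w * ((p:ℂ) + (q:ℂ)*Complex.I)).im = w.re * q - w.im * p := by
  simp [Complex.mul_re, Complex.mul_im]
  ring

lemma comp_norm (p q : ℤ) (C : ℝ) (hC : 0 ≤ C) (h : (p:ℝ)^2 + (q:ℝ)^2 ≤ C^2) :
    ‖(p:ℂ) + (q:ℂ)*Complex.I‖ ≤ C := by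
  have h1 : Complex.normSq ((p:ℂ) + (q:ℂ)*Complex.I) = (p:ℝ)^2 + (q:ℝ)^2 := by
    simp [Complex.normSq_apply]; ring
  have h2 : ‖(p:ℂ) + (q:ℂ)*Complex.I‖ = Real.sqrt ((p:ℝ)^2 + (q:ℝ)^2) := by
    rw [← h1, Complex.norm_def]
  rw [h2]
  calc Real.sqrt ((p:ℝ)^2 + (q:ℝ)^2) ≤ Real.sqrt (C^2) := Real.sqrt_le_sqrt h
    _ = C := Real.sqrt_sq hC

lemma dir_approx (w : ℂ) (hw : ‖w‖ = 1) (M : ℕ) (hM : 1 ≤ M) :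
    ∃ v ∈ intLattice, ((M:ℝ) - 1/2) ≤ ((starRingEnd ℂ) w * v).re ∧
      |((starRingEnd ℂ) w * v).im| ≤ 1/2 ∧ ‖v‖ ≤ 2*M := by
  set a := w.re with ha
  set b := w.im with hb
  have hab : a^2 + b^2 = 1 := by
    have h := Complex.normSq_apply w
    have h2 : Complex.normSq w = 1 := by
      rw [Complex.normSq_eq_norm_sq, hw]; norm_num
    rw [h2] at h; nlinarith
  have hC : (0:ℝ) ≤ 2*M := by positivity
  rcases le_or_gt |b| |a| with hba | hba
  · rcases le_or_gt 0 a with ha0 | ha0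
    · obtain ⟨m, n, h1, h2, h3⟩ := dir_core a b hab (by rwa [_root_.abs_of_nonneg ha0] at hba) M hM
      exact ⟨(m:ℂ) + (n:ℂ)*Complex.I, ⟨m, n, rfl⟩, by rw [comp_re]; exact h1,
        by rw [comp_im]; exact h2, comp_norm m n _ hC h3⟩
    · obtain ⟨m, n, h1, h2, h3⟩ := dir_core (-a) (-b) (by nlinarith)
        (by rw [abs_neg]; rw [abs_of_neg ha0] at hba; exact hba) M hM
      refine ⟨((-m : ℤ):ℂ) + ((-n : ℤ):ℂ)*Complex.I, ⟨-m, -n, rfl⟩, ?_, ?_, ?_⟩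
      · rw [comp_re]; push_cast; push_cast at h1; linarith
      · rw [comp_im]; push_cast; rw [abs_le] at h2 ⊢; constructor <;> linarith [h2.1, h2.2]
      · apply comp_norm _ _ _ hC; push_cast; linarith
  · rcases le_or_gt 0 b with hb0 | hb0
    · obtain ⟨m, n, h1, h2, h3⟩ := dir_core b (-a) (by nlinarith)
        (by rw [abs_neg]; rw [_root_.abs_of_nonneg hb0] at hba; linarith) M hM
      refine ⟨((-n : ℤ):ℂ) + ((m : ℤ):ℂ)*Complex.I, ⟨-n, m, rfl⟩, ?_, ?_, ?_⟩
      · rw [comp_re]; push_cast; push_cast at h1; linarith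
      · rw [comp_im]; push_cast; rw [abs_le] at h2 ⊢; constructor <;> linarith [h2.1, h2.2]
      · apply comp_norm _ _ _ hC; push_cast; linarith
    · obtain ⟨m, n, h1, h2, h3⟩ := dir_core (-b) a (by nlinarith)
        (by rw [abs_of_neg hb0] at hba; exact hba.le) M hM
      refine ⟨((n : ℤ):ℂ) + ((-m : ℤ):ℂ)*Complex.I, ⟨n, -m, rfl⟩, ?_, ?_, ?_⟩
      · rw [comp_re]; push_cast; push_cast at h1; linarith
      · rw [comp_im]; push_cast; rw [abs_le] at h2 ⊢; constructor <;> linarith [h2.1, h2.2]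
      · apply comp_norm _ _ _ hC; push_cast; linarith

set_option maxHeartbeats 1600000 in
/-- Any nondegenerate closed arc of angles `[γ₀ - θ₀, γ₀ + θ₀]` is good for the
`ε`-fattened integer lattice: rotating `ℤ² + B_ε(0)` by the angles of the arc covers
the complement of some disk centered at the origin. -/
theorem arc_is_good (ε : ℝ) (hε : 0 < ε) (γ₀ θ₀ : ℝ) (hθ₀ : 0 < θ₀) :
    ∃ t₀ > 0, ∀ x : ℂ, t₀ ≤ ‖x‖ →
      ∃ θ ∈ Icc (γ₀ - θ₀) (γ₀ + θ₀), ∃ y ∈ fattened intLattice ε, x = rot θ y := by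
  have hπ : (0:ℝ) < Real.pi/4 := by positivity
  have hπ2 : Real.pi/4 < Real.pi/2 := by linarith [Real.pi_pos]
  set θ₁ := min θ₀ (Real.pi/4) with hθ₁def
  have hθ₁pos : 0 < θ₁ := lt_min hθ₀ hπ
  have hθ₁le : θ₁ ≤ Real.pi/4 := min_le_right _ _
  have hθ₁θ₀ : θ₁ ≤ θ₀ := min_le_left _ _
  have hθ₁lt : θ₁ < Real.pi/2 := lt_of_le_of_lt hθ₁le hπ2
  set T := Real.tan θ₁ with hTdef
  have hT0 : 0 < T := Real.tan_pos_of_pos_of_lt_pi_div_two hθ₁pos hθ₁lt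
  have hT1 : T ≤ 1 := by
    rw [hTdef, ← Real.tan_pi_div_four]
    rcases eq_or_lt_of_le hθ₁le with h | h
    · rw [h]
    · exact le_of_lt (Real.tan_lt_tan_of_lt_of_lt_pi_div_two (by linarith) hπ2 h)
  set M : ℕ := ⌈(8:ℝ)/T⌉₊ with hMdef
  have hM8' : (8:ℝ)/T ≤ M := Nat.le_ceil _
  clear_value M
  clear hMdef
  have hM8 : (8:ℝ) ≤ M := by
    refine le_trans ?_ hM8'
    rw [le_div_iff₀ hT0]
    nlinarith only [hT0, hT1]
  have hM1 : 1 ≤ M := by exact_mod_cast le_trans (by norm_num : (1:ℝ) ≤ 8) hM8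
  have hMT : 1/(M:ℝ) ≤ T/8 := by
    rw [div_le_div_iff₀ (by linarith only [hM8] : (0:ℝ) < M) (by norm_num : (0:ℝ) < 8)]
    nlinarith only [mul_le_mul_of_nonneg_left hM8' hT0.le, mul_div_cancel₀ (8:ℝ) (ne_of_gt hT0)]
  set B : ℝ := 2*(M:ℝ) with hBdef
  have hB16 : (16:ℝ) ≤ B := by rw [hBdef]; linarith only [hM8]
  have hMB : (M:ℝ) ≤ B := by rw [hBdef]; linarith only [hM8]
  have hB2M : 2*(M:ℝ) = B := hBdef.symm
  clear_value B
  clear hBdef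
  have hSpos : (0:ℝ) < 3*B^2 + 3*B + 3 := by nlinarith only [hB16]
  set K : ℝ := (3*B^2 + 3*B + 3) * (1/ε + 1/T + 1) with hKdef
  have hKfac : (1:ℝ) ≤ 1/ε + 1/T + 1 := by
    have p1 : 0 < 1/ε := by positivity
    have p2 : 0 < 1/T := by positivity
    linarith only [p1, p2]
  have hKbig : 3*B^2 + 3*B + 3 ≤ K := by
    rw [hKdef]; nlinarith only [hSpos, hKfac]
  have hK1 : (1:ℝ) ≤ K := by nlinarith only [hKbig, hB16]
  have hKε : 3*B^2 + 3*B + 3 ≤ ε * K := by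
    have h1 : (1:ℝ) ≤ ε * (1/ε + 1/T + 1) := by
      have e0 : ε * (1/ε) = 1 := by rw [mul_one_div, div_self (ne_of_gt hε)]
      have e1 : ε * (1/ε + 1/T + 1) = ε * (1/ε) + ε * (1/T) + ε := by ring
      have e2 : (0:ℝ) ≤ ε * (1/T) := by positivity
      rw [e1, e0]; linarith only [e2, hε]
    have h4 : ε * K = (3*B^2 + 3*B + 3) * (ε * (1/ε + 1/T + 1)) := by rw [hKdef]; ring
    rw [h4]; nlinarith only [h1, hSpos]
  have hKT : 3*B^2 + 3*B + 3 ≤ T * K := by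
    have h1 : (1:ℝ) ≤ T * (1/ε + 1/T + 1) := by
      have e0 : T * (1/T) = 1 := by rw [mul_one_div, div_self (ne_of_gt hT0)]
      have e1 : T * (1/ε + 1/T + 1) = T * (1/ε) + T * (1/T) + T := by ring
      have e2 : (0:ℝ) ≤ T * (1/ε) := by positivity
      rw [e1, e0]; linarith only [e2, hT0]
    have h4 : T * K = (3*B^2 + 3*B + 3) * (T * (1/ε + 1/T + 1)) := by rw [hKdef]; ring
    rw [h4]; nlinarith only [h1, hSpos]
  have hK0 : 0 < K := by linarith only [hK1]
  clear_value K
  clear hKdef hKfac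
  refine ⟨K^2, by positivity, ?_⟩
  intro x hx
  set r := ‖x‖ with hrdef
  have hr0 : 0 < r := lt_of_lt_of_le (by positivity) hx
  set s := Real.sqrt r with hsdef
  have hs2 : s^2 = r := Real.sq_sqrt (le_of_lt hr0)
  have hsK : K ≤ s := by
    rw [hsdef]
    calc K = Real.sqrt (K^2) := (Real.sqrt_sq (by linarith only [hK1])).symm
      _ ≤ Real.sqrt r := Real.sqrt_le_sqrt hx
  clear_value s
  clear hsdef
  have hs1 : (1:ℝ) ≤ s := le_trans hK1 hsK
  have hsKbig : 3*B^2 + 3*B + 3 ≤ s := le_trans hKbig hsK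
  have hsB : 3*B ≤ s := by nlinarith only [hsKbig, sq_nonneg B]
  have hrB : B ≤ r := by nlinarith only [hsB, hs1, hs2, hB16]
  -- rotated point and unit vector
  set c := rot (-γ₀) x with hcdef
  have hc_norm : ‖c‖ = r := by
    rw [hcdef, hrdef]; exact rot_norm _ _
  set u := c / (r:ℂ) with hudef
  have hu_norm : ‖u‖ = 1 := by
    rw [hudef, norm_div, hc_norm, Complex.norm_real, Real.norm_eq_abs, abs_of_pos hr0]
    field_simp
  set w := -(Complex.I * u) with hwdef
  have hw_norm : ‖w‖ = 1 := by rw [hwdef]; simp [hu_norm]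
  -- lattice direction v
  obtain ⟨v, hv_lat, hD, hC, hvB⟩ := dir_approx w hw_norm M hM1
  set D := ((starRingEnd ℂ) w * v).re with hDdef
  set C := ((starRingEnd ℂ) w * v).im with hCdef
  set L := ‖v‖ with hLdef
  have habswv : ‖(starRingEnd ℂ) w * v‖ = L := by
    rw [norm_mul, Complex.norm_conj, hw_norm, one_mul, hLdef]
  have hDL : D ≤ L := le_trans (Complex.re_le_norm _) (le_of_eq habswv)
  have hLM : (M:ℝ) - 1/2 ≤ L := le_trans hD hDL
  have hL0 : 0 < L := by linarith only [hLM, hM8]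
  have hLB : L ≤ B := le_trans hvB (le_of_eq hB2M)
  have hL2 : L^2 = D^2 + C^2 := by
    have h1 := Complex.sq_norm ((starRingEnd ℂ) w * v)
    rw [habswv, Complex.normSq_apply] at h1
    rw [h1, hDdef, hCdef]; ring
  have hv0 : v ≠ 0 := by
    intro h
    rw [h, norm_zero] at hLdef
    exact absurd hL0 (by rw [hLdef]; exact lt_irrefl 0)
  set τ := v / (L:ℂ) with hτdef
  have hτ_norm : ‖τ‖ = 1 := by
    rw [hτdef, norm_div, Complex.norm_real, Real.norm_eq_abs, abs_of_pos hL0, hLdef]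
    exact div_self (norm_ne_zero_iff.mpr hv0)
  -- defect between I*τ and u
  set δ := Complex.I * τ - u with hδdef
  have hre_key : ((starRingEnd ℂ) (Complex.I*τ) * u).re = D / L := by
    have hkey : (starRingEnd ℂ) (Complex.I*τ) * u = (starRingEnd ℂ) ((starRingEnd ℂ) w * v / (L:ℂ)) := by
      rw [hτdef, hwdef]
      simp only [map_mul, map_div₀, Complex.conj_I, Complex.conj_conj, map_neg]
      rw [Complex.conj_ofReal]
      ring
    rw [hkey, Complex.conj_re, hDdef, Complex.div_ofReal_re]
  have hδ_norm : ‖δ‖ ≤ 1/(M:ℝ) := by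
    have h1 : ‖δ‖^2 = 2 - 2 * (D/L) := by
      rw [hδdef]
      have h2 : ‖Complex.I * τ - u‖^2 = Complex.normSq (Complex.I * τ - u) := Complex.sq_norm _
      rw [h2, Complex.normSq_sub]
      have h3 : Complex.normSq (Complex.I * τ) = 1 := by
        rw [← Complex.sq_norm,
          norm_mul, Complex.norm_I, one_mul, hτ_norm]; norm_num
      have h4 : Complex.normSq u = 1 := by
        rw [← Complex.sq_norm, hu_norm]; norm_num
      have h5 : ((Complex.I * τ) * (starRingEnd ℂ) u).re = D / L := by
        rw [show ((Complex.I * τ) * (starRingEnd ℂ) u) = (starRingEnd ℂ) ((starRingEnd ℂ) (Complex.I*τ) * u) by rw [map_mul, Complex.conj_conj]]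
        rw [Complex.conj_re]
        exact hre_key
      rw [h3, h4, h5]; ring
    have h6 : ‖δ‖^2 ≤ (1/(M:ℝ))^2 := by
      rw [h1]
      have h7 : 2 - 2 * (D/L) = (2*L - 2*D) / L := by field_simp
      have h8 : (L - D) * (L + D) = C^2 := by nlinarith only [hL2]
      have h10 : L - D ≥ 0 := by linarith only [hDL]
      have h11 : C^2 ≤ 1/4 := by nlinarith only [hC, abs_nonneg C, _root_.sq_abs C]
      have h2M : (0:ℝ) < 2*(M:ℝ) - 1 := by linarith only [hM8]
      have hLD : (L - D) * (2*(M:ℝ) - 1) ≤ 1/4 := by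
        nlinarith only [h8, h10, h11, hLM, hDL, hD]
      rw [h7, show (1/(M:ℝ))^2 = 1/(M:ℝ)^2 by ring,
        div_le_div_iff₀ hL0 (by nlinarith only [hM8] : (0:ℝ) < (M:ℝ)^2)]
      have step1 : ((2*L - 2*D) * (M:ℝ)^2) * (2*(M:ℝ)-1) ≤ (M:ℝ)^2/2 := by
        nlinarith only [hLD, sq_nonneg (M:ℝ), hM8]
      have step2 : (M:ℝ)^2/2 ≤ (1 * L) * (2*(M:ℝ)-1) := by
        nlinarith only [hLM, hM8]
      exact le_of_mul_le_mul_right (le_trans step1 step2) h2M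
    have h12 := Real.sqrt_le_sqrt h6
    rwa [Real.sqrt_sq (norm_nonneg δ), Real.sqrt_sq (by positivity)] at h12
  have hδT : ‖δ‖ ≤ T/8 := le_trans hδ_norm hMT
  -- choice of the auxiliary lattice direction e
  have hvsq : v.re^2 + v.im^2 = L^2 := by
    have h1 := Complex.sq_norm v
    rw [Complex.normSq_apply] at h1
    rw [hLdef, h1]; ring
  have hτre : τ.re = v.re / L := by rw [hτdef, Complex.div_ofReal_re]
  have hτim : τ.im = v.im / L := by rw [hτdef, Complex.div_ofReal_im]
  obtain ⟨e, he_lat, hd_half, hd_one⟩ :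
      ∃ e ∈ intLattice, 1/2 ≤ |((starRingEnd ℂ) τ * e).im| ∧ |((starRingEnd ℂ) τ * e).im| ≤ 1 := by
    rcases le_or_gt |v.im| |v.re| with hcase | hcase
    · have him : ((starRingEnd ℂ) τ * Complex.I).im = v.re / L := by
        rw [Complex.mul_im]
        simp [Complex.conj_re, Complex.conj_im, hτre]
      refine ⟨Complex.I, ⟨0, 1, by norm_num⟩, ?_, ?_⟩
      · rw [him, abs_div, abs_of_pos hL0, le_div_iff₀ hL0]
        nlinarith only [hvsq, hcase, abs_nonneg v.re, abs_nonneg v.im,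
          _root_.sq_abs v.re, _root_.sq_abs v.im, hL0]
      · rw [him, abs_div, abs_of_pos hL0, div_le_one hL0]
        rw [hLdef]
        exact Complex.abs_re_le_norm v
    · have him : ((starRingEnd ℂ) τ * 1).im = -(v.im / L) := by
        rw [mul_one, Complex.conj_im, hτim]
      refine ⟨1, ⟨1, 0, by norm_num⟩, ?_, ?_⟩
      · rw [him, abs_neg, abs_div, abs_of_pos hL0, le_div_iff₀ hL0]
        nlinarith only [hvsq, hcase, abs_nonneg v.re, abs_nonneg v.im,
          _root_.sq_abs v.re, _root_.sq_abs v.im, hL0]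
      · rw [him, abs_neg, abs_div, abs_of_pos hL0, div_le_one hL0]
        rw [hLdef]
        exact Complex.abs_im_le_norm v
  -- the radial window
  have hr3B : 3*B ≤ r := by nlinarith only [hsB, hs1, hs2, hB16]
  set A := Real.sqrt (r^2 - B^2) with hAdef
  have hA2 : A^2 = r^2 - B^2 := Real.sq_sqrt (by nlinarith only [hrB, hB16])
  have hA0 : 0 ≤ A := Real.sqrt_nonneg _
  have hAr : A ≤ r := by
    rw [hAdef]
    calc Real.sqrt (r^2 - B^2) ≤ Real.sqrt (r^2) := Real.sqrt_le_sqrt (by nlinarith only [hB16])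
      _ = r := Real.sqrt_sq hr0.le
  have hArB : r - B ≤ A := by
    rw [hAdef]
    calc r - B = Real.sqrt ((r-B)^2) := (Real.sqrt_sq (by linarith only [hrB])).symm
      _ ≤ Real.sqrt (r^2 - B^2) := Real.sqrt_le_sqrt (by nlinarith only [hrB, hB16])
  clear_value A
  clear hAdef
  obtain ⟨k, hk1, hk2⟩ := exists_int_step ((starRingEnd ℂ) τ * e).im A hd_half hd_one
  set a := (k:ℝ) * ((starRingEnd ℂ) τ * e).im with hadef
  have ha_low : A - 1 ≤ a := hk1
  have ha_high : a ≤ A := hk2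
  have ha0 : 0 < a := by nlinarith only [ha_low, hArB, hr3B, hB16]
  have ha_r : a ≤ r := le_trans ha_high hAr
  set β := Real.sqrt (r^2 - a^2) with hβdef
  have hβ2 : β^2 = r^2 - a^2 := Real.sq_sqrt (by nlinarith only [ha_r, ha0])
  have hβ0 : 0 ≤ β := Real.sqrt_nonneg _
  have hβB : B ≤ β := by
    rw [hβdef]
    calc B = Real.sqrt (B^2) := (Real.sqrt_sq (by linarith only [hB16])).symm
      _ ≤ Real.sqrt (r^2 - a^2) := Real.sqrt_le_sqrt (by nlinarith only [ha_high, hA2, hA0, ha0])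
  have hβub : β ≤ B + 2*s := by
    have hA1 : (1:ℝ) ≤ A := by linarith only [hArB, hr3B, hB16]
    have h1 : r^2 - a^2 ≤ (B + 2*s)^2 := by
      have h2 : (A-1)^2 ≤ a^2 := by nlinarith only [ha_low, hA1, ha0]
      nlinarith only [h2, hA2, hAr, hs2, hs1, hB16]
    rw [hβdef]
    calc Real.sqrt (r^2 - a^2) ≤ Real.sqrt ((B + 2*s)^2) := Real.sqrt_le_sqrt h1
      _ = B + 2*s := Real.sqrt_sq (by nlinarith only [hB16, hs1])
  clear_value β
  clear hβdef
  -- the lattice point q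
  obtain ⟨j, hj⟩ := exists_int_near L ((k:ℝ) * ((starRingEnd ℂ) τ * e).re) β hL0
  set q := (k:ℂ)*e + (j:ℂ)*v with hqdef
  have hq_lat : q ∈ intLattice := lat_comb he_lat hv_lat k j
  set ζ := (starRingEnd ℂ) τ * q with hζdef
  have hτv : (starRingEnd ℂ) τ * v = (L:ℂ) := by
    rw [hτdef, map_div₀, Complex.conj_ofReal, div_mul_eq_mul_div,
      show (starRingEnd ℂ) v * v = ((Complex.normSq v : ℝ):ℂ) by rw [mul_comm]; exact Complex.mul_conj v]
    have h1 : (Complex.normSq v : ℝ) = L^2 := by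
      rw [← Complex.sq_norm, hLdef]
    rw [h1]
    have hL0' : (L:ℂ) ≠ 0 := by exact_mod_cast ne_of_gt hL0
    push_cast
    field_simp
  have hζ : ζ = (k:ℂ) * ((starRingEnd ℂ) τ * e) + (j:ℂ) * (L:ℂ) := by
    rw [hζdef, hqdef, show (starRingEnd ℂ) τ * ((k:ℂ)*e + (j:ℂ)*v)
      = (k:ℂ) * ((starRingEnd ℂ) τ * e) + (j:ℂ) * ((starRingEnd ℂ) τ * v) by ring, hτv]
  have hζim : ζ.im = a := by
    rw [hζ, hadef]
    simp [Complex.add_im, Complex.mul_im]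
  have hζre : ζ.re = (k:ℝ) * ((starRingEnd ℂ) τ * e).re + (j:ℝ) * L := by
    rw [hζ]
    simp [Complex.add_re, Complex.mul_re]
  set b := ζ.re with hbdef
  have hb_near : |b - β| ≤ L/2 := by rw [hζre]; exact hj
  have habs_q : ‖q‖^2 = b^2 + a^2 := by
    have h1 : ‖ζ‖ = ‖q‖ := by
      rw [hζdef, norm_mul, Complex.norm_conj, hτ_norm, one_mul]
    have h2 : ‖ζ‖^2 = ζ.re^2 + ζ.im^2 := by
      rw [Complex.sq_norm, Complex.normSq_apply]; ring
    rw [← h1, h2, hζim, hbdef]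
  -- bounds on b and ‖q‖
  have hb1 : b - β ≤ L/2 := (abs_le.mp hb_near).2
  have hb2 : -(L/2) ≤ b - β := (abs_le.mp hb_near).1
  have hbub : b ≤ 2*B + 2*s := by linarith only [hb1, hβub, hLB, hB16]
  have hbpos : B/2 ≤ b := by linarith only [hb2, hβB, hLB]
  have hqe : ‖q‖^2 = r^2 + (b^2 - β^2) := by
    rw [habs_q]; linarith only [hβ2]
  have hEb : |b^2 - β^2| ≤ (B/2) * (3*B + 4*s) := by
    have h1 : |b^2 - β^2| = |b - β| * (b + β) := by
      rw [show b^2 - β^2 = (b-β)*(b+β) by ring, abs_mul,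
        _root_.abs_of_nonneg (by linarith only [hbpos, hβ0, hB16] : (0:ℝ) ≤ b + β)]
    rw [h1]
    have h2 : b + β ≤ 3*B + 4*s := by linarith only [hbub, hβub]
    have h3 : |b - β| ≤ B/2 := le_trans hb_near (by linarith only [hLB])
    have h4 : (0:ℝ) ≤ b + β := by linarith only [hbpos, hβ0, hB16]
    calc |b - β| * (b + β) ≤ (B/2) * (b + β) :=
          mul_le_mul_of_nonneg_right h3 h4
      _ ≤ (B/2) * (3*B + 4*s) := by
          apply mul_le_mul_of_nonneg_left h2 (by linarith only [hB16])
  have hq0norm : B/2 ≤ ‖q‖ := by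
    have h1 : b ≤ |ζ.re| := by rw [hbdef] at *; exact le_abs_self _
    have h2 : |ζ.re| ≤ ‖q‖ := by
      have h3 := Complex.abs_re_le_norm ζ
      have h4 : ‖ζ‖ = ‖q‖ := by
        rw [hζdef, norm_mul, Complex.norm_conj, hτ_norm, one_mul]
      rw [← h4]; exact h3
    linarith only [hbpos, le_trans h1 h2]
  have hq0 : q ≠ 0 := by
    intro h
    rw [h, norm_zero] at hq0norm
    linarith only [hq0norm, hB16]
  -- the key smallness: (B/2)*(3B+4s) < ε * s^2 and ≤ (T/2)-type bounds
  have hεs : (3*B^2+3*B+3) ≤ ε * s := le_trans hKε (mul_le_mul_of_nonneg_left hsK hε.le)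
  have hεs2 : (3*B^2+3*B+3)*s ≤ (ε*s)*s := mul_le_mul_of_nonneg_right hεs (by linarith only [hs1])
  have hEsmall : (B/2) * (3*B + 4*s) < ε * r := by
    have h1 : ε * r = (ε*s)*s := by rw [← hs2]; ring
    rw [h1]
    nlinarith only [hεs2, hs1, hB16, mul_nonneg (sq_nonneg B) (sub_nonneg.mpr hs1),
      mul_nonneg (by linarith only [hB16] : (0:ℝ) ≤ B) (by linarith only [hs1] : (0:ℝ) ≤ s)]
  have hqu : ‖q‖ < r + ε := by
    have h2 : ‖q‖^2 < (r+ε)^2 := by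
      nlinarith only [hqe, hEb, hEsmall, (abs_le.mp hEb).2, le_abs_self (b^2 - β^2), hε, hr0]
    have h3 : (0:ℝ) ≤ r + ε := by linarith only [hr0, hε]
    nlinarith only [h2, h3, norm_nonneg q, sq_nonneg (‖q‖ - (r+ε))]
  have hql : r - ε < ‖q‖ := by
    rcases le_or_gt r ε with hcase | hcase
    · linarith only [hcase, hq0norm, hB16]
    · have h2 : (r-ε)^2 < ‖q‖^2 := by
        nlinarith only [hqe, hEsmall, neg_abs_le (b^2 - β^2), hEb, hε, hcase]
      nlinarith only [h2, norm_nonneg q, hcase, hε, sq_nonneg (‖q‖ - (r-ε))]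
  have hqr : |‖q‖ - r| < ε := abs_lt.2 ⟨by linarith only [hql], by linarith only [hqu]⟩
  have hqub2 : ‖q‖ ≤ 2*r := by
    have h1 : b ≤ r := by
      have : 2*B + 2*s ≤ s^2 := by nlinarith only [hsB, hs1, hB16]
      linarith only [hbub, this, hs2]
    have h2 : ‖q‖^2 ≤ (2*r)^2 := by
      have hb2' : b^2 ≤ r^2 := by nlinarith only [h1, hbpos, hB16]
      have ha2' : a^2 ≤ r^2 := by nlinarith only [ha_r, ha0]
      linarith only [habs_q, hb2', ha2', sq_nonneg r]
    calc ‖q‖ = Real.sqrt (‖q‖^2) := (Real.sqrt_sq (norm_nonneg q)).symm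
      _ ≤ Real.sqrt ((2*r)^2) := Real.sqrt_le_sqrt h2
      _ = 2*r := Real.sqrt_sq (by linarith only [hr0])
  -- angle estimates
  have hδq_re : |((starRingEnd ℂ) δ * q).re| ≤ (T/8)*(2*r) := by
    have h1 : |((starRingEnd ℂ) δ * q).re| ≤ ‖(starRingEnd ℂ) δ * q‖ :=
      Complex.abs_re_le_norm _
    have h2 : ‖(starRingEnd ℂ) δ * q‖ ≤ (T/8)*(2*r) := by
      rw [norm_mul, Complex.norm_conj]
      have := mul_le_mul hδT hqub2 (norm_nonneg q) (by linarith only [hT0] : (0:ℝ) ≤ T/8)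
      linarith only [this]
    linarith only [h1, h2]
  have hδq_im : |((starRingEnd ℂ) δ * q).im| ≤ (T/8)*(2*r) := by
    have h1 : |((starRingEnd ℂ) δ * q).im| ≤ ‖(starRingEnd ℂ) δ * q‖ := Complex.abs_im_le_norm _
    have h2 : ‖(starRingEnd ℂ) δ * q‖ ≤ (T/8)*(2*r) := by
      rw [norm_mul, Complex.norm_conj]
      have := mul_le_mul hδT hqub2 (norm_nonneg q) (by linarith only [hT0] : (0:ℝ) ≤ T/8)
      linarith only [this]
    linarith only [h1, h2]
  have hsplit : (starRingEnd ℂ) u * q = -Complex.I * ζ - (starRingEnd ℂ) δ * q := by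
    have h1 : u = Complex.I * τ - δ := by rw [hδdef]; ring
    rw [h1, map_sub, map_mul, Complex.conj_I, hζdef]; ring
  have hRu : ((starRingEnd ℂ) u * q).re = a - ((starRingEnd ℂ) δ * q).re := by
    rw [hsplit, Complex.sub_re, ← hζim]
    congr 1
    simp [Complex.mul_re]
  have hIu : ((starRingEnd ℂ) u * q).im = -b - ((starRingEnd ℂ) δ * q).im := by
    have him2 : (-Complex.I * ζ).im = -b := by rw [hbdef]; simp [Complex.mul_im]
    rw [hsplit, Complex.sub_im, him2]
  have hTr : T * r = (T*s)*s := by rw [← hs2]; ring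
  have hTs : (3*B^2+3*B+3) ≤ T * s := le_trans hKT (mul_le_mul_of_nonneg_left hsK hT0.le)
  have hTs2 : (3*B^2+3*B+3)*s ≤ (T*s)*s := mul_le_mul_of_nonneg_right hTs (by linarith only [hs1])
  have hRu_lb : a - (T/8)*(2*r) ≤ ((starRingEnd ℂ) u * q).re := by
    rw [hRu]
    have := (abs_le.mp hδq_re).2
    linarith only [this]
  have hRu_pos : 0 < ((starRingEnd ℂ) u * q).re := by
    have h1 : a - (T/8)*(2*r) ≥ (r - B - 1) - r/4 := by
      have h2 : (T/8)*(2*r) ≤ r/4 := by nlinarith only [hT1, hT0, hr0]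
      linarith only [ha_low, hArB, h2]
    linarith only [hRu_lb, h1, hr3B, hB16]
  have hIu_ub : |((starRingEnd ℂ) u * q).im| ≤ b + (T/8)*(2*r) := by
    rw [hIu]
    have h1 := (abs_le.mp hδq_im).1
    have h2 := (abs_le.mp hδq_im).2
    rw [abs_le]
    constructor
    · linarith only [h2, hbpos, hB16]
    · have h3 : -b - ((starRingEnd ℂ) δ * q).im ≤ -b + (T/8)*(2*r) := by linarith only [h1]
      have h4 : -b ≤ b := by linarith only [hbpos, hB16]
      linarith only [h3, h4]
  have hangle : |((starRingEnd ℂ) u * q).im| ≤ T * ((starRingEnd ℂ) u * q).re := by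
    have hTRu : T * (a - (T/8)*(2*r)) ≤ T * ((starRingEnd ℂ) u * q).re :=
      mul_le_mul_of_nonneg_left hRu_lb hT0.le
    have hT2r : T * ((T/8)*(2*r)) ≤ T*r/4 := by
      have p0 : (0:ℝ) ≤ (1-T)*T*r := mul_nonneg (mul_nonneg (by linarith only [hT1]) hT0.le) hr0.le
      nlinarith only [p0]
    have hTa : T * (r - B - 1) ≤ T * a := by
      apply mul_le_mul_of_nonneg_left _ hT0.le
      linarith only [ha_low, hArB]
    -- enough : b + Tr/4 ≤ T(r-B-1) - Tr/4
    have hmain : b + T*r/4 ≤ T*(r - B - 1) - T*r/4 := by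
      have h1 : T*(r-B-1) - T*r/2 = T*r/2 - T*B - T := by ring
      have h2 : (3*B^2+3*B+3)*s ≤ T*r := by rw [hTr]; exact hTs2
      have p1 : (0:ℝ) ≤ (1-T)*B := mul_nonneg (by linarith only [hT1]) (by linarith only [hB16])
      have p2 : (0:ℝ) ≤ (B-16)*(B*s) := mul_nonneg (by linarith only [hB16])
        (mul_nonneg (by linarith only [hB16]) (by linarith only [hs1]))
      have p3 : (0:ℝ) ≤ (s-1)*B := mul_nonneg (by linarith only [hs1]) (by linarith only [hB16])
      have p4 : (0:ℝ) ≤ (B-1)*s := mul_nonneg (by linarith only [hB16]) (by linarith only [hs1])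
      nlinarith only [hbub, h2, p1, p2, p3, p4, hT0, hT1, hs1, hB16]
    calc |((starRingEnd ℂ) u * q).im| ≤ b + (T/8)*(2*r) := hIu_ub
      _ ≤ T*(r - B - 1) - T*r/4 := by
          have : (T/8)*(2*r) = T*r/4 := by ring
          linarith only [hmain, this]
      _ ≤ T * a - T * ((T/8)*(2*r)) := by
          have : (T/8)*(2*r) = T*r/4 := by ring
          linarith only [hTa, hT2r, this]
      _ = T * (a - (T/8)*(2*r)) := by ring
      _ ≤ T * ((starRingEnd ℂ) u * q).re := hTRu
  -- the rotation angle
  set W := c * (starRingEnd ℂ) q with hWdef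
  have hr0' : (r:ℂ) ≠ 0 := by exact_mod_cast ne_of_gt hr0
  have hcu : c = (r:ℂ) * u := by
    rw [hudef]
    field_simp
  have hWz : W = (r:ℂ) * (starRingEnd ℂ) ((starRingEnd ℂ) u * q) := by
    rw [hWdef, hcu, map_mul, Complex.conj_conj]
    ring
  have hWre : W.re = r * ((starRingEnd ℂ) u * q).re := by
    rw [hWz, show ((r:ℂ) * (starRingEnd ℂ) ((starRingEnd ℂ) u * q)).re
      = r * ((starRingEnd ℂ) ((starRingEnd ℂ) u * q)).re from by simp [Complex.mul_re],
      Complex.conj_re]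
  have hWim : W.im = -(r * ((starRingEnd ℂ) u * q).im) := by
    rw [hWz, show ((r:ℂ) * (starRingEnd ℂ) ((starRingEnd ℂ) u * q)).im
      = r * ((starRingEnd ℂ) ((starRingEnd ℂ) u * q)).im from by simp [Complex.mul_im],
      Complex.conj_im]
    ring
  have hWre_pos : 0 < W.re := by
    rw [hWre]; exact mul_pos hr0 hRu_pos
  have hWim_le : |W.im| ≤ T * W.re := by
    rw [hWim, hWre, abs_neg, abs_mul, _root_.abs_of_pos hr0]
    calc r * |((starRingEnd ℂ) u * q).im| ≤ r * (T * ((starRingEnd ℂ) u * q).re) :=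
        mul_le_mul_of_nonneg_left hangle hr0.le
      _ = T * (r * ((starRingEnd ℂ) u * q).re) := by ring
  have hW0 : W ≠ 0 := by
    intro h
    rw [h] at hWre_pos
    simp at hWre_pos
  set σ := W.arg with hσdef
  have hσ2 : |σ| < Real.pi/2 := Complex.abs_arg_lt_pi_div_two_iff.2 (Or.inl hWre_pos)
  have habs_tan : |Real.tan σ| ≤ T := by
    rw [hσdef, Complex.tan_arg, abs_div, _root_.abs_of_pos hWre_pos, div_le_iff₀ hWre_pos]
    exact hWim_le
  have hσθ : |σ| ≤ θ₁ := by
    by_contra hcon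
    push_neg at hcon
    have h1 : Real.tan θ₁ < Real.tan |σ| :=
      Real.tan_lt_tan_of_lt_of_lt_pi_div_two (by linarith only [hθ₁pos, hπ]) hσ2 hcon
    have h2 : Real.tan |σ| = |Real.tan σ| := by
      rcases le_or_gt 0 σ with h | h
      · rw [_root_.abs_of_nonneg h, _root_.abs_of_nonneg]
        apply Real.tan_nonneg_of_nonneg_of_le_pi_div_two h
        rw [_root_.abs_of_nonneg h] at hσ2
        linarith only [hσ2]
      · rw [abs_of_neg h, Real.tan_neg, abs_of_neg]
        apply Real.tan_neg_of_neg_of_pi_div_two_lt h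
        rw [abs_of_neg h] at hσ2
        linarith only [hσ2]
    rw [h2, ← hTdef] at h1
    linarith only [h1, habs_tan]
  have hσ1 := (abs_le.mp hσθ).1
  have hσ1' := (abs_le.mp hσθ).2
  refine ⟨γ₀ + σ, ⟨by linarith only [hσ1, hθ₁θ₀], by linarith only [hσ1', hθ₁θ₀]⟩, ?_⟩
  -- the witness y
  have hq0' : (‖q‖:ℂ) ≠ 0 := by
    exact_mod_cast ne_of_gt (lt_of_lt_of_le (by linarith only [hB16] : (0:ℝ) < B/2) hq0norm)
  have hqn_pos : 0 < ‖q‖ := lt_of_lt_of_le (by linarith only [hB16]) hq0norm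
  refine ⟨((r / ‖q‖ : ℝ):ℂ) * q, ⟨q, hq_lat, ?_⟩, ?_⟩
  · -- distance estimate
    have h1 : ((r / ‖q‖ : ℝ):ℂ) * q - q = ((r/‖q‖ - 1 : ℝ):ℂ) * q := by
      push_cast
      ring
    rw [h1, norm_mul, Complex.norm_real, Real.norm_eq_abs]
    have h2 : |r/‖q‖ - 1| * ‖q‖ = |r - ‖q‖| := by
      have h3 : (r/‖q‖ - 1) * ‖q‖ = r - ‖q‖ := by
        rw [sub_mul, one_mul, div_mul_cancel₀ _ (ne_of_gt hqn_pos)]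
      rw [← h3, abs_mul, _root_.abs_of_pos hqn_pos]
    rw [h2, abs_sub_comm]
    exact hqr
  · -- x = rot (γ₀ + σ) y
    have hexpσ : Complex.exp ((σ:ℝ) * Complex.I) = W / ((‖W‖ : ℝ):ℂ) := by
      have h1 := Complex.norm_mul_exp_arg_mul_I W
      have h2 : ((‖W‖ : ℝ):ℂ) ≠ 0 := by
        simp only [ne_eq, Complex.ofReal_eq_zero]
        exact (norm_ne_zero_iff.mpr hW0)
      rw [hσdef]
      field_simp
      rw [mul_comm]
      exact h1
    have habsW : (‖W‖ : ℝ) = r * ‖q‖ := by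
      rw [hWdef, norm_mul, Complex.norm_conj, hc_norm]
    have hnormq : ((starRingEnd ℂ) q) * q = ((‖q‖^2 : ℝ):ℂ) := by
      rw [mul_comm, Complex.mul_conj]
      norm_cast
      rw [← Complex.sq_norm]
    have hcx : Complex.exp ((γ₀:ℝ) * Complex.I) * c = x := by
      rw [hcdef]
      show Complex.exp ((γ₀:ℝ) * Complex.I) * (Complex.exp (((-γ₀ : ℝ):ℂ) * Complex.I) * x) = x
      rw [← mul_assoc, ← Complex.exp_add]
      push_cast
      rw [show (γ₀:ℂ) * Complex.I + -(γ₀:ℂ) * Complex.I = 0 by ring, Complex.exp_zero, one_mul]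
    have key : Complex.exp ((σ:ℝ)*Complex.I) * (((r/‖q‖ : ℝ)):ℂ) * q = c := by
      rw [hexpσ, habsW, hWdef]
      rw [show c * (starRingEnd ℂ) q / (((r*‖q‖ : ℝ)):ℂ) * (((r/‖q‖ : ℝ)):ℂ) * q
        = c * ((starRingEnd ℂ) q * q) * (((r/‖q‖ : ℝ)):ℂ) / (((r*‖q‖ : ℝ)):ℂ) by ring, hnormq]
      have e1 : (‖q‖^2) * (r/‖q‖) = r * ‖q‖ := by
        rw [show (‖q‖^2) * (r/‖q‖) = (r/‖q‖ * ‖q‖) * ‖q‖ by ring,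
          div_mul_cancel₀ r (ne_of_gt hqn_pos)]
      have e2 : ((‖q‖^2 : ℝ):ℂ) * (((r/‖q‖ : ℝ)):ℂ) = (((r*‖q‖ : ℝ)):ℂ) := by
        rw [← Complex.ofReal_mul, e1]
      have hZ : (((r*‖q‖ : ℝ)):ℂ) ≠ 0 := by
        simp only [ne_eq, Complex.ofReal_eq_zero]
        positivity
      rw [mul_assoc c, e2, mul_div_assoc, div_self hZ, mul_one]
    show x = rot (γ₀ + σ) (((r / ‖q‖ : ℝ):ℂ) * q)
    rw [rot, show (((γ₀ + σ : ℝ)):ℂ) * Complex.I = (γ₀:ℝ)*Complex.I + (σ:ℝ)*Complex.I by push_cast; ring,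
      Complex.exp_add]
    rw [show Complex.exp ((γ₀:ℝ)*Complex.I) * Complex.exp ((σ:ℝ)*Complex.I) * ((((r/‖q‖ : ℝ)):ℂ) * q)
      = Complex.exp ((γ₀:ℝ)*Complex.I) * (Complex.exp ((σ:ℝ)*Complex.I) * (((r/‖q‖ : ℝ)):ℂ) * q) by ring,
      key, hcx]
end
end

section
/- Let Λ ⊆ ℝ² be a lattice, ε > 0, and I ⊆ S¹ any nondegenerate arc. Then there exists a sequence of angles θ_n ∈ I converging to some limit θ' ∈ I such that the closed set Θ = {θ_n : n ≥ 1} ∪ {θ'} is (Λ,ε)-good, i.e., R_Θ(Λ + B_ε(0)) contains the complement of a disk. -/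
open Complex Set Filter

noncomputable section

/-- `Λ ⊆ ℂ ≅ ℝ²` is a full-rank lattice. -/
def IsLatticeC (Λ : Set ℂ) : Prop :=
  ∃ v w : ℂ, LinearIndependent ℝ ![v, w] ∧
    Λ = {z | ∃ m n : ℤ, z = m • v + n • w}

/-- A set `Θ ⊆ ℝ` of rotation angles is `(Λ,ε)`-good:
`R_Θ (Λ + B_ε(0))` contains the complement of some disk centered at the origin. -/
def IsGoodAngles (Λ : Set ℂ) (ε : ℝ) (Θ : Set ℝ) : Prop :=
  ∃ r : ℝ, ∀ x : ℂ, r ≤ ‖x‖ → ∃ θ ∈ Θ, ∃ y ∈ fattened Λ ε, x = rot θ y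

/-- latice points set -/
def latt (v w : ℂ) : Set ℂ := {z | ∃ m n : ℤ, z = m • v + n • w}

lemma latt_add_zsmul (v w : ℂ) {p q : ℂ} (hp : p ∈ latt v w) (hq : q ∈ latt v w) (j : ℤ) :
    p + j • q ∈ latt v w := by
  obtain ⟨m1, n1, rfl⟩ := hp
  obtain ⟨m2, n2, rfl⟩ := hq
  exact ⟨m1 + j * m2, n1 + j * n2, by push_cast [zsmul_eq_mul]; ring⟩

lemma latt_cover (v w : ℂ) (hvw : LinearIndependent ℝ ![v, w]) (ε : ℝ) (hε : 0 < ε) :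
    ∃ D : ℝ, ε ≤ D ∧ 0 < D ∧ ∀ z : ℂ, ∃ l ∈ latt v w, ‖z - l‖ ≤ D := by
  refine ⟨(‖v‖ + ‖w‖) / 2 + ε, by linarith [norm_nonneg v, norm_nonneg w], by positivity,
    fun z => ?_⟩
  have hcard : Fintype.card (Fin 2) = Module.finrank ℝ ℂ := by
    simp [Complex.finrank_real_complex]
  set B := basisOfLinearIndependentOfCardEqFinrank hvw hcard with hB
  have hrepr : (B.repr z 0) • v + (B.repr z 1) • w = z := by
    have := B.sum_repr z
    rw [Fin.sum_univ_two] at this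
    have h0 : B 0 = v := by rw [hB, coe_basisOfLinearIndependentOfCardEqFinrank]; rfl
    have h1 : B 1 = w := by rw [hB, coe_basisOfLinearIndependentOfCardEqFinrank]; rfl
    rwa [h0, h1] at this
  set a := B.repr z 0
  set b := B.repr z 1
  refine ⟨(round a : ℤ) • v + (round b : ℤ) • w, ⟨round a, round b, rfl⟩, ?_⟩
  have hz : z - ((round a : ℤ) • v + (round b : ℤ) • w)
      = (a - round a) • v + (b - round b) • w := by
    rw [← hrepr]
    push_cast [zsmul_eq_mul, Complex.real_smul]
    ring
  rw [hz]
  calc ‖(a - round a) • v + (b - round b) • w‖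
      ≤ ‖(a - round a) • v‖ + ‖(b - round b) • w‖ := norm_add_le _ _
    _ = |a - round a| * ‖v‖ + |b - round b| * ‖w‖ := by rw [norm_smul, norm_smul]; rfl
    _ ≤ (1/2) * ‖v‖ + (1/2) * ‖w‖ := by
        gcongr <;> [exact abs_sub_round a; exact abs_sub_round b]
    _ ≤ (‖v‖ + ‖w‖) / 2 + ε := by nlinarith [norm_nonneg v, norm_nonneg w, hε]

lemma latt_dense_dir (v w : ℂ) (hvw : LinearIndependent ℝ ![v, w]) (ζ : ℂ) (hζ : ‖ζ‖ = 1)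
    (γ : ℝ) (hγ : 0 < γ) :
    ∃ u ∈ latt v w, u ≠ 0 ∧ ‖u / (‖u‖ : ℂ) - ζ‖ < γ := by
  -- span is everything
  have hspan : Submodule.span ℝ {v, w} = ⊤ := by
    have := hvw.span_eq_top_of_card_eq_finrank (by simp [Complex.finrank_real_complex])
    rwa [show Set.range ![v, w] = {v, w} by
      ext x; simp [Matrix.range_cons, Matrix.range_empty]; tauto] at this
  obtain ⟨a, b, hab⟩ := Submodule.mem_span_pair.mp (hspan ▸ Submodule.mem_top : ζ ∈ _)
  set γ' := min γ (1/2) with hγ'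
  have hγ'0 : 0 < γ' := lt_min hγ (by norm_num)
  -- continuity
  set G : ℝ × ℝ → ℂ := fun p => (p.1 • v + p.2 • w) / (‖p.1 • v + p.2 • w‖ : ℂ) with hG
  have hne : a • v + b • w ≠ 0 := by
    rw [hab]; intro h; rw [h] at hζ; simp at hζ
  have hcont : ContinuousAt G (a, b) := by
    apply ContinuousAt.div
    · fun_prop
    · have : Continuous (fun p : ℝ × ℝ => ((‖p.1 • v + p.2 • w‖ : ℝ) : ℂ)) := by fun_prop
      exact this.continuousAt
    · simpa using hne
  have hGab : G (a, b) = ζ := by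
    simp only [hG, hab, hζ]
    norm_num
  rw [Metric.continuousAt_iff] at hcont
  obtain ⟨δ, hδ0, hδ⟩ := hcont γ' hγ'0
  obtain ⟨q₁, hq₁⟩ := exists_rat_near a (half_pos hδ0)
  obtain ⟨q₂, hq₂⟩ := exists_rat_near b (half_pos hδ0)
  have hdist : dist ((q₁ : ℝ), (q₂ : ℝ)) (a, b) < δ := by
    rw [Prod.dist_eq]
    apply max_lt <;> rw [Real.dist_eq] <;> rw [abs_sub_comm] <;> linarith [hq₁, hq₂]
  have hGq := hδ hdist
  rw [hGab] at hGq
  set rv : ℂ := (q₁ : ℝ) • v + (q₂ : ℝ) • w with hrv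
  have hrvne : rv ≠ 0 := by
    intro h
    rw [hG] at hGq
    simp only [dist_eq_norm] at hGq
    rw [show ((q₁:ℝ), (q₂:ℝ)).1 • v + ((q₁:ℝ), (q₂:ℝ)).2 • w = rv from rfl, h] at hGq
    simp [hζ] at hGq
    have : γ' ≤ 1/2 := min_le_right _ _
    linarith
  -- integral vector
  set u : ℂ := (q₁.num * q₂.den : ℤ) • v + (q₂.num * q₁.den : ℤ) • w with hu
  set c : ℝ := ((q₁.den * q₂.den : ℕ) : ℝ) with hcdef
  have hcpos : (0:ℝ) < c := by
    rw [hcdef]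
    exact_mod_cast Nat.mul_pos q₁.pos q₂.pos
  have d1 : (q₁.den : ℂ) ≠ 0 := Nat.cast_ne_zero.mpr q₁.den_nz
  have d2 : (q₂.den : ℂ) ≠ 0 := Nat.cast_ne_zero.mpr q₂.den_nz
  have hc : u = (c : ℂ) * rv := by
    rw [hu, hrv, hcdef]
    push_cast [zsmul_eq_mul, Complex.real_smul, Rat.cast_def]
    field_simp
  have hcC : (c : ℂ) ≠ 0 := by exact_mod_cast hcpos.ne'
  have hune : u ≠ 0 := by rw [hc]; exact mul_ne_zero hcC hrvne
  have hdiv : u / (‖u‖ : ℂ) = rv / (‖rv‖ : ℂ) := by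
    rw [hc, norm_mul, Complex.norm_real, Real.norm_eq_abs, abs_of_pos hcpos]
    push_cast
    rw [mul_div_mul_left _ _ hcC]
  refine ⟨u, ⟨_, _, hu⟩, hune, ?_⟩
  rw [hdiv]
  have hGq1 : G ((q₁:ℝ), (q₂:ℝ)) = rv / (‖rv‖ : ℂ) := rfl
  rw [← hGq1]
  calc ‖G ((q₁:ℝ), (q₂:ℝ)) - ζ‖ = dist (G ((q₁:ℝ), (q₂:ℝ))) ζ := (dist_eq_norm _ _).symm
    _ < γ' := hGq
    _ ≤ γ := min_le_left _ _

lemma sq_sub_nonneg' {x y : ℝ} (h0 : 0 ≤ x) (hxy : x ≤ y) : 0 ≤ y^2 - x^2 := by nlinarith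

lemma boundA' {ρ ε D h : ℝ} (hε : 0 < ε) (hεD : ε ≤ D) (h3 : 3*D + ε ≤ ρ)
    (hh : ρ - 3*D ≤ h) : (ρ-ε)^2 - h^2 ≤ 6*D*ρ := by
  have h1 : (0:ℝ) ≤ (h - (ρ - 3*D)) * (h + (ρ - 3*D)) :=
    mul_nonneg (by linarith) (by linarith)
  nlinarith [mul_le_mul_of_nonneg_left (show ε ≤ ρ by linarith) hε.le]

lemma boundB' {ρ ε D h : ℝ} (hε : 0 < ε) (hεD : ε ≤ D) (h3 : 3*D + ε ≤ ρ)
    (hh : ρ - 3*D ≤ h) : (ρ+ε)^2 - h^2 ≤ 8*D*ρ := by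
  have h1 : (0:ℝ) ≤ (h - (ρ - 3*D)) * (h + (ρ - 3*D)) :=
    mul_nonneg (by linarith) (by linarith)
  nlinarith [mul_le_mul_of_nonneg_left (show ε ≤ ρ by linarith) hε.le]

set_option maxHeartbeats 1000000 in
lemma sector_pt (v w : ℂ) (hvw : LinearIndependent ℝ ![v, w]) (ε : ℝ) (hε : 0 < ε)
    (D : ℝ) (hεD : ε ≤ D) (hD : 0 < D) (hcov : ∀ z : ℂ, ∃ l ∈ latt v w, ‖z - l‖ ≤ D)
    (κ : ℝ) (hκ : 0 < κ) (η₀ : ℂ) (hη₀ : ‖η₀‖ = 1) :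
    ∃ r : ℝ, 1 ≤ r ∧ ∀ ρ : ℝ, r ≤ ρ → ∃ l ∈ latt v w, l ≠ 0 ∧ |‖l‖ - ρ| < ε ∧
      ‖l / (‖l‖ : ℂ) - η₀‖ ≤ κ / 2 := by
  obtain ⟨q, hqmem, hqne, hqdir⟩ := latt_dense_dir v w hvw (-(Complex.I * η₀))
    (by rw [norm_neg, norm_mul, Complex.norm_I, one_mul, hη₀]) (κ/8) (by positivity)
  set V : ℝ := ‖q‖ with hV
  have hV0 : 0 < V := norm_pos_iff.mpr hqne
  set μ : ℂ := q / (V : ℂ) with hμdef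
  have hμ : ‖μ‖ = 1 := by
    rw [hμdef, norm_div, Complex.norm_real, Real.norm_eq_abs, abs_of_pos hV0, ← hV,
      div_self hV0.ne']
  have hμζ : ‖μ - (-(Complex.I * η₀))‖ < κ/8 := hqdir
  have hcm : (starRingEnd ℂ) μ * μ = 1 := by
    rw [mul_comm, Complex.mul_conj, Complex.normSq_eq_norm_sq, hμ]
    norm_num
  have hVC : (V : ℂ) ≠ 0 := by simpa using hV0.ne'
  have hqV : q = (V : ℂ) * μ := by
    rw [hμdef, ← mul_div_assoc, mul_div_cancel_left₀ _ hVC]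
  set K1 : ℝ := Real.sqrt (6*D) with hK1
  set K2 : ℝ := Real.sqrt (8*D) with hK2
  have hK10 : 0 ≤ K1 := Real.sqrt_nonneg _
  have hK20 : 0 ≤ K2 := Real.sqrt_nonneg _
  set C : ℝ := 2*V*K1 + V^2 + 1 with hC
  have hC0 : 0 < C := by positivity
  have hs1 : 0 ≤ (C/(4*ε))^2 := sq_nonneg _
  have hs2 : 0 ≤ (16*(K2 + 4*D)/(3*κ))^2 := sq_nonneg _
  refine ⟨1 + (3*D + ε) + (C/(4*ε))^2 + (16*(K2 + 4*D)/(3*κ))^2,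
    by linarith, fun ρ hρ => ?_⟩
  have hρ1 : 1 ≤ ρ := by linarith
  have hρ0 : 0 < ρ := by linarith
  have hρ2 : 3*D + ε + 1 ≤ ρ := by linarith
  set S : ℝ := Real.sqrt ρ with hS
  have hS0 : 0 < S := Real.sqrt_pos.mpr hρ0
  have hS1 : 1 ≤ S := by
    rw [hS, show (1:ℝ) = Real.sqrt 1 from (Real.sqrt_one).symm]
    exact Real.sqrt_le_sqrt (by linarith)
  have hSS : S * S = ρ := Real.mul_self_sqrt hρ0.le
  have hSC : C/(4*ε) ≤ S := by
    calc C/(4*ε) ≤ |C/(4*ε)| := le_abs_self _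
      _ = Real.sqrt ((C/(4*ε))^2) := (Real.sqrt_sq_eq_abs _).symm
      _ ≤ S := Real.sqrt_le_sqrt (by linarith)
  have hSK : 16*(K2 + 4*D)/(3*κ) ≤ S := by
    calc 16*(K2 + 4*D)/(3*κ) ≤ |16*(K2 + 4*D)/(3*κ)| := le_abs_self _
      _ = Real.sqrt ((16*(K2 + 4*D)/(3*κ))^2) := (Real.sqrt_sq_eq_abs _).symm
      _ ≤ S := Real.sqrt_le_sqrt (by linarith)
  -- base lattice point near (ρ - 2D) * I * μ
  obtain ⟨l₀, hl₀mem, hl₀⟩ := hcov (((ρ - 2*D : ℝ) : ℂ) * (Complex.I * μ))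
  set z₀ : ℂ := (starRingEnd ℂ) μ * l₀ with hz₀def
  set e : ℝ := z₀.re with hedef
  set h : ℝ := z₀.im with hhdef
  have hz₀ : ‖z₀ - ((ρ - 2*D : ℝ) : ℂ) * Complex.I‖ ≤ D := by
    have hid : z₀ - ((ρ - 2*D : ℝ) : ℂ) * Complex.I
        = (starRingEnd ℂ) μ * (l₀ - ((ρ - 2*D : ℝ) : ℂ) * (Complex.I * μ)) := by
      rw [hz₀def]
      linear_combination (((ρ - 2*D : ℝ) : ℂ) * Complex.I) * hcm
    rw [hid, norm_mul, RCLike.norm_conj, hμ, one_mul, norm_sub_rev]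
    exact hl₀
  have he : |e| ≤ D := by
    have heq : (z₀ - ((ρ - 2*D : ℝ) : ℂ) * Complex.I).re = e := by
      simp [Complex.sub_re, Complex.mul_re, hedef]
    calc |e| = |(z₀ - ((ρ - 2*D : ℝ) : ℂ) * Complex.I).re| := by rw [heq]
      _ ≤ ‖z₀ - ((ρ - 2*D : ℝ) : ℂ) * Complex.I‖ := by
          exact Complex.abs_re_le_norm _
      _ ≤ D := hz₀
  have hh : |h - (ρ - 2*D)| ≤ D := by
    have heq : (z₀ - ((ρ - 2*D : ℝ) : ℂ) * Complex.I).im = h - (ρ - 2*D) := by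
      simp [Complex.sub_im, Complex.mul_im, hhdef]
    calc |h - (ρ - 2*D)| = |(z₀ - ((ρ - 2*D : ℝ) : ℂ) * Complex.I).im| := by rw [heq]
      _ ≤ ‖z₀ - ((ρ - 2*D : ℝ) : ℂ) * Complex.I‖ := by
          exact Complex.abs_im_le_norm _
      _ ≤ D := hz₀
  have hhl : ρ - 3*D ≤ h := by have := abs_le.mp hh; linarith [this.1]
  have hhu : h ≤ ρ - D := by have := abs_le.mp hh; linarith [this.2]
  have hh0 : 0 < h := by linarith
  -- window
  set A : ℝ := (ρ - ε)^2 - h^2 with hA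
  set B : ℝ := (ρ + ε)^2 - h^2 with hB
  have hρε : 0 < ρ - ε := by linarith
  have hA0 : 0 ≤ A := sq_sub_nonneg' hh0.le (by linarith)
  have hB0 : 0 ≤ B := sq_sub_nonneg' hh0.le (by linarith)
  have hsqA : Real.sqrt A ≤ K1 * S := by
    rw [hK1, hS, ← Real.sqrt_mul (by positivity)]
    exact Real.sqrt_le_sqrt (boundA' hε hεD (by linarith) hhl)
  have hsqB : Real.sqrt B ≤ K2 * S := by
    rw [hK2, hS, ← Real.sqrt_mul (by positivity)]
    exact Real.sqrt_le_sqrt (boundB' hε hεD (by linarith) hhl)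
  have hsA0 : 0 ≤ Real.sqrt A := Real.sqrt_nonneg _
  have hsAsq : Real.sqrt A ^ 2 = A := Real.sq_sqrt hA0
  have hwin : Real.sqrt A + V < Real.sqrt B := by
    have h1 : C ≤ 4*ε*S := by
      rw [div_le_iff₀ (by positivity)] at hSC; linarith
    have hCS : C * S ≤ 4*ε*ρ := by
      calc C * S ≤ (4*ε*S) * S := mul_le_mul_of_nonneg_right h1 hS0.le
        _ = 4*ε*ρ := by rw [mul_assoc, hSS]
    have h2a : 2*V*Real.sqrt A ≤ 2*V*(K1*S) :=
      mul_le_mul_of_nonneg_left hsqA (by positivity)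
    have h2b : V^2 ≤ V^2 * S := le_mul_of_one_le_right (sq_nonneg V) hS1
    have h2c : C * S = 2*V*(K1*S) + V^2*S + S := by rw [hC]; ring
    have hsum : (Real.sqrt A + V)^2 < B := by
      have expand : (Real.sqrt A + V)^2 = A + (2*V*Real.sqrt A + V^2) := by
        rw [add_sq, hsAsq]; ring
      have hBA : B = A + 4*ε*ρ := by rw [hA, hB]; ring
      rw [expand, hBA]
      have : 2*V*Real.sqrt A + V^2 + 1 ≤ C * S := by rw [h2c]; linarith
      linarith
    calc Real.sqrt A + V = Real.sqrt ((Real.sqrt A + V)^2) := by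
          rw [Real.sqrt_sq (by positivity)]
      _ < Real.sqrt B := Real.sqrt_lt_sqrt (by positivity) hsum
  -- choose the step
  set j : ℤ := ⌊(Real.sqrt A - e) / V⌋ + 1 with hj
  set t : ℝ := e + (j:ℝ) * V with ht
  have ht1 : Real.sqrt A < t := by
    have h1 := Int.lt_floor_add_one ((Real.sqrt A - e) / V)
    rw [div_lt_iff₀ hV0] at h1
    have : ((⌊(Real.sqrt A - e) / V⌋ : ℝ) + 1) * V = (j:ℝ) * V := by
      rw [hj]; push_cast; ring
    rw [this] at h1
    rw [ht]; linarith
  have ht2 : t ≤ Real.sqrt A + V := by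
    have h1 := Int.floor_le ((Real.sqrt A - e) / V)
    rw [le_div_iff₀ hV0] at h1
    have h2 : (j:ℝ) * V = (⌊(Real.sqrt A - e) / V⌋ : ℝ) * V + V := by
      rw [hj]; push_cast; ring
    rw [ht, h2]; linarith
  have ht0 : 0 < t := lt_of_le_of_lt hsA0 ht1
  refine ⟨l₀ + j • q, latt_add_zsmul v w hl₀mem hqmem j, ?_⟩
  set l : ℂ := l₀ + j • q with hldef
  have hcq : (starRingEnd ℂ) μ * q = (V:ℂ) := by
    calc (starRingEnd ℂ) μ * q = (V:ℂ) * ((starRingEnd ℂ) μ * μ) := by rw [hqV]; ring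
      _ = (V:ℂ) := by rw [hcm, mul_one]
  have hξ : (starRingEnd ℂ) μ * l = z₀ + (((j:ℝ) * V : ℝ) : ℂ) := by
    rw [hldef, zsmul_eq_mul, hz₀def]
    push_cast
    linear_combination ((j:ℤ):ℂ) * hcq
  set ξ : ℂ := z₀ + (((j:ℝ) * V : ℝ) : ℂ) with hξdef
  have hξre : ξ.re = t := by simp [hξdef, ht, hedef]
  have hξim : ξ.im = h := by simp [hξdef, hhdef]
  have hnl : ‖l‖ = ‖ξ‖ := by rw [← hξ, norm_mul, RCLike.norm_conj, hμ, one_mul]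
  have hl2 : ‖l‖^2 = t^2 + h^2 := by
    rw [hnl, Complex.sq_norm, Complex.normSq_apply, hξre, hξim]
    ring
  have htB : t < Real.sqrt B := lt_of_le_of_lt ht2 hwin
  have hlb : ρ - ε < ‖l‖ := by
    have h1 : A < t^2 := by
      have := pow_lt_pow_left₀ ht1 hsA0 (two_ne_zero)
      rwa [hsAsq] at this
    have h2 : (ρ - ε)^2 < ‖l‖^2 := by rw [hl2]; rw [hA] at h1; linarith
    exact lt_of_pow_lt_pow_left₀ 2 (norm_nonneg l) h2
  have hub : ‖l‖ < ρ + ε := by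
    have h1 : t^2 < B := by
      have := pow_lt_pow_left₀ htB ht0.le (two_ne_zero)
      rwa [Real.sq_sqrt hB0] at this
    have h2 : ‖l‖^2 < (ρ + ε)^2 := by rw [hl2]; rw [hB] at h1; linarith
    exact lt_of_pow_lt_pow_left₀ 2 (by positivity) h2
  have hnl0 : 0 < ‖l‖ := by linarith
  have hlne : l ≠ 0 := by rw [← norm_pos_iff]; linarith
  refine ⟨hlne, abs_lt.mpr ⟨by linarith, by linarith⟩, ?_⟩
  -- direction estimate
  have hlμ : l = μ * ξ := by
    have hinv : μ * ((starRingEnd ℂ) μ * l) = l := by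
      rw [← mul_assoc, mul_comm μ, hcm, one_mul]
    rw [← hinv, hξ]
  have hhle : h ≤ ‖l‖ := by
    have h1 : h^2 ≤ ‖l‖^2 := by rw [hl2]; linarith [sq_nonneg t]
    exact le_of_pow_le_pow_left₀ (two_ne_zero) (norm_nonneg l) h1
  have hkey : ‖ξ - ((‖l‖:ℝ) : ℂ) * Complex.I‖ ≤ (K2 + 4*D) * S := by
    have hre2 : (ξ - ((‖l‖:ℝ) : ℂ) * Complex.I).re = t := by
      simp [Complex.sub_re, Complex.mul_re, hξre]
    have him2 : (ξ - ((‖l‖:ℝ) : ℂ) * Complex.I).im = h - ‖l‖ := by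
      simp [Complex.sub_im, Complex.mul_im, hξim]
    have hDS : 4*D ≤ 4*D*S := le_mul_of_one_le_right (by positivity) hS1
    calc ‖ξ - ((‖l‖:ℝ) : ℂ) * Complex.I‖
        ≤ |(ξ - ((‖l‖:ℝ) : ℂ) * Complex.I).re| + |(ξ - ((‖l‖:ℝ) : ℂ) * Complex.I).im| := by
          exact Complex.norm_le_abs_re_add_abs_im _
      _ = t + (‖l‖ - h) := by
          rw [hre2, him2, abs_of_pos ht0, abs_of_nonpos (by linarith)]; ring
      _ ≤ K2 * S + 4*D*S := by linarith [htB.le.trans hsqB]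
      _ = (K2 + 4*D) * S := by ring
  have hdir1 : ‖ξ / ((‖l‖:ℝ) : ℂ) - Complex.I‖ ≤ 3*κ/8 := by
    have hlC : (((‖l‖:ℝ)) : ℂ) ≠ 0 := by simpa using hnl0.ne'
    have heq : ξ / ((‖l‖:ℝ) : ℂ) - Complex.I
        = (ξ - ((‖l‖:ℝ) : ℂ) * Complex.I) / ((‖l‖:ℝ) : ℂ) := by
      rw [sub_div, mul_div_cancel_left₀ _ hlC]
    rw [heq, norm_div, Complex.norm_real, Real.norm_eq_abs, abs_of_pos hnl0,
      div_le_iff₀ hnl0]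
    have hρl : ρ/2 ≤ ‖l‖ := by linarith
    have h1 : K2 + 4*D ≤ (3*κ/16) * S := by
      rw [div_le_iff₀ (by positivity)] at hSK; linarith
    have hstep : (K2 + 4*D) * S ≤ (3*κ/8) * (ρ/2) := by
      calc (K2 + 4*D) * S ≤ ((3*κ/16) * S) * S := mul_le_mul_of_nonneg_right h1 hS0.le
        _ = (3*κ/16) * ρ := by rw [mul_assoc, hSS]
        _ = (3*κ/8) * (ρ/2) := by ring
    calc ‖ξ - ((‖l‖:ℝ) : ℂ) * Complex.I‖ ≤ (K2 + 4*D) * S := hkey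
      _ ≤ (3*κ/8) * (ρ/2) := hstep
      _ ≤ 3*κ/8 * ‖l‖ := mul_le_mul_of_nonneg_left hρl (by positivity)
  have hsplit : l / ((‖l‖:ℝ) : ℂ) - η₀
      = μ * (ξ / ((‖l‖:ℝ) : ℂ) - Complex.I) + Complex.I * (μ - (-(Complex.I * η₀))) := by
    rw [hlμ]
    have hIs : Complex.I * (μ - (-(Complex.I * η₀))) = Complex.I * μ - η₀ := by
      rw [mul_sub, mul_neg, ← mul_assoc, Complex.I_mul_I]; ring
    rw [hIs, mul_sub, mul_div_assoc]
    ring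
  calc ‖l / ((‖l‖:ℝ) : ℂ) - η₀‖
      = ‖μ * (ξ / ((‖l‖:ℝ) : ℂ) - Complex.I) + Complex.I * (μ - (-(Complex.I * η₀)))‖ := by
        rw [hsplit]
    _ ≤ ‖μ * (ξ / ((‖l‖:ℝ) : ℂ) - Complex.I)‖ + ‖Complex.I * (μ - (-(Complex.I * η₀)))‖ :=
        norm_add_le _ _
    _ = ‖ξ / ((‖l‖:ℝ) : ℂ) - Complex.I‖ + ‖μ - (-(Complex.I * η₀))‖ := by
        rw [norm_mul, norm_mul, hμ, Complex.norm_I, one_mul, one_mul]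
    _ ≤ 3*κ/8 + κ/8 := by linarith [hμζ.le, hdir1]
    _ = κ/2 := by ring

/-- bound on the argument of a unit complex number in terms of distance to 1 -/
lemma arg_le_of_unit {z : ℂ} (hz : ‖z‖ = 1) : |z.arg| ≤ Real.pi / 2 * ‖z - 1‖ := by
  have hz0 : z ≠ 0 := by intro h; rw [h] at hz; simp at hz
  have hre : z.re = Real.cos z.arg := by
    have h1 := Complex.cos_arg hz0
    rw [hz, div_one] at h1
    exact h1.symm
  have hsq : z.re * z.re + z.im * z.im = 1 := by
    have := Complex.sq_norm z
    rw [hz, Complex.normSq_apply] at this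
    linarith [this]
  have h2 : ‖z - 1‖^2 = 2 - 2*Real.cos z.arg := by
    rw [Complex.sq_norm, Complex.normSq_apply, Complex.sub_re,
      Complex.sub_im, Complex.one_re, Complex.one_im, ← hre]
    linear_combination hsq
  have hJ := Real.cos_le_one_sub_mul_cos_sq (abs_arg_le_pi z)
  have hπ2 : (0:ℝ) < Real.pi^2 := by positivity
  have h6 : 2/Real.pi^2 * z.arg^2 ≤ 1 - Real.cos z.arg := by linarith [hJ]
  have h7 := mul_le_mul_of_nonneg_left h6 hπ2.le
  have key : Real.pi^2 * (2/Real.pi^2 * z.arg^2) = 2*z.arg^2 := by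
    field_simp
  rw [key] at h7
  have h8 : Real.pi^2 * ‖z-1‖^2 = Real.pi^2 * (2 - 2*Real.cos z.arg) := by rw [h2]
  have h5 : z.arg^2 ≤ (Real.pi/2 * ‖z-1‖)^2 := by
    have hexp : (Real.pi/2 * ‖z-1‖)^2 = Real.pi^2 * ‖z-1‖^2 / 4 := by ring
    rw [hexp, h8]
    have : Real.pi^2 * (1 - Real.cos z.arg) = Real.pi^2 - Real.pi^2 * Real.cos z.arg := by
      ring
    rw [this] at h7
    have h9 : Real.pi^2 * (2 - 2*Real.cos z.arg) / 4
        = (Real.pi^2 - Real.pi^2 * Real.cos z.arg) / 2 := by ring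
    rw [h9]
    linarith
  calc |z.arg| = Real.sqrt (z.arg^2) := (Real.sqrt_sq_eq_abs _).symm
    _ ≤ Real.sqrt ((Real.pi/2 * ‖z-1‖)^2) := Real.sqrt_le_sqrt h5
    _ = Real.pi/2 * ‖z-1‖ := by
        rw [Real.sqrt_sq_eq_abs, _root_.abs_of_nonneg (by positivity)]

lemma sector_unif (v w : ℂ) (hvw : LinearIndependent ℝ ![v, w]) (ε : ℝ) (hε : 0 < ε)
    (κ : ℝ) (hκ : 0 < κ) :
    ∃ r : ℝ, 1 ≤ r ∧ ∀ η : ℂ, ‖η‖ = 1 → ∀ ρ : ℝ, r ≤ ρ →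
      ∃ l ∈ latt v w, l ≠ 0 ∧ |‖l‖ - ρ| < ε ∧ ‖l / (‖l‖ : ℂ) - η‖ ≤ κ := by
  obtain ⟨D, hεD, hD0, hcov⟩ := latt_cover v w hvw ε hε
  have hcomp := isCompact_sphere (0:ℂ) 1
  have hcover : Metric.sphere (0:ℂ) 1 ⊆
      ⋃ η₀ : Metric.sphere (0:ℂ) 1, Metric.ball (η₀:ℂ) (κ/2) := by
    intro x hx
    exact Set.mem_iUnion.mpr ⟨⟨x, hx⟩, by simp [Metric.mem_ball]; positivity⟩
  obtain ⟨T, hT⟩ := hcomp.elim_finite_subcover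
    (fun η₀ : Metric.sphere (0:ℂ) 1 => Metric.ball (η₀:ℂ) (κ/2))
    (fun _ => Metric.isOpen_ball) hcover
  choose rfun hr1 hrall using fun η₀ : Metric.sphere (0:ℂ) 1 =>
    sector_pt v w hvw ε hε D hεD hD0 hcov κ hκ η₀
      (by rw [← mem_sphere_zero_iff_norm]; exact η₀.2)
  have hsum0 : 0 ≤ ∑ η₀ ∈ T, rfun η₀ :=
    Finset.sum_nonneg (fun i _ => le_trans zero_le_one (hr1 i))
  refine ⟨1 + ∑ η₀ ∈ T, rfun η₀, by linarith, fun η hη ρ hρ => ?_⟩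
  have hηs : η ∈ Metric.sphere (0:ℂ) 1 := mem_sphere_zero_iff_norm.mpr hη
  obtain ⟨i, hiT, hi⟩ := Set.mem_iUnion₂.mp (hT hηs)
  have hri : rfun i ≤ ρ := by
    have : rfun i ≤ ∑ η₀ ∈ T, rfun η₀ :=
      Finset.single_le_sum (fun j _ => le_trans zero_le_one (hr1 j)) hiT
    linarith
  obtain ⟨l, hlmem, hlne, hldist, hldir⟩ := hrall i ρ hri
  refine ⟨l, hlmem, hlne, hldist, ?_⟩
  have hdi : ‖(i:ℂ) - η‖ < κ/2 := by
    rw [Metric.mem_ball, dist_comm, dist_eq_norm] at hi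
    exact hi
  calc ‖l / (‖l‖ : ℂ) - η‖ = ‖(l / (‖l‖ : ℂ) - (i:ℂ)) + ((i:ℂ) - η)‖ := by ring_nf
    _ ≤ ‖l / (‖l‖ : ℂ) - (i:ℂ)‖ + ‖(i:ℂ) - η‖ := norm_add_le _ _
    _ ≤ κ/2 + κ/2 := by
        have := hldir
        linarith [hdi.le]
    _ = κ := by ring

lemma arc_good (v w : ℂ) (hvw : LinearIndependent ℝ ![v, w]) (ε : ℝ) (hε : 0 < ε)
    (c δ : ℝ) (hδ : 0 < δ) :
    ∃ r : ℝ, 1 ≤ r ∧ ∀ x : ℂ, r ≤ ‖x‖ → ∃ θ ∈ Icc c (c + δ),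
      ∃ y ∈ fattened (latt v w) ε, x = rot θ y := by
  set δ' : ℝ := min δ 1 with hδ'def
  have hδ'0 : 0 < δ' := lt_min hδ one_pos
  have hδ'δ : δ' ≤ δ := min_le_left _ _
  set κ : ℝ := δ' / Real.pi with hκdef
  have hκ0 : 0 < κ := by
    apply div_pos hδ'0 Real.pi_pos
  obtain ⟨r, hr1, hr⟩ := sector_unif v w hvw ε hε κ hκ0
  refine ⟨r, hr1, fun x hx => ?_⟩
  have hx0 : (0:ℝ) < ‖x‖ := by linarith
  have hxne : x ≠ 0 := norm_pos_iff.mp hx0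
  have hxC : ((‖x‖ : ℝ) : ℂ) ≠ 0 := by
    simpa using hx0.ne'
  set a : ℝ := c + δ'/2 with hadef
  set η : ℂ := Complex.exp (((-a : ℝ) : ℂ) * Complex.I) * (x / (‖x‖ : ℂ)) with hηdef
  have hη1 : ‖η‖ = 1 := by
    rw [hηdef, norm_mul, norm_div, Complex.norm_real, Real.norm_eq_abs, abs_of_pos hx0]
    rw [show ((-a : ℝ) : ℂ) * Complex.I = ((-a : ℝ) : ℂ) * Complex.I from rfl]
    rw [Complex.norm_exp_ofReal_mul_I,
      one_mul, div_self hx0.ne']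
  obtain ⟨l, hlmem, hlne, hldist, hldir⟩ := hr η hη1 ‖x‖ hx
  have hl0 : (0:ℝ) < ‖l‖ := norm_pos_iff.mpr hlne
  have hlC : ((‖l‖ : ℝ) : ℂ) ≠ 0 := by simpa using hl0.ne'
  set μl : ℂ := l / (‖l‖ : ℂ) with hμldef
  have hμl1 : ‖μl‖ = 1 := by
    rw [hμldef, norm_div, Complex.norm_real, Real.norm_eq_abs, abs_of_pos hl0,
      div_self hl0.ne']
  have hμlconj : μl * (starRingEnd ℂ) μl = 1 := by
    rw [Complex.mul_conj, Complex.normSq_eq_norm_sq, hμl1]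
    norm_num
  set z : ℂ := (starRingEnd ℂ) μl * η with hzdef
  have hz1 : ‖z‖ = 1 := by
    rw [hzdef, norm_mul, RCLike.norm_conj, hμl1, hη1, one_mul]
  have hzsub : ‖z - 1‖ ≤ κ := by
    have hid : z - 1 = (starRingEnd ℂ) μl * (η - μl) := by
      rw [hzdef]
      linear_combination hμlconj
    rw [hid, norm_mul, RCLike.norm_conj, hμl1, one_mul, norm_sub_rev]
    exact hldir
  have hφ : |z.arg| ≤ δ'/2 := by
    have h1 := arg_le_of_unit hz1
    have h2 : Real.pi/2 * ‖z - 1‖ ≤ Real.pi/2 * κ :=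
      mul_le_mul_of_nonneg_left hzsub (by positivity)
    have h3 : Real.pi/2 * κ = δ'/2 := by
      rw [hκdef]
      field_simp
    linarith
  set θ : ℝ := a + z.arg with hθdef
  have hθmem : θ ∈ Icc c (c + δ) := by
    have := abs_le.mp hφ
    constructor
    · rw [hθdef, hadef]; linarith [this.1]
    · rw [hθdef, hadef]; linarith [this.2]
  -- the rotation identity
  have hexpz : Complex.exp (((z.arg : ℝ) : ℂ) * Complex.I) = z := by
    have h1 := Complex.norm_mul_exp_arg_mul_I z
    rw [hz1, Complex.ofReal_one, one_mul] at h1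
    exact h1
  have hEθ : Complex.exp (((θ : ℝ) : ℂ) * Complex.I)
      = (x / (‖x‖ : ℂ)) * (starRingEnd ℂ) μl := by
    have hsplitθ : ((θ : ℝ) : ℂ) * Complex.I
        = ((a : ℝ) : ℂ) * Complex.I + ((z.arg : ℝ) : ℂ) * Complex.I := by
      rw [hθdef]; push_cast; ring
    rw [hsplitθ, Complex.exp_add, hexpz, hzdef, hηdef]
    have hprod : Complex.exp (((a : ℝ) : ℂ) * Complex.I)
        * Complex.exp (((-a : ℝ) : ℂ) * Complex.I) = 1 := by
      rw [← Complex.exp_add]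
      have : ((a : ℝ) : ℂ) * Complex.I + ((-a : ℝ) : ℂ) * Complex.I = 0 := by
        push_cast; ring
      rw [this, Complex.exp_zero]
    linear_combination ((starRingEnd ℂ) μl * (x / (‖x‖ : ℂ))) * hprod
  set Eθ : ℂ := Complex.exp (((θ : ℝ) : ℂ) * Complex.I) with hEθdef
  have hEθne : Eθ ≠ 0 := Complex.exp_ne_zero _
  set y : ℂ := x / Eθ with hydef
  have hxy : x = rot θ y := by
    rw [rot, hydef, ← hEθdef, mul_div_cancel₀ _ hEθne]
  have hy : y = ((‖x‖ : ℝ) : ℂ) * μl := by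
    rw [hydef, div_eq_iff hEθne, hEθ]
    calc x = ((((‖x‖:ℝ):ℂ) / ((‖x‖:ℝ):ℂ)) * (μl * (starRingEnd ℂ) μl)) * x := by
          rw [div_self hxC, hμlconj, one_mul, one_mul]
      _ = ((‖x‖:ℝ):ℂ) * μl * (x / ((‖x‖:ℝ):ℂ) * (starRingEnd ℂ) μl) := by ring
  refine ⟨θ, hθmem, y, ⟨l, hlmem, ?_⟩, hxy⟩
  have hyl : y - l = (((‖x‖ - ‖l‖) / ‖l‖ : ℝ) : ℂ) * l := by
    rw [hy, hμldef]
    have habs : ((‖l‖ : ℝ) : ℂ) ≠ 0 :=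
      Complex.ofReal_ne_zero.mpr (norm_ne_zero_iff.mpr hlne)
    push_cast
    field_simp [habs]
  rw [hyl, norm_mul, Complex.norm_real, Real.norm_eq_abs, abs_div, abs_of_pos hl0,
    div_mul_cancel₀ _ hl0.ne']
  rwa [abs_sub_comm] at hldist

lemma fattened_open (Λ : Set ℂ) (ε : ℝ) : IsOpen (fattened Λ ε) := by
  have h : fattened Λ ε = ⋃ l ∈ Λ, Metric.ball l ε := by
    ext x; simp [fattened, Metric.mem_ball, dist_eq_norm]
  rw [h]
  exact isOpen_biUnion (fun _ _ => Metric.isOpen_ball)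

lemma rot_cancel (θ : ℝ) (x : ℂ) :
    Complex.exp ((θ:ℂ) * Complex.I) * (Complex.exp (-(θ:ℂ) * Complex.I) * x) = x := by
  rw [← mul_assoc, ← Complex.exp_add, show (θ:ℂ) * Complex.I + -(θ:ℂ) * Complex.I = 0 by ring,
    Complex.exp_zero, one_mul]

lemma rot_cancel' (θ : ℝ) (x : ℂ) :
    Complex.exp (-(θ:ℂ) * Complex.I) * (Complex.exp ((θ:ℂ) * Complex.I) * x) = x := by
  rw [← mul_assoc, ← Complex.exp_add, show -(θ:ℂ) * Complex.I + (θ:ℂ) * Complex.I = 0 by ring,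
    Complex.exp_zero, one_mul]

lemma rotSet_open (Λ : Set ℂ) (ε : ℝ) (θ : ℝ) : IsOpen (rot θ '' fattened Λ ε) := by
  have himg : rot θ '' fattened Λ ε
      = (fun x => Complex.exp (-(θ:ℂ) * Complex.I) * x) ⁻¹' (fattened Λ ε) := by
    ext x
    simp only [mem_image, mem_preimage, rot]
    constructor
    · rintro ⟨y, hy, rfl⟩
      rwa [rot_cancel']
    · intro hx
      exact ⟨Complex.exp (-(θ:ℂ) * Complex.I) * x, hx, rot_cancel θ x⟩
  rw [himg]
  exact (fattened_open Λ ε).preimage (by fun_prop)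

/-- In any nondegenerate arc `[a,b]` of angles there is a convergent sequence of angles
`θ_n → θ'` such that `Θ = {θ_n} ∪ {θ'}` is `(Λ,ε)`-good. -/
theorem good_convergent_sequence_in_arc (Λ : Set ℂ) (hΛ : IsLatticeC Λ)
    (ε : ℝ) (hε : 0 < ε) (a b : ℝ) (hab : a < b) :
    ∃ θ' ∈ Icc a b, ∃ f : ℕ → ℝ, (∀ n, f n ∈ Icc a b) ∧
      Tendsto f atTop (nhds θ') ∧
      IsGoodAngles Λ ε (Set.range f ∪ {θ'}) := by
  classical
  obtain ⟨v, w, hvw, hL⟩ := hΛ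
  have hLL : Λ = latt v w := hL
  -- arcs
  set δ : ℕ → ℝ := fun n => (b - a) / 2^n with hδdef
  have hδpos : ∀ n, 0 < δ n := fun n => by
    simp only [hδdef]
    exact div_pos (by linarith) (by positivity)
  have hδanti : ∀ m n : ℕ, m ≤ n → δ n ≤ δ m := fun m n hmn => by
    rw [hδdef]
    apply div_le_div_of_nonneg_left (by linarith) (by positivity)
    exact pow_le_pow_right₀ one_le_two hmn
  have hδb : ∀ n, a + δ n ≤ b := fun n => by
    have := hδanti 0 n (Nat.zero_le n)
    rw [hδdef] at *
    simp only [pow_zero] at this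
    linarith [this]
  -- radii for each arc
  have harc : ∀ n : ℕ, ∃ r : ℝ, 1 ≤ r ∧ ∀ x : ℂ, r ≤ ‖x‖ → ∃ θ ∈ Icc a (a + δ n),
      ∃ y ∈ fattened (latt v w) ε, x = rot θ y :=
    fun n => arc_good v w hvw ε hε a (δ n) (hδpos n)
  choose ar har1 har2 using harc
  -- increasing radii
  set R : ℕ → ℝ := fun n => Nat.rec (ar 0) (fun k Rk => max (ar (k+1)) (Rk + 1)) n with hRdef
  have hR0 : R 0 = ar 0 := rfl
  have hRs : ∀ n, R (n+1) = max (ar (n+1)) (R n + 1) := fun n => rfl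
  have hRar : ∀ n, ar n ≤ R n := fun n => by
    cases n with
    | zero => exact le_of_eq hR0.symm
    | succ k => rw [hRs k]; exact le_max_left _ _
  have hRmono : ∀ n, R n + 1 ≤ R (n+1) := fun n => by
    rw [hRs n]; exact le_max_right _ _
  have hRlin : ∀ n, R 0 + n ≤ R n := by
    intro n
    induction n with
    | zero => simp
    | succ k ih =>
      have := hRmono k
      push_cast
      push_cast at ih
      linarith
  -- finite subcovers of annuli
  have hcovann : ∀ n : ℕ, ∃ T : Finset {θ : ℝ // θ ∈ Icc a (a + δ n)},
      {x : ℂ | R n ≤ ‖x‖ ∧ ‖x‖ ≤ R (n+1)} ⊆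
        ⋃ i ∈ T, rot i.1 '' fattened (latt v w) ε := by
    intro n
    have hcomp : IsCompact {x : ℂ | R n ≤ ‖x‖ ∧ ‖x‖ ≤ R (n+1)} := by
      apply IsCompact.of_isClosed_subset (isCompact_closedBall (0:ℂ) (R (n+1)))
      · have : {x : ℂ | R n ≤ ‖x‖ ∧ ‖x‖ ≤ R (n+1)}
            = {x : ℂ | R n ≤ ‖x‖} ∩ {x : ℂ | ‖x‖ ≤ R (n+1)} := rfl
        rw [this]
        exact IsClosed.inter (isClosed_le continuous_const continuous_norm)
          (isClosed_le continuous_norm continuous_const)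
      · intro x hx
        rw [Metric.mem_closedBall, dist_zero_right]
        exact hx.2
    apply hcomp.elim_finite_subcover
      (fun i : {θ : ℝ // θ ∈ Icc a (a + δ n)} => rot i.1 '' fattened (latt v w) ε)
      (fun i => rotSet_open _ _ _)
    intro x hx
    obtain ⟨θ, hθ, y, hy, hxy⟩ := har2 n x (le_trans (hRar n) hx.1)
    exact Set.mem_iUnion.mpr ⟨⟨θ, hθ⟩, y, hy, hxy.symm⟩
  choose T hT using hcovann
  -- lists of angles
  set L : ℕ → List ℝ := fun n => a :: ((T n).toList.map Subtype.val) with hLdef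
  have hLmem : ∀ n, ∀ θ ∈ L n, θ ∈ Icc a (a + δ n) := by
    intro n θ hθ
    rcases List.mem_cons.mp hθ with h | h
    · rw [h]; exact ⟨le_refl a, by linarith [hδpos n]⟩
    · obtain ⟨i, _, rfl⟩ := List.mem_map.mp h
      exact i.2
  have hLlen : ∀ n, 0 < (L n).length := fun n => by
    rw [hLdef]; simp
  have hLcover : ∀ n, ∀ x : ℂ, R n ≤ ‖x‖ → ‖x‖ ≤ R (n+1) →
      ∃ θ ∈ L n, ∃ y ∈ fattened (latt v w) ε, x = rot θ y := by
    intro n x h1 h2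
    have := hT n ⟨h1, h2⟩
    obtain ⟨i, hiT, hi⟩ := Set.mem_iUnion₂.mp this
    obtain ⟨y, hy, hxy⟩ := hi
    refine ⟨i.1, ?_, y, hy, hxy.symm⟩
    rw [hLdef]
    exact List.mem_cons.mpr (Or.inr (List.mem_map.mpr ⟨i, Finset.mem_toList.mpr hiT, rfl⟩))
  -- concatenation
  set F : ℕ → List ℝ := fun n => Nat.rec [] (fun k Fk => Fk ++ L k) n with hFdef
  have hFs : ∀ n, F (n+1) = F n ++ L n := fun n => rfl
  have hFlen : ∀ n, n ≤ (F n).length := by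
    intro n
    induction n with
    | zero => simp
    | succ k ih =>
      rw [hFs k, List.length_append]
      have := hLlen k
      omega
  have hFpre : ∀ m n, m ≤ n → F m <+: F n := by
    intro m n hmn
    induction n with
    | zero => rw [Nat.le_zero.mp hmn]
    | succ k ih =>
      rcases Nat.lt_or_ge m (k+1) with h | h
      · have h1 := ih (by omega)
        rw [hFs k]
        exact h1.trans (List.prefix_append _ _)
      · have : m = k + 1 := by omega
        subst this
        exact List.prefix_rfl
  have hFmono : ∀ m n, m ≤ n → (F m).length ≤ (F n).length :=
    fun m n hmn => (hFpre m n hmn).length_le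
  set f : ℕ → ℝ := fun N => (F (N+1)).getD N a with hfdef
  have hstable : ∀ m m' N, m ≤ m' → N < (F m).length →
      (F m').getD N a = (F m).getD N a := by
    intro m m' N hmm hN
    obtain ⟨s, hs⟩ := hFpre m m' hmm
    rw [← hs, List.getD_append _ _ _ _ hN]
  -- membership of f-values in shrinking arcs
  have hmem : ∀ n N, (F n).length ≤ N → f N ∈ Icc a (a + δ n) := by
    intro n N hn
    have hNlt : N < (F (N+1)).length := lt_of_lt_of_le (Nat.lt_succ_self N) (hFlen (N+1))
    rw [hfdef]
    -- induction over m showing the claim for F m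
    suffices h : ∀ m, N < (F m).length → (F m).getD N a ∈ Icc a (a + δ n) by
      exact h (N+1) hNlt
    intro m
    induction m with
    | zero =>
      intro h
      rw [show F 0 = [] from rfl] at h
      simp at h
    | succ k ih =>
      intro hlt
      rcases Nat.lt_or_ge N (F k).length with h | h
      · rw [hFs k, List.getD_append _ _ _ _ h]
        exact ih h
      · have hnk : n ≤ k := by
          by_contra hc
          push_neg at hc
          have := hFmono (k+1) n hc
          omega
        rw [hFs k, List.getD_append_right _ _ _ _ h]
        have hidx : N - (F k).length < (L k).length := by
          rw [hFs k, List.length_append] at hlt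
          omega
        rw [List.getD_eq_getElem _ _ hidx]
        have hmem2 := hLmem k _ (List.getElem_mem hidx)
        exact ⟨hmem2.1, le_trans hmem2.2 (by linarith [hδanti n k hnk])⟩
  have hf_in : ∀ N, f N ∈ Icc a b := by
    intro N
    have := hmem 0 N (by simp [hFdef])
    exact ⟨this.1, le_trans this.2 (hδb 0)⟩
  -- elements of L n are in the range of f
  have hrange : ∀ n, ∀ θ ∈ L n, θ ∈ Set.range f := by
    intro n θ hθ
    obtain ⟨k, hk, hget⟩ := List.mem_iff_getElem.mp hθ
    set N := (F n).length + k with hNdef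
    have hNlt : N < (F (n+1)).length := by
      rw [hFs n, List.length_append]; omega
    refine ⟨N, ?_⟩
    show (F (N + 1)).getD N a = θ
    have h1 : (F (N+1)).getD N a = (F (n+1)).getD N a := by
      apply hstable (n+1) (N+1) N _ hNlt
      have : n ≤ N := le_trans (hFlen n) (by omega)
      omega
    rw [h1, hFs n, List.getD_append_right _ _ _ _ (by omega)]
    have : N - (F n).length = k := by omega
    rw [this, List.getD_eq_getElem _ _ hk]
    exact hget
  -- convergence
  have htend : Tendsto f atTop (nhds a) := by
    rw [Metric.tendsto_atTop]
    intro e he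
    obtain ⟨n, hn⟩ := pow_unbounded_of_one_lt ((b - a)/e) (by norm_num : (1:ℝ) < 2)
    have hδn : δ n < e := by
      simp only [hδdef]
      rw [div_lt_iff₀ (by positivity)]
      rw [div_lt_iff₀ he] at hn
      nlinarith [hn]
    refine ⟨(F n).length, fun N hN => ?_⟩
    have := hmem n N hN
    rw [Real.dist_eq, _root_.abs_of_nonneg (by linarith [this.1])]
    linarith [this.2]
  -- goodness
  refine ⟨a, ⟨le_refl a, hab.le⟩, f, hf_in, htend, ⟨R 0, fun x hx => ?_⟩⟩
  have hex : ∃ n, ‖x‖ ≤ R (n+1) := by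
    obtain ⟨n, hn⟩ := exists_nat_gt (‖x‖ - R 0)
    refine ⟨n, ?_⟩
    have h1 := hRlin (n+1)
    push_cast at h1
    linarith
  set n := Nat.find hex with hndef
  have hup : ‖x‖ ≤ R (n+1) := Nat.find_spec hex
  have hlow : R n ≤ ‖x‖ := by
    rcases Nat.eq_zero_or_pos n with h0 | hpos
    · rw [h0]; exact hx
    · obtain ⟨k, hk⟩ := Nat.exists_eq_succ_of_ne_zero hpos.ne'
      have hmin := Nat.find_min hex (m := k) (by omega)
      push_neg at hmin
      rw [hk]
      exact hmin.le
  obtain ⟨θ, hθL, y, hy, hxy⟩ := hLcover n x hlow hup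
  refine ⟨θ, Or.inl (hrange n θ hθL), y, ?_, hxy⟩
  rwa [hLL]
end
end

section
/- Let Λ be a full-rank lattice in ℝ^d, d ≥ 2, let s(Λ) be the length of the shortest nonzero vector of Λ, and let 0 < ε < s(Λ)/2. Then for any finite set of orthogonal matrices O₁,...,O_n, the union ⋃_{j=1}^n O_j(Λ + B_ε(0)) does not contain the complement of any ball: there exist points of arbitrarily large norm not in the union. -/
open Set

noncomputable section

set_option maxHeartbeats 1000000

/-- Finitely many rotations (orthogonal transformations) of the `ε`-fattened lattice
`Λ + B_ε(0)` in `ℝ^d`, `d ≥ 2`, with `ε` less than half the length of the shortest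
nonzero lattice vector, never cover the complement of a ball: there are points of
arbitrarily large norm left uncovered. -/
theorem finitely_many_rotations_not_enough (d n : ℕ) (hd : 2 ≤ d)
    (b : Module.Basis (Fin d) ℝ (EuclideanSpace ℝ (Fin d)))
    (Λ : Set (EuclideanSpace ℝ (Fin d)))
    (hΛ : Λ = {x | ∃ c : Fin d → ℤ, x = ∑ i, c i • b i})
    (ε : ℝ) (hε : 0 < ε)
    (hshort : ∀ x ∈ Λ, x ≠ 0 → 2 * ε < ‖x‖)
    (O : Fin n → (EuclideanSpace ℝ (Fin d) ≃ₗᵢ[ℝ] EuclideanSpace ℝ (Fin d))) :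
    ∀ R : ℝ, ∃ x : EuclideanSpace ℝ (Fin d), R ≤ ‖x‖ ∧
      ∀ j : Fin n, ¬ ∃ y : EuclideanSpace ℝ (Fin d),
        (∃ l ∈ Λ, ‖y - l‖ < ε) ∧ x = O j y := by
  subst hΛ
  intro R
  classical
  have hd0 : 0 < d := by omega
  set i0 : Fin d := ⟨0, hd0⟩ with hi0
  -- the coordinate map as a continuous linear map
  set T : EuclideanSpace ℝ (Fin d) →L[ℝ] (Fin d → ℝ) :=
    LinearMap.toContinuousLinearMap (b.equivFun.toLinearMap) with hT
  have hTapp : ∀ z, T z = b.equivFun z := fun z => rfl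
  -- coordinates of an integer combination
  have hrepr : ∀ c : Fin d → ℤ,
      b.equivFun (∑ i, c i • b i) = fun i => (c i : ℝ) := by
    intro c
    have h1 : (∑ i, c i • b i) = ∑ i, ((c i : ℝ)) • b i := by
      refine Finset.sum_congr rfl fun i _ => ?_
      exact (Int.cast_smul_eq_zsmul ℝ (c i) (b i)).symm
    rw [h1, Module.Basis.equivFun_apply, Module.Basis.repr_sum_self]
  -- existence of a (weak) minimal norm `s` with `2ε < s`
  obtain ⟨s, hs2ε, hsmin⟩ :
      ∃ s : ℝ, 2 * ε < s ∧
        ∀ l : EuclideanSpace ℝ (Fin d),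
          (∃ c : Fin d → ℤ, l = ∑ i, c i • b i) → l ≠ 0 → s ≤ ‖l‖ := by
    set K : Set (EuclideanSpace ℝ (Fin d)) :=
      {l | (∃ c : Fin d → ℤ, l = ∑ i, c i • b i) ∧ l ≠ 0 ∧ ‖l‖ ≤ 3 * ε} with hK
    have hKfin : K.Finite := by
      set N : ℤ := ⌈‖T‖ * (3 * ε)⌉ with hN
      have hbox : (Set.pi Set.univ fun _ : Fin d => Set.Icc (-N) N).Finite :=
        Set.Finite.pi fun _ => Set.finite_Icc _ _
      refine (hbox.image (fun c : Fin d → ℤ => ∑ i, c i • b i)).subset ?_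
      rintro l ⟨⟨c, rfl⟩, _, hlnorm⟩
      refine ⟨c, fun i _ => ?_, rfl⟩
      have h2 : |(c i : ℝ)| ≤ ‖T (∑ i, c i • b i)‖ := by
        have h3 : T (∑ i, c i • b i) = fun i => (c i : ℝ) := by rw [hTapp, hrepr]
        rw [h3]
        simpa using norm_le_pi_norm (fun i => (c i : ℝ)) i
      have h4 : |(c i : ℝ)| ≤ ‖T‖ * (3 * ε) := by
        calc |(c i : ℝ)| ≤ ‖T (∑ i, c i • b i)‖ := h2
          _ ≤ ‖T‖ * ‖∑ i, c i • b i‖ := T.le_opNorm _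
          _ ≤ ‖T‖ * (3 * ε) := by
              exact mul_le_mul_of_nonneg_left hlnorm (norm_nonneg T)
      have h5 : ((|c i| : ℤ) : ℝ) ≤ (N : ℝ) := by
        rw [Int.cast_abs]
        exact h4.trans (Int.le_ceil _)
      have h6 : |c i| ≤ N := by exact_mod_cast h5
      simpa [Set.mem_Icc] using abs_le.mp h6
    by_cases hKne : K.Nonempty
    · obtain ⟨l₀, hl₀K, hl₀min⟩ := Set.exists_min_image K (fun l => ‖l‖) hKfin hKne
      obtain ⟨hl₀Λ, hl₀0, hl₀3⟩ := hl₀K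
      refine ⟨‖l₀‖, hshort l₀ hl₀Λ hl₀0, ?_⟩
      intro l hlΛ hl0
      by_cases h3 : ‖l‖ ≤ 3 * ε
      · exact hl₀min l ⟨hlΛ, hl0, h3⟩
      · exact le_trans hl₀3 (le_of_not_ge h3)
    · refine ⟨3 * ε, by linarith, ?_⟩
      intro l hlΛ hl0
      by_contra h
      exact hKne ⟨l, hlΛ, hl0, le_of_not_ge fun h' => h (by linarith)⟩
  have hspos : 0 < s := by linarith
  set δ : ℝ := (s - 2 * ε) / 4 with hδ
  have hδpos : 0 < δ := by rw [hδ]; linarith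
  have hkey : ε + δ < s / 2 := by rw [hδ]; linarith
  -- approximation of any vector by a lattice vector within `C₀`
  set C₀ : ℝ := ∑ i, ‖b i‖ with hC₀
  have hC₀0 : 0 ≤ C₀ := Finset.sum_nonneg fun i _ => norm_nonneg _
  have hfract : ∀ z : EuclideanSpace ℝ (Fin d),
      ∃ c : Fin d → ℤ, ‖z - ∑ i, c i • b i‖ ≤ C₀ := by
    intro z
    set t : Fin d → ℝ := b.equivFun z with htdef
    refine ⟨fun i => ⌊t i⌋, ?_⟩
    have hz : z = ∑ i, t i • b i := (b.sum_equivFun z).symm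
    have hfl : (∑ i, (⌊t i⌋ : ℤ) • b i)
        = ∑ i, ((⌊t i⌋ : ℝ)) • b i := by
      refine Finset.sum_congr rfl fun i _ => ?_
      exact (Int.cast_smul_eq_zsmul ℝ _ (b i)).symm
    have hdiff : z - ∑ i, (⌊t i⌋ : ℤ) • b i
        = ∑ i, (t i - (⌊t i⌋ : ℝ)) • b i := by
      rw [hfl]
      conv_lhs => rw [hz]
      rw [← Finset.sum_sub_distrib]
      exact Finset.sum_congr rfl fun i _ => (sub_smul _ _ _).symm
    rw [hdiff]
    calc ‖∑ i, (t i - (⌊t i⌋ : ℝ)) • b i‖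
        ≤ ∑ i, ‖(t i - (⌊t i⌋ : ℝ)) • b i‖ :=
          norm_sum_le _ _
      _ ≤ ∑ i, ‖b i‖ := by
          refine Finset.sum_le_sum fun i _ => ?_
          rw [norm_smul, Real.norm_eq_abs]
          have h1 : (⌊t i⌋ : ℝ) ≤ t i := Int.floor_le _
          have h2 : t i < (⌊t i⌋ : ℝ) + 1 := Int.lt_floor_add_one _
          have h3 : |t i - (⌊t i⌋ : ℝ)| ≤ 1 :=
            abs_le.mpr ⟨by linarith, by linarith⟩
          calc |t i - (⌊t i⌋ : ℝ)| * ‖b i‖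
              ≤ 1 * ‖b i‖ := mul_le_mul_of_nonneg_right h3 (norm_nonneg _)
            _ = ‖b i‖ := one_mul _
  -- the big step vector `w`
  set W : ℝ := |R| + s with hW
  have hWpos : 0 < W := by
    have := abs_nonneg R
    rw [hW]; linarith
  set w : EuclideanSpace ℝ (Fin d) := EuclideanSpace.single i0 W with hw
  have hwnorm : ‖w‖ = W := by
    rw [hw, EuclideanSpace.norm_single, Real.norm_eq_abs, abs_of_pos hWpos]
  -- choose lattice approximations for all multiples of `w` rotated back
  have H : ∀ (k : ℕ) (j : Fin n),
      ∃ c : Fin d → ℤ, ‖(O j).symm ((k : ℝ) • w) - ∑ i, c i • b i‖ ≤ C₀ :=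
    fun k j => hfract _
  choose cf hcf using H
  set Vf : ℕ → (Fin n → EuclideanSpace ℝ (Fin d)) :=
    fun k j => (O j).symm ((k : ℝ) • w) - ∑ i, cf k j i • b i with hVf
  have hVmem : ∀ k, Vf k ∈ Metric.closedBall (0 : Fin n → EuclideanSpace ℝ (Fin d)) C₀ := by
    intro k
    rw [Metric.mem_closedBall, dist_zero_right]
    exact (pi_norm_le_iff_of_nonneg hC₀0).mpr fun j => hcf k j
  obtain ⟨a, -, φ, hφ, hconv⟩ :=
    (isCompact_closedBall (0 : Fin n → EuclideanSpace ℝ (Fin d)) C₀).tendsto_subseq hVmem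
  obtain ⟨N, hN⟩ := Metric.tendsto_atTop.mp hconv (δ / 2) (by linarith)
  set k1 : ℕ := φ N with hk1
  set k2 : ℕ := φ (N + 1) with hk2
  have hk12 : k1 < k2 := hφ (Nat.lt_succ_self N)
  have hclose : ∀ j, ‖Vf k2 j - Vf k1 j‖ < δ := by
    intro j
    have h1 := hN N le_rfl
    have h2 := hN (N + 1) (Nat.le_succ N)
    have hdist : dist (Vf k2) (Vf k1) < δ := by
      calc dist (Vf k2) (Vf k1) ≤ dist (Vf k2) a + dist (Vf k1) a :=
            dist_triangle_right _ _ _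
        _ < δ / 2 + δ / 2 := add_lt_add h2 h1
        _ = δ := by ring
    calc ‖Vf k2 j - Vf k1 j‖ = ‖(Vf k2 - Vf k1) j‖ := by rw [Pi.sub_apply]
      _ ≤ ‖Vf k2 - Vf k1‖ := norm_le_pi_norm _ j
      _ = dist (Vf k2) (Vf k1) := (dist_eq_norm _ _).symm
      _ < δ := hdist
  -- the simultaneous almost-period `τ`
  set τ : EuclideanSpace ℝ (Fin d) := ((k2 : ℝ) - (k1 : ℝ)) • w with hτ
  have hk21 : (1 : ℝ) ≤ (k2 : ℝ) - (k1 : ℝ) := by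
    have h1 : k1 + 1 ≤ k2 := hk12
    have h2 : ((k1 : ℝ) + 1) ≤ (k2 : ℝ) := by exact_mod_cast h1
    linarith
  have hτnorm : W ≤ ‖τ‖ := by
    rw [hτ, norm_smul, hwnorm, Real.norm_eq_abs, abs_of_nonneg (by linarith)]
    nlinarith
  -- the deep point near the origin
  set x₀ : EuclideanSpace ℝ (Fin d) := EuclideanSpace.single i0 (s / 2) with hx₀
  have hx₀norm : ‖x₀‖ = s / 2 := by
    rw [hx₀, EuclideanSpace.norm_single, Real.norm_eq_abs, abs_of_pos (by linarith)]
  refine ⟨x₀ + τ, ?_, ?_⟩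
  · -- the point is far away
    have h1 : ‖τ‖ ≤ ‖x₀ + τ‖ + ‖x₀‖ := by
      have h2 : τ = (x₀ + τ) - x₀ := by abel
      calc ‖τ‖ = ‖(x₀ + τ) - x₀‖ := by rw [← h2]
        _ ≤ ‖x₀ + τ‖ + ‖x₀‖ := norm_sub_le _ _
    have hRabs : R ≤ |R| := le_abs_self R
    rw [hx₀norm] at h1
    rw [hW] at hτnorm
    linarith
  · -- the point is uncovered
    intro j
    rintro ⟨y, ⟨l, hlΛ, hyl⟩, hxy⟩
    have hy : y = (O j).symm (x₀ + τ) := by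
      rw [hxy, LinearIsometryEquiv.symm_apply_apply]
    obtain ⟨cl, rfl⟩ := hlΛ
    -- decompose the rotated almost-period
    have hτdec : (O j).symm τ
        = (Vf k2 j - Vf k1 j) + ∑ i, (cf k2 j i - cf k1 j i) • b i := by
      have h1 : τ = (k2 : ℝ) • w - (k1 : ℝ) • w := by rw [hτ, sub_smul]
      have h2 : ∑ i, (cf k2 j i - cf k1 j i) • b i
          = (∑ i, cf k2 j i • b i) - ∑ i, cf k1 j i • b i := by
        rw [← Finset.sum_sub_distrib]
        exact Finset.sum_congr rfl fun i _ => sub_smul _ _ _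
      rw [h1, map_sub, h2, hVf]
      dsimp only
      abel
    set m : EuclideanSpace ℝ (Fin d) :=
      (∑ i, cl i • b i) - ∑ i, (cf k2 j i - cf k1 j i) • b i with hm
    have hmΛ : ∃ c : Fin d → ℤ, m = ∑ i, c i • b i := by
      refine ⟨fun i => cl i - (cf k2 j i - cf k1 j i), ?_⟩
      rw [hm, ← Finset.sum_sub_distrib]
      exact Finset.sum_congr rfl fun i _ => (sub_smul _ _ _).symm
    have hbound : ‖(O j).symm x₀ - m‖ < ε + δ := by
      have hyy : y = (O j).symm x₀
          + ((Vf k2 j - Vf k1 j) + ∑ i, (cf k2 j i - cf k1 j i) • b i) := by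
        rw [hy, map_add, hτdec]
      have h3 : (O j).symm x₀ - m
          = (y - ∑ i, cl i • b i) - (Vf k2 j - Vf k1 j) := by
        rw [hyy, hm]; abel
      rw [h3]
      calc ‖(y - ∑ i, cl i • b i) - (Vf k2 j - Vf k1 j)‖
          ≤ ‖y - ∑ i, cl i • b i‖ + ‖Vf k2 j - Vf k1 j‖ := norm_sub_le _ _
        _ < ε + δ := add_lt_add hyl (hclose j)
    by_cases hm0 : m = 0
    · rw [hm0, sub_zero, LinearIsometryEquiv.norm_map, hx₀norm] at hbound
      linarith
    · have h1 : s ≤ ‖m‖ := hsmin m hmΛ hm0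
      have h2 : ‖m‖ - ‖(O j).symm x₀‖ ≤ ‖(O j).symm x₀ - m‖ := by
        have h3 := norm_sub_norm_le m ((O j).symm x₀)
        rw [norm_sub_rev m] at h3
        exact h3
      rw [LinearIsometryEquiv.norm_map, hx₀norm] at h2
      linarith
end
end

section
/- A finite sum f = Σ_{j=1}^n f_j of continuous periodic functions on ℝ^d (each f_j periodic with respect to a full-rank lattice Λ_j) is Bohr almost periodic: for every δ > 0 the set of δ-almost periods {T ∈ ℝ^d : sup_x |f(x) - f(x-T)| ≤ δ} contains vectors of arbitrarily large norm. -/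
open Set

noncomputable section

set_option maxHeartbeats 1000000

section Helpers

variable {E : Type*} [NormedAddCommGroup E] [NormedSpace ℝ E]

lemma ap_norm_comb {d : ℕ} (r : Fin d → ℝ) (v : Fin d → E) :
    ‖∑ i, r i • v i‖ ≤ ∑ i, |r i| * ‖v i‖ := by
  refine (norm_sum_le _ _).trans (le_of_eq ?_)
  simp [norm_smul, Real.norm_eq_abs]

lemma ap_near_lattice {d : ℕ} (B : Module.Basis (Fin d) ℝ E) (x : E) :
    ∃ c : Fin d → ℤ, ‖x + ∑ i, c i • B i‖ ≤ ∑ i, ‖B i‖ := by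
  refine ⟨fun i => -⌊B.repr x i⌋, ?_⟩
  have key : x + ∑ i, (-⌊B.repr x i⌋) • B i = ∑ i, Int.fract (B.repr x i) • B i := by
    nth_rewrite 1 [← B.sum_repr x]
    rw [← Finset.sum_add_distrib]
    congr 1; funext i
    rw [← Int.cast_smul_eq_zsmul ℝ, ← add_smul]
    congr 1
    push_cast
    rw [Int.fract]; ring
  rw [key]
  refine (ap_norm_comb _ _).trans (Finset.sum_le_sum fun i _ => ?_)
  have h1 : |Int.fract (B.repr x i)| ≤ 1 :=
    abs_le.2 ⟨by linarith [Int.fract_nonneg (B.repr x i)], (Int.fract_lt_one _).le⟩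
  nlinarith [norm_nonneg (B i), abs_nonneg (Int.fract (B.repr x i))]

lemma ap_unif {d : ℕ} [FiniteDimensional ℝ E] (f : E → ℝ) (hc : Continuous f)
    (B : Module.Basis (Fin d) ℝ E)
    (hper : ∀ (x : E) (c : Fin d → ℤ), f (x + ∑ i, c i • B i) = f x)
    {ε : ℝ} (hε : 0 < ε) :
    ∃ η > 0, ∀ x s : E, ‖s‖ ≤ η → |f x - f (x - s)| ≤ ε := by
  set ρ : ℝ := ∑ i, ‖B i‖ with hρ
  have hρ0 : 0 ≤ ρ := Finset.sum_nonneg fun i _ => norm_nonneg _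
  have hK : IsCompact (Metric.closedBall (0 : E) (ρ + 1)) := isCompact_closedBall _ _
  have huc : UniformContinuousOn f (Metric.closedBall (0 : E) (ρ + 1)) :=
    hK.uniformContinuousOn_of_continuous hc.continuousOn
  obtain ⟨δ', hδ', hδ⟩ := (Metric.uniformContinuousOn_iff.mp huc) ε hε
  refine ⟨min δ' 1 / 2, by positivity, fun x s hs => ?_⟩
  obtain ⟨c, hy⟩ := ap_near_lattice B x
  set y := x + ∑ i, c i • B i with hydef
  have hs1 : ‖s‖ ≤ 1 := hs.trans (by linarith [min_le_right δ' 1])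
  have h1 : f y = f x := hper x c
  have h2 : f (y - s) = f (x - s) := by
    have : y - s = (x - s) + ∑ i, c i • B i := by rw [hydef]; abel
    rw [this, hper]
  rw [← h1, ← h2]
  have hyK : y ∈ Metric.closedBall (0 : E) (ρ + 1) := by
    simp only [Metric.mem_closedBall, dist_zero_right]; linarith
  have hysK : y - s ∈ Metric.closedBall (0 : E) (ρ + 1) := by
    simp only [Metric.mem_closedBall, dist_zero_right]
    calc ‖y - s‖ ≤ ‖y‖ + ‖s‖ := norm_sub_le _ _
      _ ≤ ρ + 1 := by linarith
  have hd : dist y (y - s) < δ' := by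
    rw [dist_eq_norm]
    simp only [sub_sub_cancel]
    calc ‖s‖ ≤ min δ' 1 / 2 := hs
      _ < δ' := by have h := min_le_left δ' 1; have h2 := min_le_right δ' 1; cases le_total δ' 1 with | inl h3 => simp [min_eq_left h3]; linarith | inr h3 => simp [min_eq_right h3]; linarith
  have := hδ y hyK (y - s) hysK hd
  rw [Real.dist_eq] at this
  exact this.le

lemma ap_pigeonhole (n d Q : ℕ) (hQ : 0 < Q) (a : Fin n → Fin d → ℝ) :
    ∃ k : ℕ, 1 ≤ k ∧ ∀ j i, ∃ c : ℤ, |(k : ℝ) * a j i - c| ≤ 1 / Q := by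
  have hQR : (0 : ℝ) < Q := by exact_mod_cast hQ
  have hbd : ∀ (k : ℕ) (j : Fin n) (i : Fin d),
      (⌊(Q : ℝ) * Int.fract ((k : ℝ) * a j i)⌋).toNat < Q := by
    intro k j i
    have h0 : (0:ℝ) ≤ (Q : ℝ) * Int.fract ((k : ℝ) * a j i) := by
      have := Int.fract_nonneg ((k : ℝ) * a j i); positivity
    have h1 : (Q : ℝ) * Int.fract ((k : ℝ) * a j i) < Q := by
      have := Int.fract_lt_one ((k : ℝ) * a j i)
      nlinarith
    have hfl : ⌊(Q : ℝ) * Int.fract ((k : ℝ) * a j i)⌋ < (Q : ℤ) := by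
      rw [Int.floor_lt]; exact_mod_cast h1
    have hfl0 : (0:ℤ) ≤ ⌊(Q : ℝ) * Int.fract ((k : ℝ) * a j i)⌋ := Int.floor_nonneg.2 h0
    omega
  set F : ℕ → (Fin n × Fin d → Fin Q) :=
    fun k p => ⟨(⌊(Q : ℝ) * Int.fract ((k : ℝ) * a p.1 p.2)⌋).toNat, hbd k p.1 p.2⟩ with hF
  have hcard : (Finset.univ : Finset (Fin n × Fin d → Fin Q)).card
      < (Finset.range (Q ^ (n * d) + 1)).card := by
    simp [Fintype.card_fun]
  obtain ⟨x, -, y, -, hxy, hFxy⟩ :=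
    Finset.exists_ne_map_eq_of_card_lt_of_maps_to hcard (fun k _ => Finset.mem_univ (F k))
  -- wlog x < y
  wlog hlt : x < y generalizing x y
  · exact this y x hxy.symm hFxy.symm (by omega)
  refine ⟨y - x, by omega, fun j i => ?_⟩
  have hkey : ⌊(Q : ℝ) * Int.fract ((x : ℝ) * a j i)⌋ = ⌊(Q : ℝ) * Int.fract ((y : ℝ) * a j i)⌋ := by
    have := congrFun hFxy (j, i)
    simp only [hF, Fin.mk.injEq] at this
    have h0x : (0:ℤ) ≤ ⌊(Q : ℝ) * Int.fract ((x : ℝ) * a j i)⌋ :=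
      Int.floor_nonneg.2 (by have := Int.fract_nonneg ((x : ℝ) * a j i); positivity)
    have h0y : (0:ℤ) ≤ ⌊(Q : ℝ) * Int.fract ((y : ℝ) * a j i)⌋ :=
      Int.floor_nonneg.2 (by have := Int.fract_nonneg ((y : ℝ) * a j i); positivity)
    omega
  refine ⟨⌊(y : ℝ) * a j i⌋ - ⌊(x : ℝ) * a j i⌋, ?_⟩
  have hcast : ((y - x : ℕ) : ℝ) = (y : ℝ) - x := by
    have : x ≤ y := hlt.le
    push_cast [Nat.cast_sub this]; ring
  have heq : ((y - x : ℕ) : ℝ) * a j i - ((⌊(y : ℝ) * a j i⌋ - ⌊(x : ℝ) * a j i⌋ : ℤ) : ℝ)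
      = Int.fract ((y : ℝ) * a j i) - Int.fract ((x : ℝ) * a j i) := by
    rw [hcast]; unfold Int.fract; push_cast; ring
  rw [heq]
  -- both Q*fract values share the same floor N, so they differ by < 1
  set u := (Q : ℝ) * Int.fract ((x : ℝ) * a j i) with hu
  set v := (Q : ℝ) * Int.fract ((y : ℝ) * a j i) with hv
  have h1 : |v - u| < 1 := by
    have hul := Int.floor_le u
    have huu := Int.lt_floor_add_one u
    have hvl := Int.floor_le v
    have hvu := Int.lt_floor_add_one v
    rw [← hkey] at hvl hvu
    rw [abs_lt]; constructor <;> linarith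
  have : |Int.fract ((y : ℝ) * a j i) - Int.fract ((x : ℝ) * a j i)| * Q < 1 := by
    calc |Int.fract ((y : ℝ) * a j i) - Int.fract ((x : ℝ) * a j i)| * Q
        = |v - u| := by rw [hu, hv, ← mul_sub, abs_mul, abs_of_nonneg hQR.le, mul_comm]
      _ < 1 := h1
  rw [le_div_iff₀ hQR]
  linarith

end Helpers

/-- A finite sum of continuous functions on `ℝ^d`, each periodic with respect to a
full-rank lattice, is Bohr almost periodic: for every `δ > 0` there are `δ`-almost
periods of arbitrarily large norm. -/
theorem sum_of_periodic_is_almost_periodic (d n : ℕ) (hd : 1 ≤ d)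
    (f : Fin n → EuclideanSpace ℝ (Fin d) → ℝ)
    (hcont : ∀ j, Continuous (f j))
    (B : Fin n → Module.Basis (Fin d) ℝ (EuclideanSpace ℝ (Fin d)))
    (hper : ∀ j (x : EuclideanSpace ℝ (Fin d)) (c : Fin d → ℤ),
      f j (x + ∑ i, c i • B j i) = f j x) :
    ∀ δ > 0, ∀ R : ℝ, ∃ T : EuclideanSpace ℝ (Fin d), R ≤ ‖T‖ ∧
      ∀ x, |(∑ j, f j x) - (∑ j, f j (x - T))| ≤ δ := by
  intro δ hδ R
  set ε : ℝ := δ / (n + 1) with hε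
  have hε0 : 0 < ε := by positivity
  -- uniform continuity moduli
  choose η hη0 hmod using fun j => ap_unif (f j) (hcont j) (B j) (hper j) hε0
  set S : Finset ℝ := insert 1 (Finset.image η Finset.univ) with hSdef
  have hSne : S.Nonempty := ⟨1, Finset.mem_insert_self _ _⟩
  set ηm : ℝ := S.min' hSne with hηm
  have hηm0 : 0 < ηm := by
    have hmem : ηm ∈ S := S.min'_mem hSne
    rcases Finset.mem_insert.mp hmem with h | h
    · rw [h]; norm_num
    · obtain ⟨j, -, hj⟩ := Finset.mem_image.mp h
      rw [← hj]; exact hη0 j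
  have hηmle : ∀ j, ηm ≤ η j := fun j =>
    Finset.min'_le _ _ (Finset.mem_insert_of_mem (Finset.mem_image_of_mem η (Finset.mem_univ j)))
  clear_value ηm
  -- the direction vector and its long multiple
  set v : EuclideanSpace ℝ (Fin d) := EuclideanSpace.single (⟨0, hd⟩ : Fin d) (1 : ℝ) with hvdef
  have hv : ‖v‖ = 1 := by rw [hvdef, EuclideanSpace.norm_single]; norm_num
  set K : ℝ := max R 1 with hK
  have hK1 : 1 ≤ K := le_max_right _ _
  have hK0 : 0 < K := lt_of_lt_of_le one_pos hK1
  have hRK : R ≤ K := le_max_left _ _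
  clear_value K
  set w : EuclideanSpace ℝ (Fin d) := K • v with hw
  have hwn : ‖w‖ = K := by rw [hw, norm_smul, hv, Real.norm_eq_abs, abs_of_pos hK0, mul_one]
  -- size constant
  set S0 : ℝ := (∑ j, ∑ i, ‖B j i‖) + 1 with hS0def
  have hS00 : 0 < S0 := by
    have : 0 ≤ ∑ j, ∑ i, ‖(B j) i‖ :=
      Finset.sum_nonneg fun j _ => Finset.sum_nonneg fun i _ => norm_nonneg _
    rw [hS0def]; linarith
  have hS0ge : ∀ j : Fin n, ∑ i, ‖B j i‖ ≤ S0 := by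
    intro j
    have := Finset.single_le_sum (f := fun j => ∑ i, ‖B j i‖)
      (fun j _ => Finset.sum_nonneg fun i _ => norm_nonneg _) (Finset.mem_univ j)
    rw [hS0def]; linarith
  clear_value S0
  -- choose Q
  obtain ⟨Q, hQ0, hQbig⟩ : ∃ Q : ℕ, 0 < Q ∧ S0 / ηm ≤ Q :=
    ⟨⌈S0 / ηm⌉₊ + 1, Nat.succ_pos _, by push_cast; linarith [Nat.le_ceil (S0 / ηm)]⟩
  have hQR : (0:ℝ) < Q := by exact_mod_cast hQ0
  have hQη : S0 / Q ≤ ηm := by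
    rw [div_le_iff₀ hQR]
    rw [div_le_iff₀ hηm0] at hQbig
    linarith [mul_comm (Q:ℝ) ηm]
  -- pigeonhole
  set a : Fin n → Fin d → ℝ := fun j i => (B j).repr w i with ha
  obtain ⟨k, hk1, hkc⟩ := ap_pigeonhole n d Q hQ0 a
  choose c hc using hkc
  set T : EuclideanSpace ℝ (Fin d) := (k : ℝ) • w with hT
  have hTn : ‖T‖ = k * K := by
    rw [hT, norm_smul, hwn, Real.norm_eq_abs, abs_of_nonneg (by positivity)]
  refine ⟨T, ?_, ?_⟩
  · rw [hTn]
    have hk1' : (1:ℝ) ≤ k := by exact_mod_cast hk1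
    calc R ≤ K := hRK
      _ = 1 * K := (one_mul K).symm
      _ ≤ k * K := by nlinarith
  intro x
  -- per-function estimate
  have hterm : ∀ j : Fin n, |f j x - f j (x - T)| ≤ ε := by
    intro j
    set lam : EuclideanSpace ℝ (Fin d) := ∑ i, c j i • B j i with hlam
    have hTrepr : ∀ i, (B j).repr T i = (k : ℝ) * a j i := by
      intro i
      rw [hT, map_smul]
      simp [ha, smul_eq_mul]
    have hTsum : T = ∑ i, ((k : ℝ) * a j i) • B j i := by
      conv_lhs => rw [← (B j).sum_repr T]
      congr 1; funext i; rw [hTrepr i]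
    have hdiff : T - lam = ∑ i, ((k : ℝ) * a j i - c j i) • B j i := by
      rw [hTsum, hlam, ← Finset.sum_sub_distrib]
      congr 1; funext i
      rw [sub_smul, ← Int.cast_smul_eq_zsmul ℝ]
    have hnorm : ‖T - lam‖ ≤ η j := by
      rw [hdiff]
      refine (ap_norm_comb _ _).trans ?_
      have h1 : ∑ i, |(k : ℝ) * a j i - c j i| * ‖B j i‖ ≤ ∑ i, (1 / Q) * ‖B j i‖ := by
        refine Finset.sum_le_sum fun i _ => ?_
        exact mul_le_mul_of_nonneg_right (hc j i) (norm_nonneg _)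
      refine h1.trans ?_
      rw [← Finset.mul_sum]
      calc (1 / (Q:ℝ)) * ∑ i, ‖B j i‖ ≤ (1 / Q) * S0 := by
            exact mul_le_mul_of_nonneg_left (hS0ge j) (by positivity)
        _ = S0 / Q := by ring
        _ ≤ ηm := hQη
        _ ≤ η j := hηmle j
    have hshift : f j (x - T) = f j (x - (T - lam)) := by
      have h1 : x - (T - lam) = (x - T) + ∑ i, c j i • B j i := by rw [← hlam]; abel
      rw [h1, hper j]
    rw [hshift]
    exact hmod j x (T - lam) hnorm
  -- sum up
  have hsum : |(∑ j, f j x) - (∑ j, f j (x - T))| ≤ ∑ j : Fin n, ε := by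
    rw [← Finset.sum_sub_distrib]
    exact (Finset.abs_sum_le_sum_abs _ _).trans (Finset.sum_le_sum fun j _ => hterm j)
  refine hsum.trans ?_
  rw [Finset.sum_const, Finset.card_univ, Fintype.card_fin, nsmul_eq_mul, hε]
  have hn : (0:ℝ) < (n:ℝ) + 1 := by positivity
  have h2 : (n:ℝ) / ((n:ℝ) + 1) ≤ 1 := by
    rw [div_le_one hn]; linarith
  calc (n:ℝ) * (δ / ((n:ℝ) + 1)) = δ * ((n:ℝ) / ((n:ℝ) + 1)) := by ring
    _ ≤ δ * 1 := by nlinarith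
    _ = δ := mul_one δ
end
end

section
/- Let Λ ⊆ ℝ² be a lattice and 0 < ε < s(Λ)/2 where s(Λ) is the shortest nonzero vector length. Then there exists an infinite closed set Θ ⊆ S¹ (consisting of a convergent sequence together with its limit) such that R_Θ(Λ + B_ε(0)) does not contain the complement of any disk. -/
open Complex Set Filter

noncomputable section

section AuxiliaryLemmas

open Metric Submodule

namespace BadAngles


lemma nat_infinite_exists_ge {J : Set ℕ} (hJ : J.Infinite) (N : ℕ) : ∃ i ∈ J, N ≤ i := by
  by_contra h
  push_neg at h
  exact hJ ((Set.finite_Iio N).subset (fun i hi => h i hi))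

lemma nat_infinite_of_exists_ge {S : Set ℕ} (h : ∀ N, ∃ i ∈ S, N ≤ i) : S.Infinite := by
  by_contra hfin
  rw [Set.not_infinite] at hfin
  obtain ⟨M, hM⟩ := hfin.bddAbove
  obtain ⟨i, hi, hMi⟩ := h (M+1)
  exact absurd (hM hi) (by omega)

lemma chord_eq (z : ℂ) (a b : ℝ) :
    dist (Complex.exp (-(a:ℂ)*Complex.I)*z) (Complex.exp (-(b:ℂ)*Complex.I)*z)
      = ‖Complex.exp (((b-a : ℝ):ℂ)*Complex.I) - 1‖ * ‖z‖ := by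
  rw [Complex.dist_eq, ← sub_mul, norm_mul]
  congr 1
  have : Complex.exp (-(a:ℂ)*Complex.I) - Complex.exp (-(b:ℂ)*Complex.I)
      = Complex.exp (-(b:ℂ)*Complex.I) * (Complex.exp (((b-a : ℝ):ℂ)*Complex.I) - 1) := by
    rw [mul_sub, mul_one, ← Complex.exp_add]
    push_cast
    ring_nf
  rw [this, norm_mul, Complex.norm_exp]
  simp

lemma exp_sub_one_lb {t : ℝ} (ht : 0 < t) (ht1 : t ≤ 1) :
    t/2 ≤ ‖Complex.exp ((t:ℂ)*Complex.I) - 1‖ := by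
  have him : (Complex.exp ((t:ℂ)*Complex.I) - 1).im = Real.sin t := by
    simp [Complex.exp_ofReal_mul_I_im]
  have h1 : |Real.sin t| ≤ ‖Complex.exp ((t:ℂ)*Complex.I) - 1‖ := by
    rw [← him]; exact Complex.abs_im_le_norm _
  have h2 : t - t^3/4 < Real.sin t := by
    have := Real.sin_gt_sub_cube ht
    have : 0 < t^3 := by positivity
    linarith
  have h3 : t/2 ≤ t - t^3/4 := by
    have ht2 : t^2 ≤ 1 := by nlinarith
    have : t*(1 - t^2) ≥ 0 := mul_nonneg ht.le (by linarith)
    nlinarith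
  calc t/2 ≤ Real.sin t := by linarith
    _ ≤ |Real.sin t| := le_abs_self _
    _ ≤ _ := h1

/-- Escape lemma: a circular arc whose endpoints are at distance ≥ 2ρ contains a point
at distance ≥ ρ from every point of `Λ`, provided distinct points of `Λ` are ≥ 2ρ apart. -/
lemma arcEscape (Λ : Set ℂ) (ρ : ℝ)
    (hgap : ∀ a ∈ Λ, ∀ b ∈ Λ, a ≠ b → 2*ρ ≤ dist a b)
    (z : ℂ) (a b : ℝ) (hab : a ≤ b)
    (h2 : 2*ρ ≤ dist (Complex.exp (-(a:ℂ)*Complex.I)*z) (Complex.exp (-(b:ℂ)*Complex.I)*z)) :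
    ∃ τ ∈ Set.Icc a b, ∀ l ∈ Λ, ρ ≤ dist (Complex.exp (-(τ:ℂ)*Complex.I)*z) l := by
  by_contra hcon
  push_neg at hcon
  set F : ℝ → ℂ := fun τ => Complex.exp (-(τ:ℂ)*Complex.I)*z with hF
  have hFc : Continuous F := by fun_prop
  set C := F '' Set.Icc a b with hC
  have hCpc : IsPreconnected C := isPreconnected_Icc.image F hFc.continuousOn
  have hpC : F a ∈ C := ⟨a, by simp [hab], rfl⟩
  have hqC : F b ∈ C := ⟨b, by simp [hab], rfl⟩
  obtain ⟨l₀, hl₀, hpl₀⟩ := hcon a (by simp [hab])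
  set u := Metric.ball l₀ ρ with hu'
  set v := ⋃ l ∈ Λ \ {l₀}, Metric.ball l ρ with hv'
  have hu : IsOpen u := Metric.isOpen_ball
  have hv : IsOpen v := isOpen_biUnion fun _ _ => Metric.isOpen_ball
  have hdisj : Disjoint u v := by
    rw [hv', Set.disjoint_iUnion₂_right]
    intro l hl
    refine Metric.ball_disjoint_ball ?_
    have := hgap l₀ hl₀ l hl.1 (fun h => hl.2 h.symm)
    linarith
  have hsub : C ⊆ u ∪ v := by
    rintro c ⟨τ, hτ, rfl⟩
    obtain ⟨l, hl, hdl⟩ := hcon τ hτ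
    by_cases hll : l = l₀
    · left; rw [Metric.mem_ball]; rw [hll] at hdl; exact hdl
    · right; exact Set.mem_biUnion ⟨hl, hll⟩ (Metric.mem_ball.2 hdl)
  have hCu : C ⊆ u := hCpc.subset_left_of_subset_union hu hv hdisj hsub
    ⟨F a, hpC, Metric.mem_ball.2 hpl₀⟩
  have h1 : dist (F a) l₀ < ρ := Metric.mem_ball.1 (hCu hpC)
  have h2' : dist (F b) l₀ < ρ := Metric.mem_ball.1 (hCu hqC)
  have := dist_triangle (F a) l₀ (F b)
  rw [dist_comm l₀ (F b)] at this
  have : dist (F a) (F b) < 2*ρ := by linarith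
  linarith

/-- There is a point of any prescribed large norm at distance ≥ ρ from `Λ`. -/
lemma circlePoint (Λ : Set ℂ) (ρ : ℝ) (hρ : 0 < ρ)
    (hgap : ∀ a ∈ Λ, ∀ b ∈ Λ, a ≠ b → 2*ρ ≤ dist a b)
    (R : ℝ) (hR : ρ ≤ R) :
    ∃ zz : ℂ, ‖zz‖ = R ∧ ∀ l ∈ Λ, ρ ≤ dist zz l := by
  have hπ : (0:ℝ) ≤ Real.pi := Real.pi_pos.le
  have he0 : Complex.exp (-((0:ℝ):ℂ)*Complex.I) * (R:ℂ) = (R:ℂ) := by simp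
  have heπ : Complex.exp (-((Real.pi:ℝ):ℂ)*Complex.I) * (R:ℂ) = -(R:ℂ) := by
    have : Complex.exp (-(Real.pi:ℂ)*Complex.I) = -1 := by
      rw [neg_mul, Complex.exp_neg, Complex.exp_pi_mul_I]
      norm_num
    rw [this]; ring
  have hdRR : dist ((R:ℂ)) (-(R:ℂ)) = 2*R := by
    rw [Complex.dist_eq]
    have h' : ((R:ℂ) - -(R:ℂ)) = ((2*R : ℝ) : ℂ) := by push_cast; ring
    rw [h', Complex.norm_real, Real.norm_eq_abs]
    exact abs_of_nonneg (by linarith)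
  obtain ⟨τ, hτ, hτgood⟩ := arcEscape Λ ρ hgap (R:ℂ) 0 Real.pi hπ (by
    rw [he0, heπ, hdRR]; linarith)
  refine ⟨Complex.exp (-(τ:ℂ)*Complex.I) * (R:ℂ), ?_, hτgood⟩
  rw [norm_mul, Complex.norm_exp, Complex.norm_real, Real.norm_eq_abs]
  have hre : (-(τ:ℂ)*Complex.I).re = 0 := by simp
  rw [hre, Real.exp_zero, one_mul]
  exact abs_of_nonneg (by linarith)


lemma dep_choice {α : Type*} (P : α → Prop) (R : α → α → Prop) (h0 : ∃ a, P a)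
    (hs : ∀ a, P a → ∃ b, P b ∧ R a b) :
    ∃ g : ℕ → α, (∀ n, P (g n)) ∧ ∀ n, R (g n) (g (n+1)) := by
  choose f hf1 hf2 using hs
  let g : ℕ → {a // P a} := fun n =>
    Nat.rec ⟨h0.choose, h0.choose_spec⟩ (fun _ p => ⟨f p.1 p.2, hf1 p.1 p.2⟩) n
  exact ⟨fun n => (g n).1, fun n => (g n).2, fun n => hf2 (g n).1 (g n).2⟩


lemma stepLemma (Λ : Set ℂ) (ε δ : ℝ) (hδ : 0 < δ)
    (hΛne : Λ.Nonempty)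
    (hgap : ∀ a ∈ Λ, ∀ b ∈ Λ, a ≠ b → 2*(ε+δ) ≤ dist a b)
    (hεδ : 0 < ε + δ)
    (z : ℕ → ℂ) (hz : ∀ i : ℕ, (i:ℝ) ≤ ‖z i‖)
    (J : Set ℕ) (hJ : J.Infinite) (b : ℝ) (hb : 0 < b) :
    ∃ τ, 0 < τ ∧ τ < b ∧
      {i | i ∈ J ∧ ε + δ/2 < Metric.infDist (Complex.exp (-(τ:ℂ)*Complex.I) * z i) Λ}.Infinite := by
  set G : ℝ → ℕ → Prop :=
    fun τ i => ε + δ/2 < Metric.infDist (Complex.exp (-(τ:ℂ)*Complex.I) * z i) Λ with hG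
  -- each G · i is an open condition
  have hGopen : ∀ i, IsOpen {τ | G τ i} := by
    intro i
    have hc : Continuous fun τ : ℝ => Metric.infDist (Complex.exp (-(τ:ℂ)*Complex.I) * z i) Λ := by
      apply (Metric.continuous_infDist_pt Λ).comp
      fun_prop
    exact isOpen_lt continuous_const hc
  set U : ℕ → Set ℝ :=
    fun N => (⋃ i ∈ {i | i ∈ J ∧ N ≤ i}, {τ | G τ i}) ∪ (Set.Icc (b/3) (b/2))ᶜ with hU
  have hUopen : ∀ N, IsOpen (U N) :=
    fun N => IsOpen.union (isOpen_biUnion fun i _ => hGopen i) isClosed_Icc.isOpen_compl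
  have hUdense : ∀ N, Dense (U N) := by
    intro N
    rw [dense_iff_inter_open]
    intro O hO hOne
    by_cases hc : ∃ x ∈ O, x ∉ Set.Icc (b/3) (b/2)
    · obtain ⟨x, hxO, hx⟩ := hc
      exact ⟨x, hxO, Or.inr hx⟩
    · push_neg at hc
      obtain ⟨x, hxO⟩ := hOne
      obtain ⟨η, hη, hball⟩ := Metric.isOpen_iff.1 hO x hxO
      set w := min (η/2) (1/2) with hw'
      have hw : 0 < w := lt_min (by linarith) (by norm_num)
      have hw1 : w ≤ 1/2 := min_le_right _ _
      have hwη : w < η := lt_of_le_of_lt (min_le_left _ _) (by linarith)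
      have hIccball : Set.Icc x (x+w) ⊆ Metric.ball x η := by
        intro τ hτ
        have habs : |τ - x| ≤ w := abs_le.2 ⟨by linarith [hτ.1], by linarith [hτ.2]⟩
        rw [Metric.mem_ball, Real.dist_eq]
        exact lt_of_le_of_lt habs hwη
      obtain ⟨i, hiJ, hiN⟩ := nat_infinite_exists_ge hJ (max N ⌈4*(ε+δ)/w⌉₊)
      have hiN' : N ≤ i := le_trans (le_max_left _ _) hiN
      have hibig : 4*(ε+δ)/w ≤ (i:ℝ) := by
        calc 4*(ε+δ)/w ≤ (⌈4*(ε+δ)/w⌉₊ : ℝ) := Nat.le_ceil _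
          _ ≤ (i:ℝ) := by exact_mod_cast le_trans (le_max_right _ _) hiN
      -- chord length of the arc over [x, x+w] is ≥ 2(ε+δ)
      set e : ℝ := x + w with he
      have hchord : 2*(ε+δ) ≤
          dist (Complex.exp (-(x:ℂ)*Complex.I)*(z i)) (Complex.exp (-(e:ℂ)*Complex.I)*(z i)) := by
        rw [chord_eq (z i) x e]
        have h1 : w/2 ≤ ‖Complex.exp (((e-x : ℝ):ℂ)*Complex.I) - 1‖ := by
          have hew : (e-x : ℝ) = w := by rw [he]; ring
          rw [hew]
          exact exp_sub_one_lb hw (by linarith)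
        have h2 : 4*(ε+δ)/w ≤ ‖z i‖ := le_trans hibig (hz i)
        have h3 : (0:ℝ) ≤ ‖z i‖ := (norm_nonneg _)
        calc 2*(ε+δ) = (w/2) * (4*(ε+δ)/w) := by field_simp; ring
          _ ≤ ‖Complex.exp (((e-x : ℝ):ℂ)*Complex.I) - 1‖ * ‖z i‖ := by
              apply mul_le_mul h1 h2 (by positivity) (norm_nonneg _)
      obtain ⟨τ, hτmem, hτgood⟩ := arcEscape Λ (ε+δ) hgap (z i) x e (by rw [he]; linarith) hchord
      refine ⟨τ, hball (hIccball hτmem), Or.inl ?_⟩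
      refine Set.mem_biUnion ⟨hiJ, hiN'⟩ ?_
      show G τ i
      rw [hG]
      have : ε + δ ≤ Metric.infDist (Complex.exp (-(τ:ℂ)*Complex.I) * z i) Λ := by
        by_contra hlt
        push_neg at hlt
        obtain ⟨l, hl, hdl⟩ := (Metric.infDist_lt_iff hΛne).1 hlt
        exact absurd (hτgood l hl) (by linarith)
      simp only [Set.mem_setOf_eq]
      linarith
  have hD : Dense (⋂ N, U N) := dense_iInter_of_isOpen hUopen hUdense
  obtain ⟨τ, hτIoo, hτD⟩ := hD.inter_open_nonempty (Set.Ioo (b/3) (b/2)) isOpen_Ioo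
    ⟨5*b/12, by constructor <;> [linarith; linarith]⟩
  have hτpos : 0 < τ := lt_trans (by linarith) hτIoo.1
  have hτb : τ < b := lt_trans hτIoo.2 (by linarith)
  refine ⟨τ, hτpos, hτb, ?_⟩
  apply Set.infinite_of_not_bddAbove
  intro hbdd
  obtain ⟨M, hM⟩ := hbdd
  have hτU := Set.mem_iInter.1 hτD (M+1)
  rcases hτU with h | h
  · obtain ⟨i, hi, hGi⟩ := Set.mem_iUnion₂.1 h
    have : i ∈ {i | i ∈ J ∧ ε + δ/2 < Metric.infDist (Complex.exp (-(τ:ℂ)*Complex.I) * z i) Λ} :=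
      ⟨hi.1, hGi⟩
    have hle := hM this
    have hge : M + 1 ≤ i := hi.2
    omega
  · exact h ⟨le_of_lt hτIoo.1, le_of_lt hτIoo.2⟩

lemma exists_delta (Λ : Set ℂ) (hΛ : IsLatticeC Λ) (ε : ℝ) (hε : 0 < ε)
    (hshort : ∀ l ∈ Λ, l ≠ 0 → 2*ε < ‖l‖) :
    ∃ δ : ℝ, 0 < δ ∧ δ ≤ 1 ∧ ∀ l ∈ Λ, l ≠ 0 → 2*ε + 2*δ ≤ ‖l‖ := by
  obtain ⟨v, w, hvw, hset⟩ := hΛ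
  set B : Module.Basis (Fin 2) ℝ ℂ :=
    basisOfLinearIndependentOfCardEqFinrank hvw
      (by simp [Complex.finrank_real_complex]) with hB
  have hBv : B 0 = v := by
    rw [hB, coe_basisOfLinearIndependentOfCardEqFinrank]
    rfl
  have hBw : B 1 = w := by
    rw [hB, coe_basisOfLinearIndependentOfCardEqFinrank]
    rfl
  have hrange : Set.range ⇑B = {v, w} := by
    ext x
    simp only [Set.mem_range, Fin.exists_fin_two, hBv, hBw, Set.mem_insert_iff,
      Set.mem_singleton_iff, eq_comm]
  have hΛspan : Λ = (span ℤ (Set.range ⇑B) : Submodule ℤ ℂ) := by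
    rw [hrange, hset]
    ext x
    simp only [Set.mem_setOf_eq, SetLike.mem_coe, Submodule.mem_span_pair]
    constructor
    · rintro ⟨m, n, rfl⟩; exact ⟨m, n, rfl⟩
    · rintro ⟨m, n, rfl⟩; exact ⟨m, n, rfl⟩
  have hclosed : IsClosed ((span ℤ (Set.range ⇑B)).toAddSubgroup : Set ℂ) :=
    AddSubgroup.isClosed_of_discrete
  haveI hdisc : DiscreteTopology
      ↑(((span ℤ (Set.range ⇑B)).toAddSubgroup : AddSubgroup ℂ) : Set ℂ) :=
    inferInstanceAs (DiscreteTopology (span ℤ (Set.range ⇑B)).toAddSubgroup)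
  have hfin : (Metric.closedBall (0:ℂ) (2*ε+2) ∩
      ((span ℤ (Set.range ⇑B)).toAddSubgroup : Set ℂ)).Finite :=
    Metric.finite_isBounded_inter_isClosed DiscreteTopology.isDiscrete Metric.isBounded_closedBall hclosed
  have hcoe : ((span ℤ (Set.range ⇑B)).toAddSubgroup : Set ℂ) = Λ := by
    rw [hΛspan]; exact Submodule.coe_toAddSubgroup _
  rw [hcoe] at hfin
  set T : Set ℂ := (Metric.closedBall (0:ℂ) (2*ε+2) ∩ Λ) \ {0} with hT
  have hTfin : T.Finite := hfin.subset Set.diff_subset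
  by_cases hTne : T.Nonempty
  · obtain ⟨l₀, hl₀T, hl₀min⟩ := Set.exists_min_image T norm hTfin hTne
    have hl₀Λ : l₀ ∈ Λ := hl₀T.1.2
    have hl₀0 : l₀ ≠ 0 := hl₀T.2
    have hm : 2*ε < ‖l₀‖ := hshort l₀ hl₀Λ hl₀0
    refine ⟨min 1 ((‖l₀‖ - 2*ε)/2), lt_min one_pos (by linarith), min_le_left _ _, ?_⟩
    intro l hl hl0
    by_cases hlball : ‖l‖ ≤ 2*ε+2
    · have hlT : l ∈ T := ⟨⟨Metric.mem_closedBall.2 (by simpa [Complex.dist_eq] using hlball), hl⟩, hl0⟩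
      have := hl₀min l hlT
      have h2δ : 2 * min 1 ((‖l₀‖ - 2*ε)/2) ≤ ‖l₀‖ - 2*ε := by
        have := min_le_right (1:ℝ) ((‖l₀‖ - 2*ε)/2)
        linarith
      linarith
    · push_neg at hlball
      have : min 1 ((‖l₀‖ - 2*ε)/2) ≤ 1 := min_le_left _ _
      linarith
  · refine ⟨1, one_pos, le_refl _, ?_⟩
    intro l hl hl0
    by_contra hcon
    push_neg at hcon
    exact hTne ⟨l, ⟨⟨Metric.mem_closedBall.2 (by simpa [Complex.dist_eq] using hcon.le), hl⟩, hl0⟩⟩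

end BadAngles

end AuxiliaryLemmas

open BadAngles in
/-- If `ε` is less than half the length of the shortest nonzero vector of the lattice `Λ`,
then there is an infinite closed set of angles (a convergent sequence together with its
limit) which is not `(Λ,ε)`-good. -/
theorem exists_bad_infinite_sequence (Λ : Set ℂ) (hΛ : IsLatticeC Λ)
    (ε : ℝ) (hε : 0 < ε) (hshort : ∀ z ∈ Λ, z ≠ 0 → 2 * ε < ‖z‖) :
    ∃ (f : ℕ → ℝ) (θ' : ℝ), Tendsto f atTop (nhds θ') ∧
      (Set.range f ∪ {θ'}).Infinite ∧
      IsClosed (Set.range f ∪ {θ'}) ∧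
      ¬ IsGoodAngles Λ ε (Set.range f ∪ {θ'}) := by
  classical
  obtain ⟨δ, hδ0, hδ1, hδgap⟩ := exists_delta Λ hΛ ε hε (by exact_mod_cast hshort)
  obtain ⟨v, w, hvw, hset⟩ := hΛ
  have h0Λ : (0:ℂ) ∈ Λ := by rw [hset]; exact ⟨0, 0, by simp⟩
  have hΛne : Λ.Nonempty := ⟨0, h0Λ⟩
  have hsubΛ : ∀ a ∈ Λ, ∀ b ∈ Λ, a - b ∈ Λ := by
    intro a ha b hb
    rw [hset] at ha hb ⊢
    obtain ⟨m, n, rfl⟩ := ha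
    obtain ⟨m', n', rfl⟩ := hb
    exact ⟨m - m', n - n', by rw [sub_smul, sub_smul]; ring⟩
  have hgap : ∀ a ∈ Λ, ∀ b ∈ Λ, a ≠ b → 2*(ε+δ) ≤ dist a b := by
    intro a ha b hb hab
    have hmem : a - b ∈ Λ := hsubΛ a ha b hb
    have hne : a - b ≠ 0 := sub_ne_zero.2 hab
    have hbd := hδgap (a-b) hmem hne
    rw [dist_eq_norm]
    linarith
  have hεδ : 0 < ε + δ := by linarith
  -- witness points on circles
  have hzex : ∀ i : ℕ, ∃ zz : ℂ, ‖zz‖ = (i:ℝ) + (ε+δ) ∧ ∀ l ∈ Λ, ε+δ ≤ dist zz l :=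
    fun i => circlePoint Λ (ε+δ) hεδ hgap ((i:ℝ) + (ε+δ))
      (le_add_of_nonneg_left (Nat.cast_nonneg i))
  choose z hz1 hz2 using hzex
  have hz : ∀ i : ℕ, (i:ℝ) ≤ ‖z i‖ := fun i => by rw [hz1]; linarith
  -- invariant and step relation on states (θ, J, j)
  set Inv : ℝ × Set ℕ × ℕ → Prop := fun s =>
    (0 < s.1 ∧ s.1 ≤ 1) ∧ s.2.1.Infinite ∧ s.2.2 ∈ s.2.1 ∧
      ∀ i ∈ s.2.1, ε + δ/2 < Metric.infDist (Complex.exp (-(s.1:ℂ)*Complex.I) * z i) Λ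
    with hInvDef
  set Rel : ℝ × Set ℕ × ℕ → ℝ × Set ℕ × ℕ → Prop := fun s t =>
    t.1 ≤ s.1/2 ∧ t.1 ≤ δ/(4*(‖z s.2.2‖+1)) ∧ t.2.1 ⊆ s.2.1 ∧ s.2.2 < t.2.2
    with hRelDef
  have hbase : ∃ s, Inv s := by
    obtain ⟨τ, hτ0, hτ1, hS⟩ :=
      stepLemma Λ ε δ hδ0 hΛne hgap hεδ z hz Set.univ Set.infinite_univ 1 one_pos
    obtain ⟨j₀, hj₀⟩ := hS.nonempty
    refine ⟨(τ, {i | i ∈ (Set.univ : Set ℕ) ∧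
      ε + δ/2 < Metric.infDist (Complex.exp (-(τ:ℂ)*Complex.I) * z i) Λ}, j₀),
      ⟨⟨hτ0, le_of_lt hτ1⟩, hS, hj₀, fun i hi => hi.2⟩⟩
  have hstep : ∀ s, Inv s → ∃ t, Inv t ∧ Rel s t := by
    intro s hs
    obtain ⟨⟨hθ0, hθ1⟩, hJinf, hjJ, hgood⟩ := hs
    set b := min (s.1/2) (δ/(4*(‖z s.2.2‖+1))) with hb'
    have hbpos : 0 < b := lt_min (by linarith) (by positivity)
    obtain ⟨τ, hτ0, hτb, hS⟩ := stepLemma Λ ε δ hδ0 hΛne hgap hεδ z hz s.2.1 hJinf b hbpos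
    obtain ⟨j', hj'S, hj'⟩ := nat_infinite_exists_ge hS (s.2.2+1)
    have hτhalf : τ ≤ s.1/2 := le_trans hτb.le (min_le_left _ _)
    refine ⟨(τ, {i | i ∈ s.2.1 ∧
      ε + δ/2 < Metric.infDist (Complex.exp (-(τ:ℂ)*Complex.I) * z i) Λ}, j'),
      ⟨⟨hτ0, by linarith⟩, hS, hj'S, fun i hi => hi.2⟩,
      hτhalf, le_trans hτb.le (min_le_right _ _), fun i hi => hi.1, Nat.lt_of_succ_le hj'⟩
  obtain ⟨g, hP, hR⟩ := dep_choice Inv Rel hbase hstep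
  -- basic consequences
  have hθpos : ∀ n, 0 < (g n).1 := fun n => (hP n).1.1
  have hθ1 : ∀ n, (g n).1 ≤ 1 := fun n => (hP n).1.2
  have hθsucc : ∀ n, (g (n+1)).1 < (g n).1 :=
    fun n => lt_of_le_of_lt (hR n).1 (by linarith [hθpos n])
  have hstrict : StrictAnti fun n => (g n).1 := strictAnti_nat_of_succ_lt hθsucc
  have hθanti : Antitone fun n => (g n).1 := hstrict.antitone
  have hθpow : ∀ n, (g n).1 ≤ (1/2:ℝ)^n := by
    intro n
    induction n with
    | zero => simpa using hθ1 0
    | succ n ih =>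
      have := (hR n).1
      have h2 : (g n).1/2 ≤ (1/2:ℝ)^n/2 := by linarith
      calc (g (n+1)).1 ≤ (g n).1/2 := (hR n).1
        _ ≤ (1/2:ℝ)^n/2 := h2
        _ = (1/2:ℝ)^(n+1) := by ring
  have hJmono : ∀ m n, m ≤ n → (g n).2.1 ⊆ (g m).2.1 := by
    intro m n hmn
    induction hmn with
    | refl => exact subset_rfl
    | step h ih => exact le_trans (hR _).2.2.1 ih
  have hjge : ∀ n, n ≤ (g n).2.2 := by
    intro n
    induction n with
    | zero => exact Nat.zero_le _
    | succ n ih => have := (hR n).2.2.2; omega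
  have htend : Tendsto (fun n => (g n).1) atTop (nhds 0) :=
    squeeze_zero (fun n => (hθpos n).le) hθpow
      (tendsto_pow_atTop_nhds_zero_of_lt_one (by norm_num) (by norm_num))
  refine ⟨fun n => (g n).1, 0, htend, ?_, ?_, ?_⟩
  · exact (Set.infinite_range_of_injective hstrict.injective).mono Set.subset_union_left
  · rw [Set.union_singleton]
    exact htend.isCompact_insert_range.isClosed
  · rintro ⟨r, hr⟩
    set K := ⌈r⌉₊ with hK
    set x := z ((g K).2.2) with hx
    have hxr : r ≤ ‖x‖ := by
      have h1 : r ≤ (K:ℝ) := Nat.le_ceil r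
      have h2 : (K:ℝ) ≤ ((g K).2.2 : ℝ) := by exact_mod_cast hjge K
      have h3 : ‖x‖ = ((g K).2.2 : ℝ) + (ε+δ) := by
        rw [hx]
        exact hz1 _
      linarith
    obtain ⟨θθ, hθΘ, y, hy, hxy⟩ := hr x hxr
    have hinv : Complex.exp (-(θθ:ℂ)*Complex.I) * Complex.exp ((θθ:ℂ)*Complex.I) = 1 := by
      rw [← Complex.exp_add]
      have : (-(θθ:ℂ)*Complex.I + (θθ:ℂ)*Complex.I) = 0 := by ring
      rw [this, Complex.exp_zero]
    have hyx : y = Complex.exp (-(θθ:ℂ)*Complex.I) * x := by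
      rw [hxy]
      show y = Complex.exp (-(θθ:ℂ)*Complex.I) * (Complex.exp ((θθ:ℂ)*Complex.I) * y)
      rw [← mul_assoc, hinv, one_mul]
    obtain ⟨l, hlΛ, hyl⟩ := hy
    have hfar : ε + δ ≤ ‖x - l‖ := by
      have := hz2 ((g K).2.2) l hlΛ
      rwa [Complex.dist_eq] at this
    have hkey : ε ≤ ‖y - l‖ := by
      rw [hyx]
      rcases hθΘ with ⟨n, rfl⟩ | hθ0'
      · -- angle is the n-th element of the sequence
        by_cases hn : n ≤ K
        · have hjK : (g K).2.2 ∈ (g n).2.1 := hJmono n K hn (hP K).2.2.1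
          have hgood := (hP n).2.2.2 _ hjK
          have hdd : Metric.infDist (Complex.exp (-((g n).1:ℂ)*Complex.I) * x) Λ
              ≤ dist (Complex.exp (-((g n).1:ℂ)*Complex.I) * x) l :=
            Metric.infDist_le_dist_of_mem hlΛ
          rw [Complex.dist_eq] at hdd
          rw [hx] at hdd ⊢
          linarith [hgood, hdd]
        · push_neg at hn
          have hsmall : (g n).1 ≤ δ/(4*(‖x‖ + 1)) := by
            have h1 : (g n).1 ≤ (g (K+1)).1 := hθanti (Nat.succ_le_of_lt hn)
            have h2 := (hR K).2.1
            rw [hx]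
            linarith
          have hA : (0:ℝ) ≤ ‖x‖ := norm_nonneg x
          have hδbd : (g n).1 * (4*(‖x‖+1)) ≤ δ :=
            (le_div_iff₀ (by positivity)).1 hsmall
          have habs1 : ‖-((g n).1:ℂ)*Complex.I‖ = (g n).1 := by
            rw [norm_mul, Complex.norm_I, mul_one, norm_neg, Complex.norm_real, Real.norm_eq_abs,
              abs_of_pos (hθpos n)]
          have habs : ‖Complex.exp (-((g n).1:ℂ)*Complex.I) - 1‖ ≤ 2*(g n).1 := by
            have := Complex.norm_exp_sub_one_le (x := -((g n).1:ℂ)*Complex.I)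
              (by rw [habs1]; exact hθ1 n)
            rwa [habs1] at this
          have hmove : ‖Complex.exp (-((g n).1:ℂ)*Complex.I) * x - x‖ ≤ 2*(g n).1*‖x‖ := by
            have heq : Complex.exp (-((g n).1:ℂ)*Complex.I) * x - x
                = (Complex.exp (-((g n).1:ℂ)*Complex.I) - 1) * x := by ring
            rw [heq, norm_mul]
            have hxnorm : ‖x‖ = ‖x‖ := rfl
            rw [hxnorm]
            exact mul_le_mul_of_nonneg_right habs hA
          have htri : ‖x - l‖ ≤ ‖Complex.exp (-((g n).1:ℂ)*Complex.I) * x - x‖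
              + ‖Complex.exp (-((g n).1:ℂ)*Complex.I) * x - l‖ := by
            have : x - l = -(Complex.exp (-((g n).1:ℂ)*Complex.I) * x - x)
                + (Complex.exp (-((g n).1:ℂ)*Complex.I) * x - l) := by ring
            rw [this]
            exact le_trans (norm_add_le _ _) (by rw [norm_neg])
          have h2θA : 2*(g n).1*‖x‖ ≤ δ/2 := by nlinarith [hθpos n]
          linarith
      · rw [Set.mem_singleton_iff] at hθ0'
        subst hθ0'
        have : Complex.exp (-((0:ℝ):ℂ)*Complex.I) = 1 := by simp
        rw [this, one_mul]
        linarith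
    rw [hyx] at hyl
    rw [hyx] at hkey
    linarith
end
end

section
/- Let Λ ⊆ ℝ² be a lattice and ε > 0 with E = Λ + B_ε(0). There exists δ = δ(Λ,ε) > 0 such that: if Θ ⊆ S¹ carries a Borel probability measure σ with limsup_{|ξ|→∞} |σ̂(ξ)| < δ, then R_Θ(E) contains the complement of some disk centered at the origin. -/
open Complex Set Filter MeasureTheory

noncomputable section

/-- `Θ ⊆ S¹` (unit complex numbers, acting by rotation) is `(Λ,ε)`-good. -/
def IsGood (Λ : Set ℂ) (ε : ℝ) (Θ : Set ℂ) : Prop :=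
  ∃ r : ℝ, ∀ x : ℂ, r ≤ ‖x‖ → ∃ u ∈ Θ, ∃ y ∈ fattened Λ ε, x = u * y

/-- The Fourier transform `σ̂(ξ) = ∫ e^{-2πi⟨ξ,x⟩} dσ(x)` of a measure on `ℂ ≅ ℝ²`. -/
def ftMeasure (σ : Measure ℂ) (ξ : ℂ) : ℂ :=
  ∫ x, Complex.exp (-(2 * Real.pi * (ξ.re * x.re + ξ.im * x.im)) * Complex.I) ∂σ

/-! ### Auxiliary machinery -/

/-- The real inner product on `ℂ ≅ ℝ²`. -/
def ip (a b : ℂ) : ℝ := a.re * b.re + a.im * b.im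

lemma ip_rot (m u x : ℂ) : ip m ((starRingEnd ℂ) u * x) = ip u ((starRingEnd ℂ) m * x) := by
  simp [ip, Complex.mul_re, Complex.mul_im]; ring

lemma abs_ip_le (a b : ℂ) : |ip a b| ≤ ‖a‖ * ‖b‖ := by
  have h : ip a b = ((starRingEnd ℂ) a * b).re := by
    simp [ip, Complex.mul_re]
  rw [h]
  calc |((starRingEnd ℂ) a * b).re| ≤ ‖(starRingEnd ℂ) a * b‖ := Complex.abs_re_le_norm _
    _ = ‖a‖ * ‖b‖ := by rw [norm_mul, RCLike.norm_conj]

lemma ip_lin (a b : ℝ) (p q y : ℂ) :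
    ip (↑a * p + ↑b * q) y = a * ip p y + b * ip q y := by
  simp [ip, Complex.add_re, Complex.add_im, Complex.mul_re, Complex.mul_im]; ring

lemma det_ne_zero {v w : ℂ} (h : LinearIndependent ℝ ![v, w]) :
    v.re * w.im - v.im * w.re ≠ 0 := by
  intro hD
  rw [LinearIndependent.pair_iff] at h
  have h1 := h w.im (-v.im) (by
    apply Complex.ext <;> simp [Complex.smul_re, Complex.smul_im] <;> nlinarith)
  have h2 := h w.re (-v.re) (by
    apply Complex.ext <;> simp [Complex.smul_re, Complex.smul_im] <;> nlinarith)
  have hv : v = 0 := by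
    apply Complex.ext <;> simp <;> nlinarith [h1.2, h2.2]
  exact one_ne_zero ((h 1 0 (by simp [hv])).1)

section basis
variable {v w : ℂ} (hD : v.re * w.im - v.im * w.re ≠ 0)

/-- first dual basis vector -/
def dv (v w : ℂ) : ℂ :=
  (↑(w.im / (v.re * w.im - v.im * w.re)) + ↑(-(w.re / (v.re * w.im - v.im * w.re))) * I : ℂ)
/-- second dual basis vector -/
def dw (v w : ℂ) : ℂ :=
  (↑(-(v.im / (v.re * w.im - v.im * w.re))) + ↑(v.re / (v.re * w.im - v.im * w.re)) * I : ℂ)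

include hD

lemma ip_dv_v : ip (dv v w) v = 1 := by
  have h1 : w.im * v.re - w.re * v.im ≠ 0 := by intro h; apply hD; linarith
  have h2 : -(v.im * w.re) + v.re * w.im ≠ 0 := by intro h; apply hD; linarith
  simp only [ip, dv, dw, Complex.add_re, Complex.add_im, Complex.ofReal_re, Complex.ofReal_im,
    Complex.mul_re, Complex.mul_im, Complex.I_re, Complex.I_im, mul_zero, mul_one, zero_mul,
    sub_zero, zero_add, add_zero, neg_neg, zero_sub, neg_zero]
  field_simp [h1, h2]; rw [div_eq_one_iff_eq (by intro h; apply hD; linarith)]; ring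

lemma ip_dv_w : ip (dv v w) w = 0 := by
  have h1 : w.im * v.re - w.re * v.im ≠ 0 := by intro h; apply hD; linarith
  have h2 : -(v.im * w.re) + v.re * w.im ≠ 0 := by intro h; apply hD; linarith
  simp only [ip, dv, dw, Complex.add_re, Complex.add_im, Complex.ofReal_re, Complex.ofReal_im,
    Complex.mul_re, Complex.mul_im, Complex.I_re, Complex.I_im, mul_zero, mul_one, zero_mul,
    sub_zero, zero_add, add_zero, neg_neg, zero_sub, neg_zero]
  field_simp [h1, h2]; ring

lemma ip_dw_v : ip (dw v w) v = 0 := by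
  have h1 : w.im * v.re - w.re * v.im ≠ 0 := by intro h; apply hD; linarith
  have h2 : -(v.im * w.re) + v.re * w.im ≠ 0 := by intro h; apply hD; linarith
  simp only [ip, dv, dw, Complex.add_re, Complex.add_im, Complex.ofReal_re, Complex.ofReal_im,
    Complex.mul_re, Complex.mul_im, Complex.I_re, Complex.I_im, mul_zero, mul_one, zero_mul,
    sub_zero, zero_add, add_zero, neg_neg, zero_sub, neg_zero]
  field_simp [h1, h2]; ring

lemma ip_dw_w : ip (dw v w) w = 1 := by
  have h1 : w.im * v.re - w.re * v.im ≠ 0 := by intro h; apply hD; linarith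
  have h2 : -(v.im * w.re) + v.re * w.im ≠ 0 := by intro h; apply hD; linarith
  simp only [ip, dv, dw, Complex.add_re, Complex.add_im, Complex.ofReal_re, Complex.ofReal_im,
    Complex.mul_re, Complex.mul_im, Complex.I_re, Complex.I_im, mul_zero, mul_one, zero_mul,
    sub_zero, zero_add, add_zero, neg_neg, zero_sub, neg_zero]
  field_simp [h1, h2]; ring

lemma repr_eq (y : ℂ) : y = ↑(ip (dv v w) y) * v + ↑(ip (dw v w) y) * w := by
  have h1 : w.im * v.re - w.re * v.im ≠ 0 := by intro h; apply hD; linarith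
  have h2 : -(v.im * w.re) + v.re * w.im ≠ 0 := by intro h; apply hD; linarith
  apply Complex.ext <;> simp only [ip, dv, dw, Complex.add_re, Complex.add_im, Complex.ofReal_re,
    Complex.ofReal_im, Complex.mul_re, Complex.mul_im, Complex.I_re, Complex.I_im, mul_zero,
    mul_one, zero_mul, sub_zero, zero_add, add_zero, neg_neg, zero_sub, neg_zero] <;>
    field_simp [h1, h2] <;> rw [eq_div_iff (by intro h; apply hD; linarith)] <;> ring

end basis

lemma cos_pow_expansion (N : ℕ) (t : ℝ) :
    ((Real.cos (Real.pi * t) : ℂ)) ^ (2 * N) =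
      ((1:ℂ)/4) ^ N * ∑ j ∈ Finset.range (2 * N + 1),
        (Nat.choose (2 * N) j : ℂ) *
          Complex.exp (↑(2 * Real.pi * ((j : ℝ) - N) * t) * I) := by
  rw [Complex.ofReal_cos]
  rw [show Complex.cos (↑(Real.pi * t)) = (Complex.exp ((↑(Real.pi * t)) * I) +
    Complex.exp (-(↑(Real.pi * t)) * I)) / 2 from rfl]
  rw [div_pow, add_pow]
  rw [Finset.sum_div, Finset.mul_sum]
  apply Finset.sum_congr rfl
  intro j hj
  rw [Finset.mem_range] at hj
  have hj' : j ≤ 2 * N := Nat.lt_succ_iff.mp hj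
  rw [← Complex.exp_nat_mul, ← Complex.exp_nat_mul, ← Complex.exp_add]
  have harg : (↑j * (↑(Real.pi * t) * I) + ↑(2 * N - j) * (-(↑(Real.pi * t)) * I))
      = ↑(2 * Real.pi * ((j : ℝ) - N) * t) * I := by
    have : ((2 * N - j : ℕ) : ℂ) = 2 * N - j := by
      push_cast [Nat.cast_sub hj']; ring
    rw [this]
    push_cast
    ring
  rw [harg]
  have h4 : ((4:ℂ))^N ≠ 0 := by norm_num
  have h2' : ((2:ℂ))^(2*N) ≠ 0 := by norm_num
  have h42 : ((4:ℂ))^N = 2^(N*2) := by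
    rw [show ((4:ℂ)) = 2^2 by norm_num, ← pow_mul, Nat.mul_comm]
  field_simp [h42]
  rw [Nat.mul_comm 2 N]
  rw [← h42, mul_assoc, one_div, inv_pow, mul_inv_cancel₀ h4, mul_one]

lemma near_int_of_cos_lt {t d : ℝ} (hd0 : 0 < d) (hd : d ≤ 1/2)
    (h : Real.cos (Real.pi * d) < |Real.cos (Real.pi * t)|) : |t - round t| < d := by
  set u := t - round t with hu
  have hu2 : |u| ≤ 1/2 := abs_sub_round t
  have hcc : Real.cos (Real.pi * t) ^ 2 = Real.cos (Real.pi * u) ^ 2 := by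
    have h2 : Real.cos (2 * (Real.pi * t)) = Real.cos (2 * (Real.pi * u)) := by
      have : 2 * (Real.pi * t) = 2 * (Real.pi * u) + (round t) * (2 * Real.pi) := by
        rw [hu]; ring
      rw [this, Real.cos_add_int_mul_two_pi]
    have e1 := Real.cos_sq (Real.pi * t)
    have e2 := Real.cos_sq (Real.pi * u)
    rw [e1, e2, h2]
  have habs : |Real.cos (Real.pi * t)| = Real.cos (Real.pi * |u|) := by
    have : |Real.cos (Real.pi * t)| = |Real.cos (Real.pi * u)| := by
      have := congrArg (Real.sqrt) hcc
      rwa [Real.sqrt_sq_eq_abs, Real.sqrt_sq_eq_abs] at this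
    rw [this, ← Real.cos_abs (Real.pi * u), abs_mul, _root_.abs_of_nonneg Real.pi_pos.le]
    exact _root_.abs_of_nonneg (Real.cos_nonneg_of_mem_Icc
      ⟨by nlinarith [Real.pi_pos, abs_nonneg u], by nlinarith [Real.pi_pos, abs_nonneg u]⟩)
  rw [habs] at h
  by_contra hcon
  push_neg at hcon
  have : Real.cos (Real.pi * |u|) ≤ Real.cos (Real.pi * d) := by
    apply Real.cos_le_cos_of_nonneg_of_le_pi (by positivity)
      (by nlinarith [Real.pi_pos]) (by nlinarith [Real.pi_pos])
  linarith

lemma integrable_exp_mul_I (σ : Measure ℂ) [IsProbabilityMeasure σ] {g : ℂ → ℝ}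
    (hg : Continuous g) : Integrable (fun u => Complex.exp (↑(g u) * I)) σ := by
  apply Integrable.mono' (integrable_const (1:ℝ))
  · exact (Complex.continuous_exp.comp
      ((Complex.continuous_ofReal.comp hg).mul continuous_const)).aestronglyMeasurable
  · filter_upwards with a
    rw [Complex.norm_exp_ofReal_mul_I]

lemma continuous_ip_right (z : ℂ) : Continuous (fun u : ℂ => ip u z) := by
  unfold ip
  exact (Complex.continuous_re.mul continuous_const).add
    (Complex.continuous_im.mul continuous_const)

lemma continuous_ip_left (z : ℂ) : Continuous (fun u : ℂ => ip z u) := by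
  unfold ip
  exact (continuous_const.mul Complex.continuous_re).add
    (continuous_const.mul Complex.continuous_im)

lemma ftMeasure_eq (σ : Measure ℂ) (ξ : ℂ) :
    ftMeasure σ ξ = ∫ x, Complex.exp (↑(-(2 * Real.pi * ip ξ x)) * I) ∂σ := by
  unfold ftMeasure ip
  congr 1; funext x; norm_cast

lemma ftMeasure_norm_le (σ : Measure ℂ) [IsProbabilityMeasure σ] (ξ : ℂ) :
    ‖ftMeasure σ ξ‖ ≤ 1 := by
  rw [ftMeasure_eq]
  have := norm_integral_le_of_norm_le_const (μ := σ) (C := 1)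
    (f := fun x => Complex.exp (↑(-(2 * Real.pi * ip ξ x)) * I)) ?_
  · simpa using this
  · filter_upwards with a
    rw [Complex.norm_exp_ofReal_mul_I]

lemma integral_char (σ : Measure ℂ) [IsProbabilityMeasure σ] (z : ℂ) :
    ∫ u, Complex.exp (↑(2 * Real.pi * ip u z) * I) ∂σ = ftMeasure σ (-z) := by
  rw [ftMeasure_eq]
  congr 1; funext u
  congr 2
  have : ip (-z) u = -(ip u z) := by simp [ip]; ring
  rw [this]; push_cast; ring

lemma ftMeasure_zero (σ : Measure ℂ) [IsProbabilityMeasure σ] : ftMeasure σ 0 = 1 := by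
  rw [ftMeasure_eq]
  simp [ip]

/-! ### Main theorem -/
set_option maxHeartbeats 1000000 in

/-- If `Θ ⊆ S¹` carries a probability measure whose Fourier transform has `limsup` at
infinity smaller than a threshold `δ(Λ,ε) > 0`, then `Θ` is `(Λ,ε)`-good. -/
theorem small_fourier_limsup_implies_good (Λ : Set ℂ) (hΛ : IsLatticeC Λ)
    (ε : ℝ) (hε : 0 < ε) :
    ∃ δ > 0, ∀ Θ : Set ℂ, Θ ⊆ Metric.sphere (0 : ℂ) 1 →
      ∀ σ : Measure ℂ, IsProbabilityMeasure σ → σ Θᶜ = 0 →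
        Filter.limsup (fun ξ : ℂ => ‖ftMeasure σ ξ‖) (Filter.comap norm Filter.atTop) < δ →
        IsGood Λ ε Θ := by
  obtain ⟨v, w, hvw, hΛeq⟩ := hΛ
  have hD := det_ne_zero hvw
  set C : ℝ := ‖v‖ + ‖w‖ + 1 with hCdef
  have hC0 : 0 < C := by positivity
  have hvC : ‖v‖ ≤ C := by rw [hCdef]; linarith [norm_nonneg w]
  have hwC : ‖w‖ ≤ C := by rw [hCdef]; linarith [norm_nonneg v]
  set d : ℝ := min (ε / C) (1/2) with hddef
  have hd0 : 0 < d := lt_min (div_pos hε hC0) (by norm_num)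
  have hd2 : d ≤ 1/2 := min_le_right _ _
  have hdC : d * C ≤ ε := by
    rw [← le_div_iff₀ hC0]; exact min_le_left _ _
  set q : ℝ := Real.cos (Real.pi * d) with hqdef
  have hq0 : 0 ≤ q := Real.cos_nonneg_of_mem_Icc
    ⟨by nlinarith [Real.pi_pos], by nlinarith [Real.pi_pos]⟩
  have hq1 : q < 1 := by
    rcases lt_or_eq_of_le (Real.cos_le_one (Real.pi * d)) with h | h
    · exact h
    · exfalso
      have := (Real.cos_eq_one_iff_of_lt_of_lt (x := Real.pi * d)
        (by nlinarith [Real.pi_pos]) (by nlinarith [Real.pi_pos])).mp h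
      nlinarith [Real.pi_pos]
  -- choose N
  have hsum : Summable (fun n : ℕ => ‖((n : ℝ)) ^ 2 * q ^ n‖) := by
    apply summable_norm_pow_mul_geometric_of_norm_lt_one
    rwa [Real.norm_eq_abs, _root_.abs_of_nonneg hq0]
  have htend := hsum.tendsto_atTop_zero
  have hev : ∀ᶠ n : ℕ in atTop, ‖((n : ℝ)) ^ 2 * q ^ n‖ < 1/32 :=
    htend.eventually_lt_const (by norm_num)
  obtain ⟨N0, hN0⟩ := eventually_atTop.mp hev
  set N : ℕ := max N0 1 with hNdef
  have hN1 : 1 ≤ N := le_max_right _ _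
  have hkey : ((2*N : ℝ) + 1) ^ 2 * q ^ (2*N) < 1/2 := by
    have hN02N : N0 ≤ 2*N := le_trans (le_max_left N0 1) (by omega)
    have h1 := hN0 (2*N) hN02N
    have hB : (0:ℝ) ≤ q ^ (2*N) := pow_nonneg hq0 _
    rw [Real.norm_eq_abs, abs_mul, _root_.abs_of_nonneg (pow_nonneg (by positivity) 2),
      _root_.abs_of_nonneg hB] at h1
    have hcast : ((2*N : ℕ) : ℝ) = 2*(N:ℝ) := by push_cast; ring
    rw [hcast] at h1
    have hA : (2:ℝ) ≤ 2*(N:ℝ) := by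
      have : (1:ℝ) ≤ (N:ℝ) := by exact_mod_cast hN1
      nlinarith
    have hsq : (2*(N:ℝ)+1)^2 ≤ 4*(2*(N:ℝ))^2 := by nlinarith
    have := mul_le_mul_of_nonneg_right hsq hB
    have hc2 : ((2*N : ℝ) + 1) = 2*(N:ℝ)+1 := by push_cast; ring
    rw [hc2]
    nlinarith
  set c0 : ℝ := (((2*N).choose N : ℝ) / 4 ^ N) ^ 2 with hc0def
  have hchoosepos : 0 < (((2*N).choose N : ℝ)) := by
    exact_mod_cast Nat.choose_pos (by omega)
  have hc0pos : 0 < c0 := by positivity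
  have hchoose : (4:ℝ) ^ N ≤ (2*N + 1) * ((2*N).choose N) := by
    have hnat : 2 ^ (2*N) ≤ (2*N + 1) * ((2*N).choose N) := by
      calc 2 ^ (2*N) = ∑ m ∈ Finset.range (2*N + 1), (2*N).choose m :=
            (Nat.sum_range_choose (2*N)).symm
        _ ≤ ∑ _m ∈ Finset.range (2*N + 1), (2*N).choose N := by
            apply Finset.sum_le_sum
            intro i _
            have := Nat.choose_le_middle i (2*N)
            simpa [Nat.mul_div_cancel_left N (by norm_num : 0 < 2)] using this
        _ = (2*N + 1) * ((2*N).choose N) := by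
            rw [Finset.sum_const, Finset.card_range]; ring
    calc (4:ℝ) ^ N = (2:ℝ) ^ (2*N) := by
          rw [show (4:ℝ) = 2^2 by norm_num, ← pow_mul]
      _ ≤ ((2*N + 1) * ((2*N).choose N) : ℕ) := by
          exact_mod_cast hnat
      _ = (2*N + 1) * ((2*N).choose N) := by push_cast; ring
  set T : ℝ := q ^ (2*N) with hTdef
  have hT0 : 0 ≤ T := pow_nonneg hq0 _
  have hTc0 : T < c0 / 2 := by
    have h2N1 : (0:ℝ) < (2*N : ℝ) + 1 := by positivity
    have h4 : (0:ℝ) < (4:ℝ) ^ N := by positivity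
    have hTlt : T < 1 / (2 * ((2*N : ℝ) + 1)^2) := by
      rw [lt_div_iff₀ (by positivity)]
      nlinarith
    have hcc : (1:ℝ) / ((2*N:ℝ)+1) ≤ ((2*N).choose N : ℝ) / 4^N := by
      rw [div_le_div_iff₀ h2N1 h4]
      calc (1:ℝ) * 4^N = 4^N := one_mul _
        _ ≤ (2*N+1) * ((2*N).choose N) := hchoose
        _ = ((2*N).choose N : ℝ) * ((2*N:ℝ)+1) := by push_cast; ring
    have hc0lb : (1 / ((2*N : ℝ) + 1))^2 ≤ c0 := by
      rw [hc0def]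
      exact pow_le_pow_left₀ (by positivity) hcc 2
    have heq : (1 / ((2*N : ℝ) + 1))^2 = 1 / (((2*N:ℝ)+1)^2) := by
      rw [div_pow, one_pow]
    rw [heq] at hc0lb
    have h2A : 1 / (2 * ((2*N : ℝ) + 1)^2) = 1 / (((2*N:ℝ)+1)^2) / 2 := by
      rw [div_div, mul_comm]
    rw [h2A] at hTlt
    linarith [hTlt, hc0lb]
  refine ⟨c0/4, by positivity, ?_⟩
  intro Θ hΘ σ hσ hσΘ hlim
  set δ : ℝ := c0/4 with hδdef
  -- uniform smallness of the Fourier transform far away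
  have hbdd : IsBoundedUnder (· ≤ ·) (Filter.comap norm Filter.atTop)
      (fun ξ : ℂ => ‖ftMeasure σ ξ‖) :=
    ⟨1, Filter.eventually_map.mpr (Filter.Eventually.of_forall fun ξ => ftMeasure_norm_le σ ξ)⟩
  have hevft := Filter.eventually_lt_of_limsup_lt hlim hbdd
  rw [Filter.eventually_comap] at hevft
  rw [Filter.eventually_atTop] at hevft
  obtain ⟨M, hM⟩ := hevft
  have hMξ : ∀ ξ : ℂ, M ≤ ‖ξ‖ → ‖ftMeasure σ ξ‖ < δ := fun ξ h => hM ‖ξ‖ h ξ rfl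
  set r : ℝ := (max M 0 + 1) * C with hrdef
  refine ⟨r, ?_⟩
  intro x hx
  have hr0 : 0 < r := by
    have : (0:ℝ) ≤ max M 0 := le_max_right _ _
    positivity
  have hx0 : 0 < ‖x‖ := lt_of_lt_of_le hr0 hx
  -- setup
  set v' : ℂ := dv v w with hv'def
  set w' : ℂ := dw v w with hw'def
  set msh : ℕ → ℕ → ℂ := fun j k => ↑((j:ℝ) - N) * v' + ↑((k:ℝ) - N) * w' with hmshdef
  set zz : ℕ → ℕ → ℂ := fun j k => (starRingEnd ℂ) (msh j k) * x with hzzdef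
  set coeff : ℕ → ℕ → ℝ := fun j k =>
    (((2*N).choose j : ℝ)) * (((2*N).choose k : ℝ)) / 4^N / 4^N with hcoeffdef
  set t1 : ℂ → ℝ := fun y => ip v' y with ht1def
  set t2 : ℂ → ℝ := fun y => ip w' y with ht2def
  set F : ℂ → ℝ := fun u => Real.cos (Real.pi * t1 ((starRingEnd ℂ) u * x)) ^ (2*N) *
    Real.cos (Real.pi * t2 ((starRingEnd ℂ) u * x)) ^ (2*N) with hFdef
  -- lower bound on nonzero dual vectors
  have hm_lb : ∀ j k : ℕ, (j ≠ N ∨ k ≠ N) → 1/C ≤ ‖msh j k‖ := by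
    intro j k hjk
    have hipv : ip (msh j k) v = (j:ℝ) - N := by
      rw [hmshdef]
      simp only []
      rw [ip_lin, ip_dv_v hD, ip_dw_v hD]
      ring
    have hipw : ip (msh j k) w = (k:ℝ) - N := by
      rw [hmshdef]
      simp only []
      rw [ip_lin, ip_dv_w hD, ip_dw_w hD]
      ring
    have key : ∃ b : ℂ, ‖b‖ ≤ C ∧ 1 ≤ |ip (msh j k) b| := by
      rcases hjk with hj | hk
      · refine ⟨v, hvC, ?_⟩
        rw [hipv]
        have : ((j:ℤ) - N) ≠ 0 := by
          intro h; apply hj; omega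
        have h1 : 1 ≤ |(j:ℤ) - N| := Int.one_le_abs this
        calc (1:ℝ) ≤ |((j:ℤ) - N : ℤ)| := by exact_mod_cast h1
          _ = |(j:ℝ) - N| := by push_cast; ring_nf
      · refine ⟨w, hwC, ?_⟩
        rw [hipw]
        have : ((k:ℤ) - N) ≠ 0 := by
          intro h; apply hk; omega
        have h1 : 1 ≤ |(k:ℤ) - N| := Int.one_le_abs this
        calc (1:ℝ) ≤ |((k:ℤ) - N : ℤ)| := by exact_mod_cast h1
          _ = |(k:ℝ) - N| := by push_cast; ring_nf
    obtain ⟨b, hbC, hb1⟩ := key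
    have h3 : |ip (msh j k) b| ≤ ‖msh j k‖ * ‖b‖ := abs_ip_le _ _
    have h2 : ‖msh j k‖ * ‖b‖ ≤ ‖msh j k‖ * C :=
      mul_le_mul_of_nonneg_left hbC (norm_nonneg _)
    rw [div_le_iff₀ hC0]
    linarith
  -- pointwise expansion
  have hFC : ∀ u : ℂ, ((F u : ℂ)) = ∑ j ∈ Finset.range (2*N+1), ∑ k ∈ Finset.range (2*N+1),
      ↑(coeff j k) * Complex.exp (↑(2 * Real.pi * ip u (zz j k)) * I) := by
    intro u
    rw [hFdef]
    simp only []
    rw [Complex.ofReal_mul, Complex.ofReal_pow, Complex.ofReal_pow]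
    rw [cos_pow_expansion N (t1 ((starRingEnd ℂ) u * x)),
      cos_pow_expansion N (t2 ((starRingEnd ℂ) u * x))]
    rw [mul_mul_mul_comm, Finset.sum_mul_sum]
    rw [Finset.mul_sum]
    apply Finset.sum_congr rfl
    intro j hj
    rw [Finset.mul_sum]
    apply Finset.sum_congr rfl
    intro k hk
    have harg : ((j:ℝ) - N) * t1 ((starRingEnd ℂ) u * x) +
        ((k:ℝ) - N) * t2 ((starRingEnd ℂ) u * x) = ip u (zz j k) := by
      rw [ht1def, ht2def, hzzdef]
      simp only []
      rw [← ip_lin]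
      have hb : (↑((j:ℝ) - N) * v' + ↑((k:ℝ) - N) * w') = msh j k := rfl
      rw [hb, ip_rot]
    have hexp : Complex.exp (↑(2 * Real.pi * ip u (zz j k)) * I)
        = Complex.exp (↑(2 * Real.pi * ((j:ℝ) - N) * t1 ((starRingEnd ℂ) u * x)) * I) *
          Complex.exp (↑(2 * Real.pi * ((k:ℝ) - N) * t2 ((starRingEnd ℂ) u * x)) * I) := by
      rw [← Complex.exp_add]
      congr 1
      rw [← harg]
      push_cast
      ring
    rw [hexp, hcoeffdef]
    push_cast
    simp only [one_div, inv_pow]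
    ring
  -- integrability of F
  have hcont_t1 : Continuous (fun u : ℂ => t1 ((starRingEnd ℂ) u * x)) := by
    rw [ht1def]
    exact (continuous_ip_left v').comp ((Complex.continuous_conj).mul continuous_const)
  have hcont_t2 : Continuous (fun u : ℂ => t2 ((starRingEnd ℂ) u * x)) := by
    rw [ht2def]
    exact (continuous_ip_left w').comp ((Complex.continuous_conj).mul continuous_const)
  have hFcont : Continuous F := by
    rw [hFdef]
    exact ((Real.continuous_cos.comp (continuous_const.mul hcont_t1)).pow _).mul
      ((Real.continuous_cos.comp (continuous_const.mul hcont_t2)).pow _)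
  have hFbd : ∀ u : ℂ, ‖F u‖ ≤ 1 := by
    intro u
    rw [hFdef, Real.norm_eq_abs]
    simp only []
    rw [_root_.abs_mul, _root_.abs_pow, _root_.abs_pow]
    have h1 : |Real.cos (Real.pi * t1 ((starRingEnd ℂ) u * x))| ≤ 1 := Real.abs_cos_le_one _
    have h2 : |Real.cos (Real.pi * t2 ((starRingEnd ℂ) u * x))| ≤ 1 := Real.abs_cos_le_one _
    have := pow_le_one₀ (abs_nonneg _) h1 (n := 2*N)
    have := pow_le_one₀ (abs_nonneg _) h2 (n := 2*N)
    nlinarith [pow_nonneg (abs_nonneg (Real.cos (Real.pi * t1 ((starRingEnd ℂ) u * x)))) (2*N),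
      pow_nonneg (abs_nonneg (Real.cos (Real.pi * t2 ((starRingEnd ℂ) u * x)))) (2*N)]
  have hFint : Integrable F σ :=
    Integrable.mono' (integrable_const (1:ℝ)) hFcont.aestronglyMeasurable
      (Filter.Eventually.of_forall hFbd)
  -- compute the integral
  have hterm_int : ∀ (j k : ℕ), Integrable
      (fun u => (↑(coeff j k) : ℂ) * Complex.exp (↑(2 * Real.pi * ip u (zz j k)) * I)) σ := by
    intro j k
    exact (integrable_exp_mul_I σ (continuous_const.mul (continuous_ip_right (zz j k)))).const_mul _
  have hint : (↑(∫ u, F u ∂σ) : ℂ) = ∑ j ∈ Finset.range (2*N+1), ∑ k ∈ Finset.range (2*N+1),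
      ↑(coeff j k) * ftMeasure σ (-(zz j k)) := by
    have hreal : ∫ u, ((F u : ℂ)) ∂σ = ((∫ u, F u ∂σ : ℝ) : ℂ) := integral_ofReal
    rw [← hreal]
    rw [integral_congr_ae (Filter.Eventually.of_forall hFC)]
    rw [integral_finset_sum _ (fun j _ => integrable_finset_sum _ (fun k _ => hterm_int j k))]
    apply Finset.sum_congr rfl
    intro j _
    rw [integral_finset_sum _ (fun k _ => hterm_int j k)]
    apply Finset.sum_congr rfl
    intro k _
    rw [MeasureTheory.integral_const_mul, integral_char]
  -- lower bound for the integral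
  have hcoeff_nonneg : ∀ j k, 0 ≤ coeff j k := by
    intro j k; rw [hcoeffdef]; positivity
  have hcoeff_sum : ∑ p ∈ Finset.range (2*N+1) ×ˢ Finset.range (2*N+1), coeff p.1 p.2 = 1 := by
    rw [Finset.sum_product]
    have h1 : ∑ j ∈ Finset.range (2*N+1), (((2*N).choose j : ℝ)) = 4^N := by
      rw [show (4:ℝ)^N = 2^(2*N) by rw [show (4:ℝ) = 2^2 by norm_num, ← pow_mul]]
      exact_mod_cast Nat.sum_range_choose (2*N)
    have h4 : ((4:ℝ))^N ≠ 0 := by positivity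
    have hsplit : ∀ j k : ℕ, coeff j k =
        (((2*N).choose j : ℝ)/4^N) * (((2*N).choose k : ℝ)/4^N) := by
      intro j k; rw [hcoeffdef]; ring
    calc ∑ j ∈ Finset.range (2*N+1), ∑ k ∈ Finset.range (2*N+1), coeff j k
        = ∑ j ∈ Finset.range (2*N+1), ∑ k ∈ Finset.range (2*N+1),
            (((2*N).choose j : ℝ)/4^N) * (((2*N).choose k : ℝ)/4^N) :=
          Finset.sum_congr rfl fun j _ => Finset.sum_congr rfl fun k _ => hsplit j k
      _ = (∑ j ∈ Finset.range (2*N+1), (((2*N).choose j : ℝ)/4^N)) *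
            (∑ k ∈ Finset.range (2*N+1), (((2*N).choose k : ℝ)/4^N)) :=
          (Finset.sum_mul_sum _ _ _ _).symm
      _ = 1 := by
          rw [← Finset.sum_div, h1]
          field_simp
  have hlow : c0 - δ ≤ ∫ u, F u ∂σ := by
    have hNN : ((N, N) : ℕ × ℕ) ∈ Finset.range (2*N+1) ×ˢ Finset.range (2*N+1) := by
      simp [Finset.mem_product]; omega
    set g : ℕ × ℕ → ℂ := fun p => ↑(coeff p.1 p.2) * ftMeasure σ (-(zz p.1 p.2)) with hgdef
    have hsum_eq : (↑(∫ u, F u ∂σ) : ℂ) = ∑ p ∈ Finset.range (2*N+1) ×ˢ Finset.range (2*N+1),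
        g p := by
      rw [hint, ← Finset.sum_product']
    have hsplit : ∑ p ∈ Finset.range (2*N+1) ×ˢ Finset.range (2*N+1), g p
        = g (N, N) + ∑ p ∈ (Finset.range (2*N+1) ×ˢ Finset.range (2*N+1)).erase (N, N), g p :=
      (Finset.add_sum_erase _ g hNN).symm
    have hmshNN : msh N N = 0 := by
      rw [hmshdef]; simp
    have hzzNN : zz N N = 0 := by
      rw [hzzdef]
      simp only []
      rw [hmshNN]
      simp
    have hgNN : g (N, N) = ↑c0 := by
      show (↑(coeff N N) : ℂ) * ftMeasure σ (-(zz N N)) = ↑c0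
      rw [hzzNN]
      simp only [neg_zero, ftMeasure_zero σ, mul_one]
      rw [hcoeffdef, hc0def]
      push_cast
      ring
    set R : ℂ := ∑ p ∈ (Finset.range (2*N+1) ×ˢ Finset.range (2*N+1)).erase (N, N), g p
      with hRdef
    have hRbd : ‖R‖ ≤ δ := by
      rw [hRdef]
      calc ‖∑ p ∈ (Finset.range (2*N+1) ×ˢ Finset.range (2*N+1)).erase (N, N), g p‖
          ≤ ∑ p ∈ (Finset.range (2*N+1) ×ˢ Finset.range (2*N+1)).erase (N, N), ‖g p‖ :=
            norm_sum_le _ _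
        _ ≤ ∑ p ∈ (Finset.range (2*N+1) ×ˢ Finset.range (2*N+1)).erase (N, N),
            coeff p.1 p.2 * δ := by
            apply Finset.sum_le_sum
            intro p hp
            rw [hgdef]
            simp only []
            rw [norm_mul, Complex.norm_real, Real.norm_eq_abs,
              _root_.abs_of_nonneg (hcoeff_nonneg p.1 p.2)]
            apply mul_le_mul_of_nonneg_left _ (hcoeff_nonneg p.1 p.2)
            apply le_of_lt
            apply hMξ
            have hpne : p ≠ (N, N) := Finset.ne_of_mem_erase hp
            have hne : p.1 ≠ N ∨ p.2 ≠ N := by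
              by_contra hcon
              push_neg at hcon
              exact hpne (Prod.ext hcon.1 hcon.2)
            have hlb := hm_lb p.1 p.2 hne
            have hnorm : ‖-(zz p.1 p.2)‖ = ‖msh p.1 p.2‖ * ‖x‖ := by
              rw [norm_neg, hzzdef]
              simp only []
              rw [norm_mul, RCLike.norm_conj]
            rw [hnorm]
            have hMr : max M 0 + 1 ≤ ‖msh p.1 p.2‖ * ‖x‖ := by
              have hxr : (max M 0 + 1) * C ≤ ‖x‖ := by rw [← hrdef]; exact hx
              have h0m : (0:ℝ) ≤ (max M 0 + 1) * C := by
                have := le_max_right M (0:ℝ)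
                nlinarith
              calc max M 0 + 1 = (1/C) * ((max M 0 + 1) * C) := by field_simp
                _ ≤ ‖msh p.1 p.2‖ * ‖x‖ :=
                    mul_le_mul hlb hxr h0m (le_trans (div_nonneg zero_le_one hC0.le) hlb)
            calc M ≤ max M 0 := le_max_left _ _
              _ ≤ max M 0 + 1 := by linarith
              _ ≤ ‖msh p.1 p.2‖ * ‖x‖ := hMr
        _ ≤ ∑ p ∈ Finset.range (2*N+1) ×ˢ Finset.range (2*N+1), coeff p.1 p.2 * δ := by
            apply Finset.sum_le_sum_of_subset_of_nonneg (Finset.erase_subset _ _)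
            intro p _ _
            have := hcoeff_nonneg p.1 p.2
            positivity
        _ = δ := by
            rw [← Finset.sum_mul, hcoeff_sum, one_mul]
    have hre : (∫ u, F u ∂σ) = c0 + R.re := by
      have := hsum_eq.trans (hsplit.trans (by rw [hgNN]))
      have h2 := congrArg Complex.re this
      simpa using h2
    have := Complex.abs_re_le_norm R
    rw [hre]
    have : -δ ≤ R.re := by
      have h1 : |R.re| ≤ ‖R‖ := Complex.abs_re_le_norm R
      have h2 : -|R.re| ≤ R.re := neg_abs_le _
      linarith
    linarith
  -- find a good rotation in Θ
  have hTlow : T < c0 - δ := by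
    rw [hδdef]; linarith
  have hgood : ∃ u ∈ Θ, T < F u := by
    by_contra hcon
    push_neg at hcon
    have hae : ∀ᵐ u ∂σ, F u ≤ T := by
      rw [ae_iff]
      apply measure_mono_null _ hσΘ
      intro u hu
      simp only [Set.mem_setOf_eq, not_le] at hu
      simp only [Set.mem_compl_iff]
      intro huΘ
      exact absurd (hcon u huΘ) (not_le.mpr hu)
    have : ∫ u, F u ∂σ ≤ ∫ _u, T ∂σ := integral_mono_ae hFint (integrable_const T) hae
    rw [integral_const] at this
    simp [measure_univ] at this
    linarith
  obtain ⟨u, huΘ, huT⟩ := hgood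
  -- conclude
  have hu1 : ‖u‖ = 1 := by
    have := hΘ huΘ
    rwa [Metric.mem_sphere, dist_zero_right] at this
  have hxuy : x = u * ((starRingEnd ℂ) u * x) := by
    rw [← mul_assoc, Complex.mul_conj]
    have : Complex.normSq u = 1 := by
      rw [Complex.normSq_eq_norm_sq, hu1]; norm_num
    rw [this]
    simp
  -- each factor is big
  have hEven : Even (2*N) := even_two_mul N
  have hfact : ∀ s : ℝ, q^(2*N) < |Real.cos (Real.pi * s)|^(2*N) →
      |s - round s| < d := by
    intro s hs
    apply near_int_of_cos_lt hd0 hd2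
    exact lt_of_pow_lt_pow_left₀ _ (abs_nonneg _) hs
  have habs_pow : ∀ s : ℝ, Real.cos (Real.pi * s) ^ (2*N) = |Real.cos (Real.pi * s)|^(2*N) := by
    intro s
    rw [← _root_.abs_pow, _root_.abs_of_nonneg (hEven.pow_nonneg _)]
  set s1 : ℝ := t1 ((starRingEnd ℂ) u * x) with hs1def
  set s2 : ℝ := t2 ((starRingEnd ℂ) u * x) with hs2def
  have hFu : F u = |Real.cos (Real.pi * s1)|^(2*N) * |Real.cos (Real.pi * s2)|^(2*N) := by
    rw [hFdef]
    simp only []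
    rw [← hs1def, ← hs2def, habs_pow, habs_pow]
  have hA0 : (0:ℝ) ≤ |Real.cos (Real.pi * s1)|^(2*N) := by positivity
  have hB0 : (0:ℝ) ≤ |Real.cos (Real.pi * s2)|^(2*N) := by positivity
  have hA1 : |Real.cos (Real.pi * s1)|^(2*N) ≤ 1 :=
    pow_le_one₀ (abs_nonneg _) (Real.abs_cos_le_one _)
  have hB1 : |Real.cos (Real.pi * s2)|^(2*N) ≤ 1 :=
    pow_le_one₀ (abs_nonneg _) (Real.abs_cos_le_one _)
  have hT1 : T < |Real.cos (Real.pi * s1)|^(2*N) := by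
    rw [hFu] at huT
    nlinarith
  have hT2 : T < |Real.cos (Real.pi * s2)|^(2*N) := by
    rw [hFu] at huT
    nlinarith
  have hd1 : |s1 - round s1| < d := hfact s1 (by rw [hTdef] at hT1; exact hT1)
  have hd2' : |s2 - round s2| < d := hfact s2 (by rw [hTdef] at hT2; exact hT2)
  -- build the lattice point
  set mi : ℤ := round s1 with hmidef
  set ni : ℤ := round s2 with hnidef
  have hlmem : (mi • v + ni • w) ∈ Λ := by
    rw [hΛeq]
    exact ⟨mi, ni, rfl⟩
  have hrepr := repr_eq hD ((starRingEnd ℂ) u * x)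
  have hdiff : (starRingEnd ℂ) u * x - (mi • v + ni • w)
      = ↑(s1 - mi) * v + ↑(s2 - ni) * w := by
    conv_lhs => rw [hrepr]
    rw [← hv'def, ← hw'def]
    rw [show ip v' ((starRingEnd ℂ) u * x) = s1 from rfl,
        show ip w' ((starRingEnd ℂ) u * x) = s2 from rfl]
    push_cast [zsmul_eq_mul]
    ring
  have hnormlt : ‖(starRingEnd ℂ) u * x - (mi • v + ni • w)‖ < ε := by
    rw [hdiff]
    have hv0 : (0:ℝ) ≤ ‖v‖ := norm_nonneg v
    have hw0 : (0:ℝ) ≤ ‖w‖ := norm_nonneg w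
    calc ‖↑(s1 - mi) * v + ↑(s2 - ni) * w‖
        ≤ ‖↑(s1 - mi) * v‖ + ‖↑(s2 - ni) * w‖ := norm_add_le _ _
      _ = |s1 - mi| * ‖v‖ + |s2 - ni| * ‖w‖ := by
          rw [norm_mul, norm_mul, Complex.norm_real, Complex.norm_real,
            Real.norm_eq_abs, Real.norm_eq_abs]
      _ ≤ d * ‖v‖ + d * ‖w‖ := by
          apply add_le_add
          · exact mul_le_mul_of_nonneg_right hd1.le hv0
          · exact mul_le_mul_of_nonneg_right hd2'.le hw0
      _ = d * C - d := by rw [hCdef]; ring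
      _ ≤ ε - d := by linarith
      _ < ε := by linarith
  exact ⟨u, huΘ, (starRingEnd ℂ) u * x, ⟨mi • v + ni • w, hlmem, hnormlt⟩, hxuy⟩
end
end

section
/- For every ε > 0 there exist finitely many dilation factors t₁,...,t_n > 0 such that for every x ∈ ℝ there is some j with dist(x/t_j, ℤ) < ε. Equivalently, the real line is covered by finitely many dilates t_j · (ℤ + (-ε,ε)) of the ε-neighborhood of the integers. -/
/-! By Dirichlet's approximation theorem, for every `x` one of `x, 2x, …, nx` lies within
`1 / (n + 1)` of an integer, so the dilates by `1, 1/2, …, 1/n` suffice once `1 / (n + 1) < ε`. -/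

theorem Real.exists_fin_abs_succ_mul_sub_round_le (x : ℝ) {n : ℕ} (hn : 0 < n) :
    ∃ j : Fin n, |((j : ℝ) + 1) * x - round (((j : ℝ) + 1) * x)| ≤ 1 / (n + 1) := by
  obtain ⟨k, hk_pos, hk_le, hk⟩ := Real.exists_nat_abs_mul_sub_round_le x hn
  have hk_cast : ((k - 1 : ℕ) : ℝ) + 1 = k := by
    rw [Nat.cast_sub hk_pos, Nat.cast_one, sub_add_cancel]
  exact ⟨⟨k - 1, by omega⟩, by simpa only [hk_cast] using hk⟩

/-- For every `ε > 0` finitely many dilates of the `ε`-neighborhood of the integers cover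
the real line: there are `t₁, …, t_n > 0` such that every `x ∈ ℝ` satisfies
`dist (x / t_j, ℤ) < ε` for some `j`. -/
theorem finitely_many_dilates_cover_line (ε : ℝ) (hε : 0 < ε) :
    ∃ (n : ℕ) (t : Fin n → ℝ), (∀ j, 0 < t j) ∧
      ∀ x : ℝ, ∃ j : Fin n, ∃ m : ℤ, |x / t j - (m : ℝ)| < ε := by
  obtain ⟨n, hn⟩ := exists_nat_one_div_lt hε
  refine ⟨n + 1, fun j => 1 / ((j : ℝ) + 1), fun j => by positivity, fun x => ?_⟩
  obtain ⟨j, hj⟩ := Real.exists_fin_abs_succ_mul_sub_round_le x n.succ_pos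
  refine ⟨j, round (((j : ℝ) + 1) * x), ?_⟩
  simp only [one_div, div_inv_eq_mul, mul_comm x]
  calc _ ≤ 1 / (((n + 1 : ℕ) : ℝ) + 1) := hj
    _ ≤ 1 / ((n : ℝ) + 1) := by gcongr; linarith
    _ < ε := hn
end
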